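/- arXiv:2010.12522 — 4 statements merged into one kernel-verified Lean document; each statement's English description precedes it below -/
import Mathlib

section
/- Let $\Theta_1$ and $\Theta_2$ be real random variables with probability densities $p_1$ and $p_2$ supported on open intervals $I_1=(a_1,b_1)$ and $I_2=(a_2,b_2)$ with $I_2\subseteq I_1$, having finite means $\mu_1$ and $\mu_2$, and write $p_2(\theta)=c\,\rho(\theta)p_1(\theta)$ on $I_2$ where $\rho=p_2/p_1$ up to the normalizing constant $c>0$ and $\rho$ is differentiable on $I_2$. Let $\tau_1(\theta)=\frac{1}{p_1(\theta)}\int_{a_1}^{\theta}(\mu_1-y)p_1(y)\,dy$ be the Stein kernel of $p_1$. Assume: (i) $\mathrm{E}[(\Theta_1-\mu_1)\rho(\Theta_1)]<\infty$; (ii) for every Lipschitz-1 function $h:\mathbb{R}\to\mathbb{R}$, the derivative of $\theta\mapsto\rho(\theta)\int_{a_1}^{\theta}(h(y)-\mathrm{E}[h(\Theta_1)])p_1(y)\,dy$ is integrable on $I_2$; (iii) for every Lipschitz-1 function $h$, $\lim_{\theta\to a_2}\rho(\theta)\int_{a_1}^{\theta}(h(y)-\mathrm{E}[h(\Theta_1)])p_1(y)\,dy=0$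 and likewise as $\theta\to b_2$. Then the Wasserstein-1 distance satisfies the upper bound $d_W(P_1,P_2)\le \dfrac{\mathrm{E}[\tau_1(\Theta_1)\,|\rho'(\Theta_1)|]}{\mathrm{E}[\rho(\Theta_1)]}$, i.e. for every Lipschitz-1 function $h:\mathbb{R}\to\mathbb{R}$ one has $\left|\mathrm{E}[h(\Theta_1)]-\mathrm{E}[h(\Theta_2)]\right|\le \dfrac{\mathrm{E}[\tau_1(\Theta_1)\,|\rho'(\Theta_1)|]}{\mathrm{E}[\rho(\Theta_1)]}$. -/
open MeasureTheory Set Filter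
open scoped Topology ENNReal


private lemma wub_integrable_of_integral_ne_zero {f : ℝ → ℝ} (h : (∫ x, f x) ≠ 0) :
    Integrable f := by
  by_contra hf
  exact h (integral_undef hf)

private lemma wub_iic_eq_ioc {a θ : ℝ} {f : ℝ → ℝ} (hθ : a ≤ θ)
    (h0 : ∀ y, y ≤ a → f y = 0) (hint : Integrable f) :
    ∫ y in Iic θ, f y = ∫ y in Ioc a θ, f y := by
  have hsplit : ∫ y in Iic θ, f y = (∫ y in Iic a, f y) + ∫ y in Ioc a θ, f y := by
    rw [← setIntegral_union (Iic_disjoint_Ioc le_rfl) measurableSet_Ioc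
      hint.integrableOn hint.integrableOn, Iic_union_Ioc_eq_Iic hθ]
  rw [hsplit, setIntegral_congr_fun measurableSet_Iic (fun y hy => h0 y hy),
    integral_zero, zero_add]

private lemma wub_key_bound {p h : ℝ → ℝ} {μ₁ m : ℝ}
    (hpint : Integrable p) (hpnn : ∀ y, 0 ≤ p y) (hpprob : ∫ y, p y = 1)
    (hμint : Integrable (fun y => y * p y)) (hμ : ∫ y, y * p y = μ₁)
    (hhint : Integrable (fun y => h y * p y)) (hm : ∫ y, h y * p y = m)
    (hlip : LipschitzWith 1 h) (θ : ℝ) :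
    |∫ y in Iic θ, (h y - m) * p y| ≤ ∫ y in Iic θ, (μ₁ - y) * p y := by
  have hintsub : ∀ r : ℝ, Integrable (fun y => (r - y) * p y) := by
    intro r
    have : (fun y => (r - y) * p y) = (fun y => r * p y - y * p y) := by funext y; ring
    rw [this]; exact (hpint.const_mul r).sub hμint
  have hintadd : ∀ r : ℝ, Integrable (fun y => (r + y) * p y) := by
    intro r
    have : (fun y => (r + y) * p y) = (fun y => r * p y + y * p y) := by funext y; ring
    rw [this]; exact (hpint.const_mul r).add hμint
  have hintsubm : Integrable (fun y => (h y - m) * p y) := by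
    have : (fun y => (h y - m) * p y) = (fun y => h y * p y - m * p y) := by funext y; ring
    rw [this]; exact hhint.sub (hpint.const_mul m)
  set Im := ∫ y in Iic θ, p y with hIm
  set Ip := ∫ y in Ioi θ, p y with hIp
  set Hm := ∫ y in Iic θ, h y * p y with hHm
  set Hp := ∫ y in Ioi θ, h y * p y with hHp
  set Ym := ∫ y in Iic θ, y * p y with hYm
  set Yp := ∫ y in Ioi θ, y * p y with hYp
  have hIsum : Im + Ip = 1 := by
    rw [hIm, hIp, intervalIntegral.integral_Iic_add_Ioi hpint.integrableOn hpint.integrableOn, hpprob]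
  have hHsum : Hm + Hp = m := by
    rw [hHm, hHp, intervalIntegral.integral_Iic_add_Ioi hhint.integrableOn hhint.integrableOn, hm]
  have hYsum : Ym + Yp = μ₁ := by
    rw [hYm, hYp, intervalIntegral.integral_Iic_add_Ioi hμint.integrableOn hμint.integrableOn, hμ]
  have hImnn : 0 ≤ Im := setIntegral_nonneg measurableSet_Iic (fun y _ => hpnn y)
  have hIpnn : 0 ≤ Ip := setIntegral_nonneg measurableSet_Ioi (fun y _ => hpnn y)
  have hlip' : ∀ y z : ℝ, |h y - h z| ≤ |y - z| := by
    intro y z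
    have := hlip.dist_le_mul y z
    simpa [Real.dist_eq] using this
  have hsplitsub : ∀ (r : ℝ) (s : Set ℝ), MeasurableSet s →
      ∫ y in s, (r - y) * p y = r * (∫ y in s, p y) - ∫ y in s, y * p y := by
    intro r s hs
    have e : (fun y => (r - y) * p y) = (fun y => r * p y - y * p y) := by funext y; ring
    rw [e, integral_sub (hpint.integrableOn.const_mul r) hμint.integrableOn,
      integral_const_mul]
  have hsplitadd : ∀ (r : ℝ) (s : Set ℝ), MeasurableSet s →
      ∫ y in s, (r + y) * p y = r * (∫ y in s, p y) + ∫ y in s, y * p y := by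
    intro r s hs
    have e : (fun y => (r + y) * p y) = (fun y => r * p y + y * p y) := by funext y; ring
    rw [e, integral_add (hpint.integrableOn.const_mul r) hμint.integrableOn,
      integral_const_mul]
  -- the four one-sided bounds
  have hb1 : Hm ≤ (h θ + θ) * Im - Ym := by
    rw [← hsplitsub (h θ + θ) _ measurableSet_Iic]
    apply setIntegral_mono_on hhint.integrableOn (hintsub _).integrableOn measurableSet_Iic
    intro y hy
    have habs : |y - θ| = θ - y := by
      rw [abs_of_nonpos (by simpa using (hy : y ≤ θ))]; ring
    have h1 : h y ≤ h θ + (θ - y) := by nlinarith [(abs_le.mp (hlip' y θ)).2, habs]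
    nlinarith [hpnn y]
  have hb3 : (h θ - θ) * Im + Ym ≤ Hm := by
    rw [← hsplitadd (h θ - θ) _ measurableSet_Iic]
    apply setIntegral_mono_on (hintadd _).integrableOn hhint.integrableOn measurableSet_Iic
    intro y hy
    have habs : |y - θ| = θ - y := by
      rw [abs_of_nonpos (by simpa using (hy : y ≤ θ))]; ring
    have h1 : h θ - (θ - y) ≤ h y := by nlinarith [(abs_le.mp (hlip' y θ)).1, habs]
    nlinarith [hpnn y]
  have hb2 : (h θ + θ) * Ip - Yp ≤ Hp := by
    rw [← hsplitsub (h θ + θ) _ measurableSet_Ioi]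
    apply setIntegral_mono_on (hintsub _).integrableOn hhint.integrableOn measurableSet_Ioi
    intro y hy
    have habs : |y - θ| = y - θ := abs_of_pos (by simpa [sub_pos] using (hy : θ < y))
    have h1 : h θ - (y - θ) ≤ h y := by nlinarith [(abs_le.mp (hlip' y θ)).1, habs]
    nlinarith [hpnn y]
  have hb4 : Hp ≤ (h θ - θ) * Ip + Yp := by
    rw [← hsplitadd (h θ - θ) _ measurableSet_Ioi]
    apply setIntegral_mono_on hhint.integrableOn (hintadd _).integrableOn measurableSet_Ioi
    intro y hy
    have habs : |y - θ| = y - θ := abs_of_pos (by simpa [sub_pos] using (hy : θ < y))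
    have h1 : h y ≤ h θ + (y - θ) := by nlinarith [(abs_le.mp (hlip' y θ)).2, habs]
    nlinarith [hpnn y]
  have eA : ∫ y in Iic θ, (h y - m) * p y = Hm - m * Im := by
    have e : (fun y => (h y - m) * p y) = (fun y => h y * p y - m * p y) := by funext y; ring
    rw [e, integral_sub hhint.integrableOn (hpint.integrableOn.const_mul m),
      integral_const_mul]
  have eM : ∫ y in Iic θ, (μ₁ - y) * p y = μ₁ * Im - Ym := hsplitsub μ₁ _ measurableSet_Iic
  rw [eA, eM]
  have e1 : Hm - m * Im = Hm * Ip - Hp * Im := by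
    have hIp' : Ip = 1 - Im := by linarith
    rw [← hHsum, hIp']; ring
  have e2 : μ₁ * Im - Ym = Yp * Im - Ym * Ip := by
    have hIp' : Ip = 1 - Im := by linarith
    rw [← hYsum, hIp']; ring
  clear_value Im Ip Hm Hp Ym Yp
  rw [e1, e2, abs_le]
  constructor
  · linarith [mul_le_mul_of_nonneg_right hb3 hIpnn, mul_le_mul_of_nonneg_right hb4 hImnn]
  · linarith [mul_le_mul_of_nonneg_right hb1 hIpnn, mul_le_mul_of_nonneg_right hb2 hImnn]


private lemma wub_primitive_continuous {f : ℝ → ℝ} (hf : Integrable f) :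
    Continuous (fun θ => ∫ y in Iic θ, f y) := by
  have key : (fun θ : ℝ => ∫ y in Iic θ, f y)
      = fun θ : ℝ => (∫ y in Iic 0, f y) + ∫ y in (0:ℝ)..θ, f y := by
    funext θ
    rw [← intervalIntegral.integral_Iic_sub_Iic hf.integrableOn hf.integrableOn]; ring
  rw [key]
  exact continuous_const.add
    (intervalIntegral.continuous_primitive (fun a b => hf.intervalIntegrable) 0)

private lemma wub_M_pos {a₁ b₁ μ₁ : ℝ} {p : ℝ → ℝ}
    (hppos : ∀ θ ∈ Ioo a₁ b₁, 0 < p θ)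
    (hpzero : ∀ θ ∉ Ioo a₁ b₁, p θ = 0) (hpint : Integrable p)
    (hpprob : ∫ y, p y = 1)
    (hμint : Integrable (fun y => y * p y)) (hμ : ∫ y, y * p y = μ₁)
    {θ : ℝ} (hθ : θ ∈ Ioo a₁ b₁) :
    0 < ∫ y in Iic θ, (μ₁ - y) * p y := by
  have hpnn : ∀ y, 0 ≤ p y := by
    intro y
    by_cases hy : y ∈ Ioo a₁ b₁
    · exact (hppos y hy).le
    · rw [hpzero y hy]
  set Im := ∫ y in Iic θ, p y with hIm
  set Ip := ∫ y in Ioi θ, p y with hIp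
  set Ym := ∫ y in Iic θ, y * p y with hYm
  set Yp := ∫ y in Ioi θ, y * p y with hYp
  have hIsum : Im + Ip = 1 := by
    rw [hIm, hIp, intervalIntegral.integral_Iic_add_Ioi hpint.integrableOn hpint.integrableOn,
      hpprob]
  have hYsum : Ym + Yp = μ₁ := by
    rw [hYm, hYp, intervalIntegral.integral_Iic_add_Ioi hμint.integrableOn hμint.integrableOn, hμ]
  have hImnn : 0 ≤ Im := setIntegral_nonneg measurableSet_Iic (fun y _ => hpnn y)
  have hM : ∫ y in Iic θ, (μ₁ - y) * p y = μ₁ * Im - Ym := by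
    have e : (fun y => (μ₁ - y) * p y) = (fun y => μ₁ * p y - y * p y) := by funext y; ring
    rw [e, integral_sub (hpint.integrableOn.const_mul μ₁) hμint.integrableOn, integral_const_mul,
      ← hIm, ← hYm]
  -- Ip > 0
  have hIppos : 0 < Ip := by
    rw [hIp]
    rw [setIntegral_pos_iff_support_of_nonneg_ae
      ((ae_restrict_iff' measurableSet_Ioi).2 (ae_of_all _ (fun y _ => hpnn y)))
      hpint.integrableOn]
    have hsub : Ioo θ b₁ ⊆ Function.support p ∩ Ioi θ := by
      intro y hy
      refine ⟨?_, hy.1⟩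
      have : 0 < p y := hppos y ⟨lt_trans hθ.1 hy.1, hy.2⟩
      exact ne_of_gt this
    calc (0:ℝ≥0∞) < volume (Ioo θ b₁) := by
          rw [Real.volume_Ioo]; exact ENNReal.ofReal_pos.2 (by linarith [hθ.2])
      _ ≤ volume (Function.support p ∩ Ioi θ) := measure_mono hsub
  -- θ * Im - Ym > 0
  have hTpos : 0 < θ * Im - Ym := by
    have e : θ * Im - Ym = ∫ y in Iic θ, (θ - y) * p y := by
      have e2 : (fun y => (θ - y) * p y) = (fun y => θ * p y - y * p y) := by funext y; ring
      rw [e2, integral_sub (hpint.integrableOn.const_mul θ) hμint.integrableOn,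
        integral_const_mul, ← hIm, ← hYm]
    rw [e]
    have hintθ : IntegrableOn (fun y => (θ - y) * p y) (Iic θ) := by
      have e2 : (fun y => (θ - y) * p y) = (fun y => θ * p y - y * p y) := by funext y; ring
      rw [e2]; exact (hpint.integrableOn.const_mul θ).sub hμint.integrableOn
    rw [setIntegral_pos_iff_support_of_nonneg_ae
      ((ae_restrict_iff' measurableSet_Iic).2 (ae_of_all _
        (fun y hy => mul_nonneg (by simpa [sub_nonneg] using (hy : y ≤ θ)) (hpnn y))))
      hintθ]
    have hsub : Ioo a₁ θ ⊆ Function.support (fun y => (θ - y) * p y) ∩ Iic θ := by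
      intro y hy
      refine ⟨?_, le_of_lt hy.2⟩
      have hpy : 0 < p y := hppos y ⟨hy.1, lt_trans hy.2 hθ.2⟩
      have : 0 < (θ - y) * p y := mul_pos (by linarith [hy.2]) hpy
      exact ne_of_gt this
    calc (0:ℝ≥0∞) < volume (Ioo a₁ θ) := by
          rw [Real.volume_Ioo]; exact ENNReal.ofReal_pos.2 (by linarith [hθ.1])
      _ ≤ volume _ := measure_mono hsub
  -- Yp ≥ θ * Ip
  have hYpge : θ * Ip ≤ Yp := by
    rw [hYp, hIp, ← integral_const_mul]
    apply setIntegral_mono_on (hpint.integrableOn.const_mul θ) hμint.integrableOn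
      measurableSet_Ioi
    intro y hy
    exact mul_le_mul_of_nonneg_right (le_of_lt hy) (hpnn y)
  rw [hM]
  have key : μ₁ * Im - Ym = Yp * Im - Ym * Ip := by
    have hIp' : Ip = 1 - Im := by linarith
    rw [← hYsum, hIp']; ring
  rw [key]
  clear_value Im Ip Ym Yp
  nlinarith [mul_le_mul_of_nonneg_right hYpge hImnn, mul_pos hIppos hTpos]

private lemma wub_fubini {s t : ℝ} {r φ : ℝ → ℝ}
    (hr : IntegrableOn r (Ioc s t)) (hφ : IntegrableOn φ (Ioc s t)) :
    ∫ θ in Ioc s t, r θ * ∫ y in Ioc s θ, φ y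
      = ∫ y in Ioc s t, (∫ θ in Ioc y t, r θ) * φ y := by
  set F : ℝ → ℝ → ℝ := fun θ y => if y ≤ θ then r θ * φ y else 0 with hF
  have hFint : Integrable (Function.uncurry F)
      ((volume.restrict (Ioc s t)).prod (volume.restrict (Ioc s t))) := by
    have hbase : Integrable (fun q : ℝ × ℝ => r q.1 * φ q.2)
        ((volume.restrict (Ioc s t)).prod (volume.restrict (Ioc s t))) := hr.mul_prod hφ
    have hmeas : MeasurableSet {q : ℝ × ℝ | q.2 ≤ q.1} :=
      measurableSet_le measurable_snd measurable_fst
    have he : Function.uncurry F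
        = {q : ℝ × ℝ | q.2 ≤ q.1}.indicator (fun q => r q.1 * φ q.2) := by
      funext q
      by_cases hq : q.2 ≤ q.1 <;>
        simp [Function.uncurry, hF, hq, Set.indicator, mem_setOf_eq]
    rw [he]
    exact hbase.indicator hmeas
  have hswap := integral_integral_swap hFint
  have hL : ∫ θ in Ioc s t, ∫ y in Ioc s t, F θ y
      = ∫ θ in Ioc s t, r θ * ∫ y in Ioc s θ, φ y := by
    apply setIntegral_congr_fun measurableSet_Ioc
    intro θ hθ
    dsimp only
    have e1 : (fun y => F θ y) = (Iic θ).indicator (fun y => r θ * φ y) := by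
      funext y
      by_cases hy : y ≤ θ <;> simp [hF, hy, Set.indicator, mem_Iic]
    rw [e1, integral_indicator measurableSet_Iic, Measure.restrict_restrict measurableSet_Iic,
      show Iic θ ∩ Ioc s t = Ioc s θ by
        ext x
        simp only [mem_inter_iff, mem_Iic, mem_Ioc]
        exact ⟨fun ⟨h1, h2⟩ => ⟨h2.1, h1⟩, fun ⟨h1, h2⟩ => ⟨h2, h1, h2.trans hθ.2⟩⟩,
      integral_const_mul]
  have hR : ∫ y in Ioc s t, ∫ θ in Ioc s t, F θ y
      = ∫ y in Ioc s t, (∫ θ in Ioc y t, r θ) * φ y := by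
    apply setIntegral_congr_fun measurableSet_Ioc
    intro y hy
    dsimp only
    have e1 : (fun θ => F θ y) = (Ici y).indicator (fun θ => r θ * φ y) := by
      funext θ
      by_cases hθ : y ≤ θ <;> simp [hF, hθ, Set.indicator, mem_Ici]
    rw [e1, integral_indicator measurableSet_Ici, Measure.restrict_restrict measurableSet_Ici,
      show Ici y ∩ Ioc s t = Icc y t by
        ext x
        simp only [mem_inter_iff, mem_Ici, mem_Ioc, mem_Icc]
        exact ⟨fun ⟨h1, h2⟩ => ⟨h1, h2.2⟩, fun ⟨h1, h2⟩ => ⟨h1, lt_of_lt_of_le hy.1 h1, h2⟩⟩,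
      integral_mul_const, integral_Icc_eq_integral_Ioc]
  rw [← hL, ← hR]
  exact hswap

/-- Upper bound of Ghaderinezhad–Ley (2019) on the Wasserstein-1 distance between two
posteriors with nested supports: for every Lipschitz-1 test function `h`,
`|E[h(Θ₁)] - E[h(Θ₂)]| ≤ E[τ₁(Θ₁)|ρ'(Θ₁)|] / E[ρ(Θ₁)]`. -/
theorem wasserstein_upper_bound
    (a₁ b₁ a₂ b₂ : ℝ) (p₁ p₂ ρ ρ' τ₁ : ℝ → ℝ) (c μ₁ μ₂ : ℝ)
    -- nested supports
    (hnested : Set.Ioo a₂ b₂ ⊆ Set.Ioo a₁ b₁)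
    (hI₂ : a₂ < b₂)
    -- `p₁` and `p₂` are probability densities supported on `I₁` and `I₂`
    (hp₁meas : Measurable p₁) (hp₂meas : Measurable p₂)
    (hp₁pos : ∀ θ ∈ Set.Ioo a₁ b₁, 0 < p₁ θ)
    (hp₁zero : ∀ θ ∉ Set.Ioo a₁ b₁, p₁ θ = 0)
    (hp₂pos : ∀ θ ∈ Set.Ioo a₂ b₂, 0 < p₂ θ)
    (hp₂zero : ∀ θ ∉ Set.Ioo a₂ b₂, p₂ θ = 0)
    (hp₁prob : ∫ θ, p₁ θ = 1) (hp₂prob : ∫ θ, p₂ θ = 1)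
    -- finite means `μ₁` and `μ₂`
    (hμ₁int : Integrable (fun θ => θ * p₁ θ)) (hμ₁ : ∫ θ, θ * p₁ θ = μ₁)
    (hμ₂int : Integrable (fun θ => θ * p₂ θ)) (hμ₂ : ∫ θ, θ * p₂ θ = μ₂)
    -- `p₂ = c ρ p₁` on `I₂` where `ρ` is differentiable on `I₂` with derivative `ρ'`
    (hc : 0 < c)
    (hρ : ∀ θ ∈ Set.Ioo a₂ b₂, p₂ θ = c * ρ θ * p₁ θ)
    (hρdiff : ∀ θ ∈ Set.Ioo a₂ b₂, HasDerivAt ρ (ρ' θ) θ)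
    -- `τ₁` is the Stein kernel of `p₁`
    (hτ₁ : ∀ θ ∈ Set.Ioo a₁ b₁,
      τ₁ θ = (∫ y in Set.Ioc a₁ θ, (μ₁ - y) * p₁ y) / p₁ θ)
    -- condition (i): `E[(Θ₁ - μ₁) ρ(Θ₁)] < ∞`
    (hi : IntegrableOn (fun θ => (θ - μ₁) * ρ θ * p₁ θ) (Set.Ioo a₂ b₂))
    -- condition (ii): integrability on `I₂` of the derivative of
    -- `θ ↦ ρ(θ) ∫_{a₁}^θ (h(y) - E[h(Θ₁)]) p₁(y) dy`
    (hii : ∀ h : ℝ → ℝ, LipschitzWith 1 h →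
      IntegrableOn (fun θ =>
          ρ' θ * (∫ y in Set.Ioc a₁ θ, (h y - ∫ z, h z * p₁ z) * p₁ y)
          + ρ θ * (h θ - ∫ z, h z * p₁ z) * p₁ θ)
        (Set.Ioo a₂ b₂))
    -- condition (iii): the boundary terms vanish
    (hiii : ∀ h : ℝ → ℝ, LipschitzWith 1 h →
      Tendsto (fun θ => ρ θ * ∫ y in Set.Ioc a₁ θ, (h y - ∫ z, h z * p₁ z) * p₁ y)
        (nhdsWithin a₂ (Set.Ioi a₂)) (nhds 0) ∧
      Tendsto (fun θ => ρ θ * ∫ y in Set.Ioc a₁ θ, (h y - ∫ z, h z * p₁ z) * p₁ y)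
        (nhdsWithin b₂ (Set.Iio b₂)) (nhds 0)) :
    -- conclusion: the Wasserstein-1 upper bound, i.e. for every Lipschitz-1 `h`
    ∀ h : ℝ → ℝ, LipschitzWith 1 h →
      |(∫ θ, h θ * p₁ θ) - (∫ θ, h θ * p₂ θ)| ≤
        (∫ θ in Set.Ioo a₂ b₂, τ₁ θ * |ρ' θ| * p₁ θ) /
          (∫ θ in Set.Ioo a₂ b₂, ρ θ * p₁ θ) := by
  intro h hlip
  have hii' := hii h hlip
  have hiii' := hiii h hlip
  have hii_id := hii id (LipschitzWith.id)
  simp only [id_eq] at hii_id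
  rw [hμ₁] at hii_id
  -- nonnegativity of the densities
  have hp₁nn : ∀ y, 0 ≤ p₁ y := by
    intro y; by_cases hy : y ∈ Ioo a₁ b₁
    · exact (hp₁pos y hy).le
    · rw [hp₁zero y hy]
  have hp₂nn : ∀ y, 0 ≤ p₂ y := by
    intro y; by_cases hy : y ∈ Ioo a₂ b₂
    · exact (hp₂pos y hy).le
    · rw [hp₂zero y hy]
  have hp₁int : Integrable p₁ :=
    wub_integrable_of_integral_ne_zero (by rw [hp₁prob]; exact one_ne_zero)
  have hp₂int : Integrable p₂ :=
    wub_integrable_of_integral_ne_zero (by rw [hp₂prob]; exact one_ne_zero)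
  have hlip' : ∀ y z : ℝ, |h y - h z| ≤ |y - z| := by
    intro y z
    have := hlip.dist_le_mul y z
    simpa [Real.dist_eq] using this
  have hhabs : ∀ y : ℝ, |h y| ≤ |h 0| + |y| := by
    intro y
    have h1 : |h y - h 0| ≤ |y| := by simpa using hlip' y 0
    have h2 := abs_sub_abs_le_abs_sub (h y) (h 0)
    linarith
  have hmul_int : ∀ q : ℝ → ℝ, Measurable q → Integrable q →
      Integrable (fun y => y * q y) → Integrable (fun y => h y * q y) := by
    intro q hqmeas hqint hyint
    refine Integrable.mono' ((hqint.abs.const_mul |h 0|).add hyint.abs)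
      ((hlip.continuous.measurable.mul hqmeas).aestronglyMeasurable) ?_
    refine ae_of_all _ fun y => ?_
    show ‖h y * q y‖ ≤ |h 0| * |q y| + |y * q y|
    have h3 := mul_le_mul_of_nonneg_right (hhabs y) (abs_nonneg (q y))
    calc ‖h y * q y‖ = |h y| * |q y| := by rw [Real.norm_eq_abs, abs_mul]
      _ ≤ |h 0| * |q y| + |y| * |q y| := by linarith
      _ = |h 0| * |q y| + |y * q y| := by rw [abs_mul]
  have hhp₁int : Integrable (fun y => h y * p₁ y) := hmul_int p₁ hp₁meas hp₁int hμ₁int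
  have hhp₂int : Integrable (fun y => h y * p₂ y) := hmul_int p₂ hp₂meas hp₂int hμ₂int
  set m := ∫ z, h z * p₁ z with hmdef
  have hφint : Integrable (fun y => (h y - m) * p₁ y) := by
    have e : (fun y => (h y - m) * p₁ y) = fun y => h y * p₁ y - m * p₁ y := by funext y; ring
    rw [e]; exact hhp₁int.sub (hp₁int.const_mul m)
  have hMint : Integrable (fun y => (μ₁ - y) * p₁ y) := by
    have e : (fun y => (μ₁ - y) * p₁ y) = fun y => μ₁ * p₁ y - y * p₁ y := by funext y; ring
    rw [e]; exact (hp₁int.const_mul μ₁).sub hμ₁int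
  set g := fun θ : ℝ => ∫ y in Iic θ, (h y - m) * p₁ y with hgdef
  set M := fun θ : ℝ => ∫ y in Iic θ, (μ₁ - y) * p₁ y with hMdef
  have hp₁zero' : ∀ y, y ≤ a₁ → p₁ y = 0 := fun y hy =>
    hp₁zero y (fun hmem => absurd hmem.1 (not_lt.2 hy))
  have hgIoc : ∀ θ, a₁ < θ → (∫ y in Ioc a₁ θ, (h y - m) * p₁ y) = g θ := by
    intro θ hθ
    simp only [hgdef]
    exact (wub_iic_eq_ioc hθ.le (fun y hy => by rw [hp₁zero' y hy, mul_zero]) hφint).symm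
  have hMIoc : ∀ θ, a₁ < θ → (∫ y in Ioc a₁ θ, (μ₁ - y) * p₁ y) = M θ := by
    intro θ hθ
    simp only [hMdef]
    exact (wub_iic_eq_ioc hθ.le (fun y hy => by rw [hp₁zero' y hy, mul_zero]) hMint).symm
  have hgabs : ∀ θ : ℝ, |g θ| ≤ M θ := by
    intro θ
    simp only [hgdef, hMdef]
    exact wub_key_bound hp₁int hp₁nn hp₁prob hμ₁int hμ₁ hhp₁int hmdef.symm hlip θ
  have hMnn : ∀ θ, 0 ≤ M θ := fun θ => le_trans (abs_nonneg (g θ)) (hgabs θ)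
  have hgcont : Continuous g := by
    simp only [hgdef]; exact wub_primitive_continuous hφint
  have hMcont : Continuous M := by
    simp only [hMdef]; exact wub_primitive_continuous hMint
  have hMpos : ∀ θ ∈ Ioo a₁ b₁, 0 < M θ := by
    intro θ hθ
    simp only [hMdef]
    exact wub_M_pos hp₁pos hp₁zero hp₁int hp₁prob hμ₁int hμ₁ hθ
  -- measurability of ρ' on measurable subsets of I₂
  have hρ'meas : ∀ u : Set ℝ, MeasurableSet u → u ⊆ Ioo a₂ b₂ →
      AEStronglyMeasurable ρ' (volume.restrict u) := by
    intro u hu husub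
    refine (measurable_deriv ρ).aestronglyMeasurable.congr ?_
    exact (ae_restrict_iff' hu).2 (ae_of_all _ fun θ hθ => (hρdiff θ (husub hθ)).deriv)
  set ψ := fun θ : ℝ => ρ' θ * g θ + ρ θ * (h θ - m) * p₁ θ with hψdef
  have hψint : IntegrableOn ψ (Ioo a₂ b₂) := by
    refine IntegrableOn.congr_fun hii' (fun θ hθ => ?_) measurableSet_Ioo
    simp only [hψdef]
    rw [hgIoc θ (hnested hθ).1]
  have hρMint : IntegrableOn (fun θ => ρ' θ * M θ) (Ioo a₂ b₂) := by
    refine IntegrableOn.congr_fun (hi.sub hii_id) (fun θ hθ => ?_) measurableSet_Ioo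
    have e1 : (∫ y in Ioc a₁ θ, (y - μ₁) * p₁ y) = - M θ := by
      have e2 : (fun y => (y - μ₁) * p₁ y) = fun y => -((μ₁ - y) * p₁ y) := by funext y; ring
      rw [e2, integral_neg, hMIoc θ (hnested hθ).1]
    simp only [Pi.sub_apply]
    rw [e1]; ring
  have hρ'locint : ∀ s t : ℝ, s ∈ Ioo a₂ b₂ → t ∈ Ioo a₂ b₂ → s ≤ t →
      IntegrableOn ρ' (Ioc s t) := by
    intro s t hs ht hst
    have hsub : Ioc s t ⊆ Ioo a₂ b₂ := fun x hx =>
      ⟨lt_trans hs.1 hx.1, lt_of_le_of_lt hx.2 ht.2⟩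
    obtain ⟨x₀, hx₀mem, hx₀min⟩ := isCompact_Icc.exists_isMinOn (nonempty_Icc.2 hst)
      hMcont.continuousOn
    have hx₀I₁ : x₀ ∈ Ioo a₁ b₁ :=
      hnested ⟨lt_of_lt_of_le hs.1 hx₀mem.1, lt_of_le_of_lt hx₀mem.2 ht.2⟩
    have hε : 0 < M x₀ := hMpos x₀ hx₀I₁
    refine Integrable.mono' (((hρMint.mono_set hsub).abs).const_mul (M x₀)⁻¹)
      (hρ'meas _ measurableSet_Ioc hsub) ?_
    refine (ae_restrict_iff' measurableSet_Ioc).2 (ae_of_all _ fun θ hθ => ?_)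
    have hMθ : M x₀ ≤ M θ := hx₀min ⟨hθ.1.le, hθ.2⟩
    rw [Real.norm_eq_abs, abs_mul, abs_of_nonneg (hMnn θ)]
    have h2 := mul_le_mul_of_nonneg_left
      (mul_le_mul_of_nonneg_left hMθ (abs_nonneg (ρ' θ))) (inv_nonneg.2 hε.le)
    calc |ρ' θ| = (M x₀)⁻¹ * (|ρ' θ| * M x₀) := by field_simp
      _ ≤ (M x₀)⁻¹ * (|ρ' θ| * M θ) := h2
  have hFTCρ : ∀ u v : ℝ, u ∈ Ioo a₂ b₂ → v ∈ Ioo a₂ b₂ → u ≤ v →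
      ∫ θ in Ioc u v, ρ' θ = ρ v - ρ u := by
    intro u v hu hv huv
    rw [← intervalIntegral.integral_of_le huv]
    apply intervalIntegral.integral_eq_sub_of_hasDerivAt
    · intro x hx
      rw [uIcc_of_le huv] at hx
      exact hρdiff x ⟨lt_of_lt_of_le hu.1 hx.1, lt_of_le_of_lt hx.2 hv.2⟩
    · exact (intervalIntegrable_iff_integrableOn_Ioc_of_le huv).2 (hρ'locint u v hu hv huv)
  have hcne : c ≠ 0 := ne_of_gt hc
  have hρφint : IntegrableOn (fun θ => ρ θ * (h θ - m) * p₁ θ) (Ioo a₂ b₂) := by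
    have hbase : Integrable (fun θ => c⁻¹ * (h θ * p₂ θ - m * p₂ θ)) :=
      (hhp₂int.sub (hp₂int.const_mul m)).const_mul c⁻¹
    refine IntegrableOn.congr_fun hbase.integrableOn (fun θ hθ => ?_) measurableSet_Ioo
    rw [hρ θ hθ]; field_simp
  have hρp₁int : IntegrableOn (fun θ => ρ θ * p₁ θ) (Ioo a₂ b₂) := by
    refine IntegrableOn.congr_fun (hp₂int.const_mul c⁻¹).integrableOn (fun θ hθ => ?_) measurableSet_Ioo
    rw [hρ θ hθ]; field_simp
  have hp₂I₂ : ∫ θ in Ioo a₂ b₂, p₂ θ = 1 := by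
    rw [setIntegral_eq_integral_of_forall_compl_eq_zero (fun θ hθ => hp₂zero θ hθ), hp₂prob]
  have hDen : ∫ θ in Ioo a₂ b₂, ρ θ * p₁ θ = c⁻¹ := by
    have e1 : ∫ θ in Ioo a₂ b₂, ρ θ * p₁ θ = ∫ θ in Ioo a₂ b₂, c⁻¹ * p₂ θ := by
      apply setIntegral_congr_fun measurableSet_Ioo
      intro θ hθ
      simp only []
      rw [hρ θ hθ]; field_simp
    rw [e1, integral_const_mul, hp₂I₂, mul_one]
  have hhp₂I₂ : ∫ θ in Ioo a₂ b₂, h θ * p₂ θ = ∫ θ, h θ * p₂ θ :=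
    setIntegral_eq_integral_of_forall_compl_eq_zero
      (fun θ hθ => by rw [hp₂zero θ hθ, mul_zero])
  have hA : c * ∫ θ in Ioo a₂ b₂, ρ θ * (h θ - m) * p₁ θ = (∫ θ, h θ * p₂ θ) - m := by
    have e1 : ∫ θ in Ioo a₂ b₂, ρ θ * (h θ - m) * p₁ θ
        = ∫ θ in Ioo a₂ b₂, c⁻¹ * (h θ * p₂ θ - m * p₂ θ) := by
      apply setIntegral_congr_fun measurableSet_Ioo
      intro θ hθ
      simp only []
      rw [hρ θ hθ]; field_simp
    rw [e1, integral_const_mul,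
      integral_sub hhp₂int.integrableOn (hp₂int.integrableOn.const_mul m),
      integral_const_mul, hhp₂I₂, hp₂I₂, mul_one]
    field_simp
  -- the key identity on compact subintervals
  have hkey : ∀ s t : ℝ, s ∈ Ioo a₂ b₂ → t ∈ Ioo a₂ b₂ → s ≤ t →
      ∫ θ in Ioc s t, ψ θ = ρ t * g t - ρ s * g s := by
    intro s t hs ht hst
    have hsub : Ioc s t ⊆ Ioo a₂ b₂ := fun x hx =>
      ⟨lt_trans hs.1 hx.1, lt_of_le_of_lt hx.2 ht.2⟩
    have hρ'i := hρ'locint s t hs ht hst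
    have hφOn : IntegrableOn (fun y => (h y - m) * p₁ y) (Ioc s t) := hφint.integrableOn
    have hρφi : IntegrableOn (fun θ => ρ θ * (h θ - m) * p₁ θ) (Ioc s t) :=
      hρφint.mono_set hsub
    have hgsplit : ∀ θ, s ≤ θ → g θ = g s + ∫ y in Ioc s θ, (h y - m) * p₁ y := by
      intro θ hθ
      simp only [hgdef]
      rw [← setIntegral_union (Iic_disjoint_Ioc le_rfl) measurableSet_Ioc
        hφint.integrableOn hφint.integrableOn, Iic_union_Ioc_eq_Iic hθ]
    have hKbdd : ∀ θ : ℝ, |g θ| ≤ ∫ y, |(h y - m) * p₁ y| := by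
      intro θ
      simp only [hgdef]
      calc |∫ y in Iic θ, (h y - m) * p₁ y| = ‖∫ y in Iic θ, (h y - m) * p₁ y‖ :=
            (Real.norm_eq_abs _).symm
        _ ≤ ∫ y in Iic θ, ‖(h y - m) * p₁ y‖ := norm_integral_le_integral_norm _
        _ = ∫ y in Iic θ, |(h y - m) * p₁ y| := by simp only [Real.norm_eq_abs]
        _ ≤ ∫ y, |(h y - m) * p₁ y| :=
            setIntegral_le_integral hφint.abs (ae_of_all _ fun y => abs_nonneg _)
    have hρ'g_i : IntegrableOn (fun θ => ρ' θ * g θ) (Ioc s t) := by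
      refine Integrable.mono' (hρ'i.abs.const_mul (∫ y, |(h y - m) * p₁ y|))
        ((hρ'meas _ measurableSet_Ioc hsub).mul hgcont.aestronglyMeasurable) ?_
      refine ae_of_all _ fun θ => ?_
      rw [Real.norm_eq_abs, abs_mul]
      exact (mul_le_mul_of_nonneg_left (hKbdd θ) (abs_nonneg _)).trans_eq (mul_comm _ _)
    have hρ'G_i : IntegrableOn
        (fun θ => ρ' θ * ∫ y in Ioc s θ, (h y - m) * p₁ y) (Ioc s t) := by
      refine IntegrableOn.congr_fun (hρ'g_i.sub (hρ'i.const_mul (g s))) (fun θ hθ => ?_) measurableSet_Ioc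
      show ρ' θ * g θ - g s * ρ' θ = ρ' θ * ∫ y in Ioc s θ, (h y - m) * p₁ y
      rw [hgsplit θ hθ.1.le]; ring
    have hT : ∫ θ in Ioc s t, ρ' θ * ∫ y in Ioc s θ, (h y - m) * p₁ y
        = ρ t * (g t - g s) - ∫ θ in Ioc s t, ρ θ * ((h θ - m) * p₁ θ) := by
      rw [wub_fubini hρ'i hφOn]
      have e1 : ∫ y in Ioc s t, (∫ θ in Ioc y t, ρ' θ) * ((h y - m) * p₁ y)
          = ∫ y in Ioc s t, (ρ t * ((h y - m) * p₁ y) - ρ y * ((h y - m) * p₁ y)) := by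
        apply setIntegral_congr_fun measurableSet_Ioc
        intro y hy
        simp only []
        rw [hFTCρ y t (hsub hy) ht hy.2]; ring
      have hρφi' : IntegrableOn (fun θ => ρ θ * ((h θ - m) * p₁ θ)) (Ioc s t) :=
        IntegrableOn.congr_fun hρφi (fun θ _ => mul_assoc _ _ _) measurableSet_Ioc
      have e2 : ∫ y in Ioc s t, (h y - m) * p₁ y = g t - g s := by
        rw [hgsplit t hst]; ring
      rw [e1, integral_sub (hφOn.const_mul (ρ t)) hρφi', integral_const_mul, e2]
    have hsplit_add : ∫ θ in Ioc s t, ψ θ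
        = (∫ θ in Ioc s t, ρ' θ * g θ) + ∫ θ in Ioc s t, ρ θ * (h θ - m) * p₁ θ := by
      simp only [hψdef]
      exact integral_add hρ'g_i hρφi
    have e4 : ∫ θ in Ioc s t, ρ θ * (h θ - m) * p₁ θ
        = ∫ θ in Ioc s t, ρ θ * ((h θ - m) * p₁ θ) :=
      setIntegral_congr_fun measurableSet_Ioc (fun θ _ => mul_assoc _ _ _)
    have e3 : ∫ θ in Ioc s t, ρ' θ * g θ
        = (∫ θ in Ioc s t, g s * ρ' θ)
          + ∫ θ in Ioc s t, ρ' θ * ∫ y in Ioc s θ, (h y - m) * p₁ y := by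
      rw [← integral_add (hρ'i.const_mul (g s)) hρ'G_i]
      apply setIntegral_congr_fun measurableSet_Ioc
      intro θ hθ
      show ρ' θ * g θ = g s * ρ' θ + ρ' θ * ∫ y in Ioc s θ, (h y - m) * p₁ y
      rw [hgsplit θ hθ.1.le]; ring
    rw [hsplit_add, e3, integral_const_mul, hFTCρ s t hs ht hst, hT, e4]
    ring
  -- the approximating sequences
  set d := (b₂ - a₂) / 2 with hddef
  have hd : 0 < d := by simp only [hddef]; linarith
  have hb₂eq : b₂ = a₂ + 2 * d := by simp only [hddef]; ring
  set sn := fun n : ℕ => a₂ + d / (n + 2) with hsndef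
  set tn := fun n : ℕ => b₂ - d / (n + 2) with htndef
  have hfrac : ∀ n : ℕ, 0 < d / ((n : ℝ) + 2) ∧ d / ((n : ℝ) + 2) ≤ d / 2 := by
    intro n
    have hn2 : (0:ℝ) < (n : ℝ) + 2 := by positivity
    constructor
    · positivity
    · apply div_le_div_of_nonneg_left hd.le (by norm_num) (by linarith [Nat.cast_nonneg (α := ℝ) n])
  have hsnmem : ∀ n, sn n ∈ Ioo a₂ b₂ := by
    intro n
    obtain ⟨h1, h2⟩ := hfrac n
    constructor
    · simp only [hsndef]; linarith
    · simp only [hsndef]; linarith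
  have htnmem : ∀ n, tn n ∈ Ioo a₂ b₂ := by
    intro n
    obtain ⟨h1, h2⟩ := hfrac n
    constructor
    · simp only [htndef]; linarith
    · simp only [htndef]; linarith
  have hsltn : ∀ n, sn n ≤ tn n := by
    intro n
    obtain ⟨h1, h2⟩ := hfrac n
    simp only [hsndef, htndef]
    linarith
  have hfrac_tendsto : Tendsto (fun n : ℕ => d / ((n : ℝ) + 2)) atTop (𝓝 0) :=
    tendsto_const_nhds.div_atTop
      (tendsto_atTop_add_const_right _ 2 tendsto_natCast_atTop_atTop)
  have hsn_tendsto : Tendsto sn atTop (𝓝[>] a₂) := by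
    apply tendsto_nhdsWithin_of_tendsto_nhds_of_eventually_within
    · have := hfrac_tendsto.const_add a₂
      simpa [hsndef] using this
    · exact Eventually.of_forall fun n => by
        simp only [hsndef, mem_Ioi]; linarith [(hfrac n).1]
  have htn_tendsto : Tendsto tn atTop (𝓝[<] b₂) := by
    apply tendsto_nhdsWithin_of_tendsto_nhds_of_eventually_within
    · have := hfrac_tendsto.const_sub b₂
      simpa [htndef] using this
    · exact Eventually.of_forall fun n => by
        simp only [htndef, mem_Iio]; linarith [(hfrac n).1]
  have hlim1 : Tendsto (fun n => ρ (tn n) * g (tn n) - ρ (sn n) * g (sn n)) atTop (𝓝 0) := by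
    have h1 := hiii'.2.comp htn_tendsto
    have h2 := hiii'.1.comp hsn_tendsto
    have h1' : Tendsto (fun n => ρ (tn n) * g (tn n)) atTop (𝓝 0) := by
      refine Tendsto.congr (fun n => ?_) h1
      simp only [Function.comp_apply]
      rw [hgIoc (tn n) (hnested (htnmem n)).1]
    have h2' : Tendsto (fun n => ρ (sn n) * g (sn n)) atTop (𝓝 0) := by
      refine Tendsto.congr (fun n => ?_) h2
      simp only [Function.comp_apply]
      rw [hgIoc (sn n) (hnested (hsnmem n)).1]
    simpa using h1'.sub h2'
  have hsubn : ∀ n, Ioc (sn n) (tn n) ⊆ Ioo a₂ b₂ := fun n x hx =>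
    ⟨lt_trans (hsnmem n).1 hx.1, lt_of_le_of_lt hx.2 (htnmem n).2⟩
  have hcov : AECover (volume.restrict (Ioo a₂ b₂)) atTop (fun n => Ioc (sn n) (tn n)) := by
    constructor
    · refine (ae_restrict_iff' measurableSet_Ioo).2 (ae_of_all _ fun x hx => ?_)
      have e1 : ∀ᶠ n in atTop, sn n < x :=
        (hsn_tendsto.mono_right nhdsWithin_le_nhds).eventually_lt_const hx.1
      have e2 : ∀ᶠ n in atTop, x < tn n :=
        (htn_tendsto.mono_right nhdsWithin_le_nhds).eventually_const_lt hx.2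
      filter_upwards [e1, e2] with n hn1 hn2
      exact ⟨hn1, hn2.le⟩
    · exact fun n => measurableSet_Ioc
  have hlim2 : Tendsto (fun n => ∫ θ in Ioc (sn n) (tn n), ψ θ) atTop
      (𝓝 (∫ θ in Ioo a₂ b₂, ψ θ)) := by
    have hbase := hcov.integral_tendsto_of_countably_generated hψint
    refine Tendsto.congr (fun n => ?_) hbase
    rw [Measure.restrict_restrict measurableSet_Ioc, inter_eq_left.2 (hsubn n)]
  have hlim3 : Tendsto (fun n => ∫ θ in Ioc (sn n) (tn n), ψ θ) atTop (𝓝 0) := by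
    refine Tendsto.congr (fun n => ?_) hlim1
    exact (hkey (sn n) (tn n) (hsnmem n) (htnmem n) (hsltn n)).symm
  have hψzero : ∫ θ in Ioo a₂ b₂, ψ θ = 0 := tendsto_nhds_unique hlim2 hlim3
  have hρ'gI₂ : IntegrableOn (fun θ => ρ' θ * g θ) (Ioo a₂ b₂) := by
    refine IntegrableOn.congr_fun (hψint.sub hρφint) (fun θ hθ => ?_) measurableSet_Ioo
    simp only [hψdef, Pi.sub_apply]; ring
  have hsplitI₂ : ∫ θ in Ioo a₂ b₂, ρ' θ * g θ
      = - ∫ θ in Ioo a₂ b₂, ρ θ * (h θ - m) * p₁ θ := by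
    have e := hψzero
    simp only [hψdef] at e
    rw [integral_add hρ'gI₂ hρφint] at e
    linarith
  have hMabs : IntegrableOn (fun θ => |ρ' θ| * M θ) (Ioo a₂ b₂) := by
    refine IntegrableOn.congr_fun hρMint.abs (fun θ hθ => ?_) measurableSet_Ioo
    rw [abs_mul, abs_of_nonneg (hMnn θ)]
  have hNum : ∫ θ in Ioo a₂ b₂, τ₁ θ * |ρ' θ| * p₁ θ
      = ∫ θ in Ioo a₂ b₂, |ρ' θ| * M θ := by
    apply setIntegral_congr_fun measurableSet_Ioo
    intro θ hθ
    have hθ₁ := hnested hθ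
    have hp₁ne : p₁ θ ≠ 0 := ne_of_gt (hp₁pos θ hθ₁)
    show τ₁ θ * |ρ' θ| * p₁ θ = |ρ' θ| * M θ
    rw [hτ₁ θ hθ₁, hMIoc θ hθ₁.1]
    field_simp
  have hLHS : m - (∫ θ, h θ * p₂ θ) = c * ∫ θ in Ioo a₂ b₂, ρ' θ * g θ := by
    rw [hsplitI₂, mul_neg]
    linarith [hA]
  rw [hDen, hNum, div_eq_mul_inv, inv_inv, hLHS, abs_mul, abs_of_pos hc]
  have h1 : |∫ θ in Ioo a₂ b₂, ρ' θ * g θ| ≤ ∫ θ in Ioo a₂ b₂, |ρ' θ * g θ| :=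
    calc |∫ θ in Ioo a₂ b₂, ρ' θ * g θ| = ‖∫ θ in Ioo a₂ b₂, ρ' θ * g θ‖ :=
          (Real.norm_eq_abs _).symm
      _ ≤ ∫ θ in Ioo a₂ b₂, ‖ρ' θ * g θ‖ := norm_integral_le_integral_norm _
      _ = ∫ θ in Ioo a₂ b₂, |ρ' θ * g θ| := by simp only [Real.norm_eq_abs]
  have h2 : ∫ θ in Ioo a₂ b₂, |ρ' θ * g θ| ≤ ∫ θ in Ioo a₂ b₂, |ρ' θ| * M θ := by
    apply setIntegral_mono_on hρ'gI₂.abs hMabs measurableSet_Ioo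
    intro θ hθ
    rw [abs_mul]
    exact mul_le_mul_of_nonneg_left (hgabs θ) (abs_nonneg _)
  calc c * |∫ θ in Ioo a₂ b₂, ρ' θ * g θ|
      ≤ c * ∫ θ in Ioo a₂ b₂, |ρ' θ| * M θ :=
        mul_le_mul_of_nonneg_left (h1.trans h2) hc.le
    _ = (∫ θ in Ioo a₂ b₂, |ρ' θ| * M θ) * c := mul_comm _ _
end

section
/- Let $\Theta_1$ and $\Theta_2$ be real random variables with probability densities $p_1$ and $p_2$ supported on open intervals $I_1=(a_1,b_1)$ and $I_2=(a_2,b_2)$ with $I_2\subseteq I_1$, having finite means $\mu_1$ and $\mu_2$, and write $p_2(\theta)=c\,\rho(\theta)p_1(\theta)$ on $I_2$ where $\rho=p_2/p_1$ up to the normalizing constant $c>0$ and $\rho$ is differentiable on $I_2$. Let $\tau_1(\theta)=\frac{1}{p_1(\theta)}\int_{a_1}^{\theta}(\mu_1-y)p_1(y)\,dy$ be the Stein kernel of $p_1$. Assume conditions (i) $\mathrm{E}[(\Theta_1-\mu_1)\rho(\Theta_1)]<\infty$; (ii) for every Lipschitz-1 function $h$, the derivative of $\theta\mapsto\rho(\theta)\int_{a_1}^{\theta}(h(y)-\mathrm{E}[h(\Theta_1)])p_1(y)\,dy$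 is integrable on $I_2$; (iii) for every Lipschitz-1 function $h$, this product tends to $0$ as $\theta\to a_2$ and as $\theta\to b_2$. Then the difference of posterior means satisfies the identity $|\mu_1-\mu_2|=\dfrac{\left|\mathrm{E}[\tau_1(\Theta_1)\,\rho'(\Theta_1)]\right|}{\mathrm{E}[\rho(\Theta_1)]}$, and this quantity is a lower bound for the Wasserstein-1 distance: $|\mu_1-\mu_2|\le d_W(P_1,P_2)$. -/
open MeasureTheory Set Filter ENNReal

/-- The Wasserstein-1 distance between the distributions with Lebesgue densities `p` and `q`,
via the dual representation as a supremum over Lipschitz-1 test functions. -/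
noncomputable def wassersteinDist (p q : ℝ → ℝ) : ℝ≥0∞ :=
  ⨆ (h : ℝ → ℝ) (_ : LipschitzWith 1 h),
    ENNReal.ofReal |(∫ θ, h θ * p θ) - (∫ θ, h θ * q θ)|

lemma my_parts (ρ f : ℝ → ℝ) (a₁ s t : ℝ) (has : a₁ ≤ s) (hst : s ≤ t)
    (hρd : ∀ x ∈ Set.Icc s t, HasDerivAt ρ (deriv ρ x) x)
    (hρ'i : IntegrableOn (deriv ρ) (Set.Ioc s t))
    (hf : Integrable f)
    (hρf : IntegrableOn (fun θ => ρ θ * f θ) (Set.Ioc s t))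
    (hrGi : IntegrableOn (fun θ => deriv ρ θ * ∫ y in Set.Ioc a₁ θ, f y) (Set.Ioc s t)) :
    ∫ θ in Set.Ioc s t, (deriv ρ θ * (∫ y in Set.Ioc a₁ θ, f y) + ρ θ * f θ)
      = ρ t * (∫ y in Set.Ioc a₁ t, f y) - ρ s * (∫ y in Set.Ioc a₁ s, f y) := by
  have key0 : ∀ θ, s ≤ θ → (∫ y in Set.Ioc a₁ θ, f y)
      = (∫ y in Set.Ioc a₁ s, f y) + ∫ y in Set.Ioc s θ, f y := by
    intro θ hθ
    rw [← setIntegral_union (Set.Ioc_disjoint_Ioc_of_le le_rfl) measurableSet_Ioc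
      hf.integrableOn hf.integrableOn, Set.Ioc_union_Ioc_eq_Ioc has hθ]
  have hFTC : ∀ u, s ≤ u → u ≤ t → ∫ θ in Set.Ioc u t, deriv ρ θ = ρ t - ρ u := by
    intro u hsu hut
    rw [← intervalIntegral.integral_of_le hut]
    apply intervalIntegral.integral_eq_sub_of_hasDerivAt
    · intro x hx
      rw [Set.uIcc_of_le hut] at hx
      exact hρd x ⟨le_trans hsu hx.1, hx.2⟩
    · rw [intervalIntegrable_iff_integrableOn_Ioc_of_le hut]
      exact hρ'i.mono_set (Set.Ioc_subset_Ioc_left hsu)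
  -- Fubini
  set ν := volume.restrict (Set.Ioc s t) with hν
  set K : ℝ × ℝ → ℝ :=
    ({p : ℝ × ℝ | p.2 ≤ p.1}).indicator (fun q => deriv ρ q.1 * f q.2) with hK
  have hKint : Integrable K (ν.prod ν) := by
    exact (Integrable.mul_prod hρ'i hf.integrableOn).indicator
      (measurableSet_le measurable_snd measurable_fst)
  have hswap : ∫ θ, (∫ y, K (θ, y) ∂ν) ∂ν = ∫ y, (∫ θ, K (θ, y) ∂ν) ∂ν :=
    integral_integral_swap hKint
  have step1 : ∫ θ, (∫ y, K (θ, y) ∂ν) ∂ν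
      = ∫ θ in Set.Ioc s t, deriv ρ θ * ∫ y in Set.Ioc s θ, f y := by
    rw [hν]
    apply setIntegral_congr_fun measurableSet_Ioc
    intro θ hθ
    have hKy : (fun y => K (θ, y)) = (Set.Iic θ).indicator (fun y => deriv ρ θ * f y) := by
      funext y
      simp [hK, Set.indicator_apply, Set.mem_Iic]
    show (∫ y, K (θ, y) ∂ν) = deriv ρ θ * ∫ y in Set.Ioc s θ, f y
    rw [hν, hKy, integral_indicator measurableSet_Iic,
      Measure.restrict_restrict measurableSet_Iic]
    have : Set.Iic θ ∩ Set.Ioc s t = Set.Ioc s θ := by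
      rw [Set.inter_comm, Set.Ioc_inter_Iic, min_eq_right hθ.2]
    rw [this, integral_const_mul]
  have step3 : ∫ y, (∫ θ, K (θ, y) ∂ν) ∂ν
      = ∫ y in Set.Ioc s t, f y * (ρ t - ρ y) := by
    rw [hν]
    apply setIntegral_congr_fun measurableSet_Ioc
    intro y hy
    have hKθ : (fun θ => K (θ, y)) = (Set.Ici y).indicator (fun θ => deriv ρ θ * f y) := by
      funext θ
      simp [hK, Set.indicator_apply, Set.mem_Ici]
    show (∫ θ, K (θ, y) ∂ν) = f y * (ρ t - ρ y)
    rw [hν, hKθ, integral_indicator measurableSet_Ici,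
      Measure.restrict_restrict measurableSet_Ici]
    have hset : Set.Ici y ∩ Set.Ioc s t = Set.Icc y t := by
      ext θ
      simp only [Set.mem_inter_iff, Set.mem_Ici, Set.mem_Ioc, Set.mem_Icc]
      constructor
      · rintro ⟨h1, _, h3⟩; exact ⟨h1, h3⟩
      · rintro ⟨h1, h2⟩; exact ⟨h1, lt_of_lt_of_le hy.1 h1, h2⟩
    rw [hset, integral_Icc_eq_integral_Ioc, integral_mul_const,
      hFTC y hy.1.le hy.2, mul_comm]
  have step4 : ∫ y in Set.Ioc s t, f y * (ρ t - ρ y)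
      = ρ t * (∫ y in Set.Ioc s t, f y) - ∫ y in Set.Ioc s t, ρ y * f y := by
    have hsplit : ∀ y, f y * (ρ t - ρ y) = ρ t * f y - ρ y * f y := by intro y; ring
    simp_rw [hsplit]
    rw [integral_sub ((hf.integrableOn).const_mul (ρ t)) hρf, integral_const_mul]
  have hmain : ∫ θ in Set.Ioc s t, deriv ρ θ * ∫ y in Set.Ioc a₁ θ, f y
      = (∫ y in Set.Ioc a₁ s, f y) * (ρ t - ρ s)
        + (ρ t * (∫ y in Set.Ioc s t, f y) - ∫ y in Set.Ioc s t, ρ y * f y) := by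
    have hdGs : IntegrableOn (fun θ => deriv ρ θ * ∫ y in Set.Ioc a₁ s, f y)
        (Set.Ioc s t) := hρ'i.mul_const _
    have hd2 : IntegrableOn (fun θ => deriv ρ θ * ∫ y in Set.Ioc s θ, f y)
        (Set.Ioc s t) := by
      apply IntegrableOn.congr_fun (hrGi.sub hdGs) _ measurableSet_Ioc
      intro θ hθ
      simp only [Pi.sub_apply]
      rw [key0 θ hθ.1.le]
      ring
    have hcongr : ∫ θ in Set.Ioc s t, deriv ρ θ * ∫ y in Set.Ioc a₁ θ, f y
        = ∫ θ in Set.Ioc s t, (deriv ρ θ * (∫ y in Set.Ioc a₁ s, f y)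
            + deriv ρ θ * ∫ y in Set.Ioc s θ, f y) := by
      apply setIntegral_congr_fun measurableSet_Ioc
      intro θ hθ
      show deriv ρ θ * (∫ y in Set.Ioc a₁ θ, f y) = _
      rw [key0 θ hθ.1.le]
      ring
    rw [hcongr, integral_add hdGs hd2, integral_mul_const, hFTC s le_rfl hst]
    have h5 : ∫ θ in Set.Ioc s t, deriv ρ θ * ∫ y in Set.Ioc s θ, f y
        = ρ t * (∫ y in Set.Ioc s t, f y) - ∫ y in Set.Ioc s t, ρ y * f y := by
      rw [← step1, hswap, step3, step4]
    rw [h5]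
    ring
  rw [integral_add hrGi hρf, hmain, key0 t hst]
  ring

/-- Lower bound of Ghaderinezhad–Ley (2019): the difference of posterior means satisfies
`|μ₁ - μ₂| = |E[τ₁(Θ₁)ρ'(Θ₁)]| / E[ρ(Θ₁)]` and is a lower bound for the
Wasserstein-1 distance between the two posteriors. -/
theorem wasserstein_lower_bound
    (a₁ b₁ a₂ b₂ : ℝ) (p₁ p₂ ρ ρ' τ₁ : ℝ → ℝ) (c μ₁ μ₂ : ℝ)
    -- nested supports
    (hnested : Set.Ioo a₂ b₂ ⊆ Set.Ioo a₁ b₁)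
    (hI₂ : a₂ < b₂)
    -- `p₁` and `p₂` are probability densities supported on `I₁` and `I₂`
    (hp₁meas : Measurable p₁) (hp₂meas : Measurable p₂)
    (hp₁pos : ∀ θ ∈ Set.Ioo a₁ b₁, 0 < p₁ θ)
    (hp₁zero : ∀ θ ∉ Set.Ioo a₁ b₁, p₁ θ = 0)
    (hp₂pos : ∀ θ ∈ Set.Ioo a₂ b₂, 0 < p₂ θ)
    (hp₂zero : ∀ θ ∉ Set.Ioo a₂ b₂, p₂ θ = 0)
    (hp₁prob : ∫ θ, p₁ θ = 1) (hp₂prob : ∫ θ, p₂ θ = 1)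
    -- finite means `μ₁` and `μ₂`
    (hμ₁int : Integrable (fun θ => θ * p₁ θ)) (hμ₁ : ∫ θ, θ * p₁ θ = μ₁)
    (hμ₂int : Integrable (fun θ => θ * p₂ θ)) (hμ₂ : ∫ θ, θ * p₂ θ = μ₂)
    -- `p₂ = c ρ p₁` on `I₂` where `ρ` is differentiable on `I₂` with derivative `ρ'`
    (hc : 0 < c)
    (hρ : ∀ θ ∈ Set.Ioo a₂ b₂, p₂ θ = c * ρ θ * p₁ θ)
    (hρdiff : ∀ θ ∈ Set.Ioo a₂ b₂, HasDerivAt ρ (ρ' θ) θ)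
    -- `τ₁` is the Stein kernel of `p₁`
    (hτ₁ : ∀ θ ∈ Set.Ioo a₁ b₁,
      τ₁ θ = (∫ y in Set.Ioc a₁ θ, (μ₁ - y) * p₁ y) / p₁ θ)
    -- condition (i): `E[(Θ₁ - μ₁) ρ(Θ₁)] < ∞`
    (hi : IntegrableOn (fun θ => (θ - μ₁) * ρ θ * p₁ θ) (Set.Ioo a₂ b₂))
    -- condition (ii): integrability on `I₂` of the derivative of
    -- `θ ↦ ρ(θ) ∫_{a₁}^θ (h(y) - E[h(Θ₁)]) p₁(y) dy`
    (hii : ∀ h : ℝ → ℝ, LipschitzWith 1 h →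
      IntegrableOn (fun θ =>
          ρ' θ * (∫ y in Set.Ioc a₁ θ, (h y - ∫ z, h z * p₁ z) * p₁ y)
          + ρ θ * (h θ - ∫ z, h z * p₁ z) * p₁ θ)
        (Set.Ioo a₂ b₂))
    -- condition (iii): the boundary terms vanish
    (hiii : ∀ h : ℝ → ℝ, LipschitzWith 1 h →
      Tendsto (fun θ => ρ θ * ∫ y in Set.Ioc a₁ θ, (h y - ∫ z, h z * p₁ z) * p₁ y)
        (nhdsWithin a₂ (Set.Ioi a₂)) (nhds 0) ∧
      Tendsto (fun θ => ρ θ * ∫ y in Set.Ioc a₁ θ, (h y - ∫ z, h z * p₁ z) * p₁ y)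
        (nhdsWithin b₂ (Set.Iio b₂)) (nhds 0)) :
    -- conclusion: the identity for the difference of means, which is a lower bound
    -- for the Wasserstein-1 distance
    |μ₁ - μ₂| =
        |∫ θ in Set.Ioo a₂ b₂, τ₁ θ * ρ' θ * p₁ θ| /
          (∫ θ in Set.Ioo a₂ b₂, ρ θ * p₁ θ) ∧
      ENNReal.ofReal |μ₁ - μ₂| ≤ wassersteinDist p₁ p₂ := by
  have hlip : LipschitzWith 1 (fun x : ℝ => x) := LipschitzWith.id
  obtain ⟨ha₁₂, hb₂₁⟩ := (Set.Ioo_subset_Ioo_iff hI₂).1 hnested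
  have hp₁nn : ∀ y, 0 ≤ p₁ y := by
    intro y
    by_cases hy : y ∈ Set.Ioo a₁ b₁
    · exact (hp₁pos y hy).le
    · rw [hp₁zero y hy]
  have hp₁int : Integrable p₁ := by
    by_contra hI
    rw [integral_undef hI] at hp₁prob
    norm_num at hp₁prob
  have hp₂int : Integrable p₂ := by
    by_contra hI
    rw [integral_undef hI] at hp₂prob
    norm_num at hp₂prob
  have hFint : Integrable (fun y => (y - μ₁) * p₁ y) := by
    have := hμ₁int.sub (hp₁int.const_mul μ₁)
    apply this.congr
    filter_upwards with y
    simp only [Pi.sub_apply]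
    ring
  -- total integral of (μ₁ - y) p₁ y over Ioc a₁ b₁ is 0
  have htot : ∫ y in Set.Ioc a₁ b₁, (μ₁ - y) * p₁ y = 0 := by
    have h1 : ∫ y in Set.Ioc a₁ b₁, (μ₁ - y) * p₁ y = ∫ y, (μ₁ - y) * p₁ y := by
      apply setIntegral_eq_integral_of_forall_compl_eq_zero
      intro y hy
      have : y ∉ Set.Ioo a₁ b₁ := fun h => hy ⟨h.1, h.2.le⟩
      rw [hp₁zero y this, mul_zero]
    rw [h1]
    have h2 : ∫ y, (μ₁ - y) * p₁ y = μ₁ * (∫ y, p₁ y) - ∫ y, y * p₁ y := by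
      rw [← integral_const_mul, ← integral_sub ((hp₁int.const_mul μ₁)) hμ₁int]
      congr 1
      funext y
      ring
    rw [h2, hp₁prob, hμ₁]
    ring
  -- strict positivity helper
  have pos_aux : ∀ (g : ℝ → ℝ) (u v : ℝ), u < v → IntegrableOn g (Set.Ioc u v) →
      (∀ y ∈ Set.Ioc u v, 0 ≤ g y) → (∀ y ∈ Set.Ioo u v, 0 < g y) →
      0 < ∫ y in Set.Ioc u v, g y := by
    intro g u v huv hgi hnn hpos
    rw [setIntegral_pos_iff_support_of_nonneg_ae
      ((ae_restrict_iff' measurableSet_Ioc).2 (ae_of_all _ hnn)) hgi]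
    calc (0 : ℝ≥0∞) < volume (Set.Ioo u v) := by
          rw [Real.volume_Ioo]; exact ENNReal.ofReal_pos.2 (sub_pos.2 huv)
      _ ≤ volume (Function.support g ∩ Set.Ioc u v) := by
          apply measure_mono
          intro y hy
          exact ⟨ne_of_gt (hpos y hy), hy.1, hy.2.le⟩
  have hFint' : Integrable (fun y => (μ₁ - y) * p₁ y) := by
    apply hFint.neg.congr
    filter_upwards with y
    simp only [Pi.neg_apply]
    ring
  have hWpos : ∀ θ ∈ Set.Ioo a₁ b₁, 0 < ∫ y in Set.Ioc a₁ θ, (μ₁ - y) * p₁ y := by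
    intro θ hθ
    by_cases hcase : θ ≤ μ₁
    · apply pos_aux _ _ _ hθ.1 hFint'.integrableOn
      · intro y hy
        have : y ≤ μ₁ := le_trans hy.2 hcase
        exact mul_nonneg (by linarith) (hp₁nn y)
      · intro y hy
        have hy1 : y ∈ Set.Ioo a₁ b₁ := ⟨hy.1, lt_trans hy.2 hθ.2⟩
        exact mul_pos (by linarith [hy.2]) (hp₁pos y hy1)
    · push_neg at hcase
      have hsplit : (∫ y in Set.Ioc a₁ θ, (μ₁ - y) * p₁ y)
          + (∫ y in Set.Ioc θ b₁, (μ₁ - y) * p₁ y) = 0 := by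
        rw [← setIntegral_union (Set.Ioc_disjoint_Ioc_of_le le_rfl) measurableSet_Ioc
          hFint'.integrableOn hFint'.integrableOn,
          Set.Ioc_union_Ioc_eq_Ioc hθ.1.le hθ.2.le, htot]
      have hpos2 : 0 < ∫ y in Set.Ioc θ b₁, (y - μ₁) * p₁ y := by
        apply pos_aux _ _ _ hθ.2 hFint.integrableOn
        · intro y hy
          exact mul_nonneg (by linarith [hy.1]) (hp₁nn y)
        · intro y hy
          exact mul_pos (by linarith [hy.1]) (hp₁pos y ⟨lt_trans hθ.1 hy.1, hy.2⟩)
      have hneg : ∫ y in Set.Ioc θ b₁, (μ₁ - y) * p₁ y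
          = -∫ y in Set.Ioc θ b₁, (y - μ₁) * p₁ y := by
        rw [← integral_neg]
        apply setIntegral_congr_fun measurableSet_Ioc
        intro y _
        ring
      linarith
  have hWG : ∀ θ : ℝ, (∫ y in Set.Ioc a₁ θ, (μ₁ - y) * p₁ y)
      = -∫ y in Set.Ioc a₁ θ, (y - μ₁) * p₁ y := by
    intro θ
    rw [← integral_neg]
    apply setIntegral_congr_fun measurableSet_Ioc
    intro y _
    ring
  have hGneg : ∀ θ ∈ Set.Ioo a₁ b₁, (∫ y in Set.Ioc a₁ θ, (y - μ₁) * p₁ y) < 0 := by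
    intro θ hθ
    have := hWpos θ hθ
    rw [hWG θ] at this
    linarith
  -- instantiating conditions (ii) and (iii) with the identity function
  have hii' : IntegrableOn (fun θ =>
      ρ' θ * (∫ y in Set.Ioc a₁ θ, (y - μ₁) * p₁ y) + ρ θ * (θ - μ₁) * p₁ θ)
      (Set.Ioo a₂ b₂) := by
    have := hii (fun x : ℝ => x) hlip
    rw [hμ₁] at this
    exact this
  have hiii' :
      Tendsto (fun θ => ρ θ * ∫ y in Set.Ioc a₁ θ, (y - μ₁) * p₁ y)
        (nhdsWithin a₂ (Set.Ioi a₂)) (nhds 0) ∧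
      Tendsto (fun θ => ρ θ * ∫ y in Set.Ioc a₁ θ, (y - μ₁) * p₁ y)
        (nhdsWithin b₂ (Set.Iio b₂)) (nhds 0) := by
    have := hiii (fun x : ℝ => x) hlip
    rw [hμ₁] at this
    exact this
  have hρf2 : IntegrableOn (fun θ => ρ θ * ((θ - μ₁) * p₁ θ)) (Set.Ioo a₂ b₂) := by
    apply hi.congr
    filter_upwards with θ
    ring
  have hρ'G : IntegrableOn (fun θ => ρ' θ * ∫ y in Set.Ioc a₁ θ, (y - μ₁) * p₁ y)
      (Set.Ioo a₂ b₂) := by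
    have h2 : IntegrableOn (fun θ => ρ θ * (θ - μ₁) * p₁ θ) (Set.Ioo a₂ b₂) := by
      apply hi.congr
      filter_upwards with θ
      ring
    apply (hii'.sub h2).congr
    filter_upwards with θ
    simp only [Pi.sub_apply]
    ring
  have hdG : IntegrableOn (fun θ => deriv ρ θ * ∫ y in Set.Ioc a₁ θ, (y - μ₁) * p₁ y)
      (Set.Ioo a₂ b₂) := by
    apply hρ'G.congr_fun _ measurableSet_Ioo
    intro θ hθ
    simp only
    rw [(hρdiff θ hθ).deriv]
  -- continuity of the primitive G on Ici a₁
  have hGcont : ContinuousOn (fun θ => ∫ y in Set.Ioc a₁ θ, (y - μ₁) * p₁ y)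
      (Set.Ici a₁) := by
    have hc0 : Continuous fun θ => ∫ y in a₁..θ, (y - μ₁) * p₁ y :=
      hFint.continuous_primitive a₁
    apply hc0.continuousOn.congr
    intro θ hθ
    exact (intervalIntegral.integral_of_le hθ).symm
  -- deriv ρ is integrable on compact subintervals of I₂
  have hderiv_int : ∀ s t : ℝ, a₂ < s → t < b₂ → s ≤ t →
      IntegrableOn (deriv ρ) (Set.Ioc s t) := by
    intro s t hs ht hst
    have hsub2 : Set.Icc s t ⊆ Set.Ioo a₂ b₂ :=
      fun x hx => ⟨lt_of_lt_of_le hs hx.1, lt_of_le_of_lt hx.2 ht⟩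
    have hsub1 : Set.Icc s t ⊆ Set.Ioo a₁ b₁ := fun x hx => hnested (hsub2 hx)
    obtain ⟨θ₀, hθ₀mem, hθ₀max⟩ := isCompact_Icc.exists_isMaxOn
      (Set.nonempty_Icc.2 hst)
      (hGcont.mono (fun x hx => le_of_lt (hnested (hsub2 hx)).1))
    have hδ : 0 < -(∫ y in Set.Ioc a₁ θ₀, (y - μ₁) * p₁ y) := by
      have := hGneg θ₀ (hsub1 hθ₀mem)
      linarith
    set δ := -(∫ y in Set.Ioc a₁ θ₀, (y - μ₁) * p₁ y) with hδdef
    apply Integrable.mono'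
      (((hdG.mono_set (fun x hx => hsub2 ⟨hx.1.le, hx.2⟩)).abs).const_mul (1/δ))
      ((measurable_deriv ρ).aestronglyMeasurable)
    rw [ae_restrict_iff' measurableSet_Ioc]
    apply ae_of_all
    intro θ hθ
    have hmax := hθ₀max ⟨hθ.1.le, hθ.2⟩
    have hGθ : (∫ y in Set.Ioc a₁ θ, (y - μ₁) * p₁ y) ≤ -δ := by
      simpa [hδdef] using hmax
    have habs : δ ≤ |∫ y in Set.Ioc a₁ θ, (y - μ₁) * p₁ y| := by
      rw [abs_of_neg (by linarith : (∫ y in Set.Ioc a₁ θ, (y - μ₁) * p₁ y) < 0)]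
      linarith
    rw [Real.norm_eq_abs]
    calc |deriv ρ θ| = (1/δ) * (|deriv ρ θ| * δ) := by field_simp
      _ ≤ (1/δ) * (|deriv ρ θ| * |∫ y in Set.Ioc a₁ θ, (y - μ₁) * p₁ y|) := by
          apply mul_le_mul_of_nonneg_left _ (by positivity)
          exact mul_le_mul_of_nonneg_left habs (abs_nonneg _)
      _ = (1/δ) * |deriv ρ θ * ∫ y in Set.Ioc a₁ θ, (y - μ₁) * p₁ y| := by
          rw [abs_mul]
  -- the exhausting sequence of compact subintervals
  set e : ℕ → ℝ := fun n => (b₂ - a₂) / (2 * ((n : ℝ) + 1)) with he_def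
  have hba : 0 < b₂ - a₂ := sub_pos.2 hI₂
  have hepos : ∀ n : ℕ, 0 < e n := by
    intro n
    apply div_pos hba
    positivity
  have hehalf : ∀ n : ℕ, e n ≤ (b₂ - a₂) / 2 := by
    intro n
    rw [he_def]
    apply div_le_div_of_nonneg_left hba.le two_pos
    have : (0:ℝ) ≤ (n:ℝ) := Nat.cast_nonneg n
    linarith
  have heanti : ∀ n m : ℕ, n ≤ m → e m ≤ e n := by
    intro n m hnm
    rw [he_def]
    apply div_le_div_of_nonneg_left hba.le (by positivity)
    have : (n:ℝ) ≤ (m:ℝ) := Nat.cast_le.2 hnm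
    linarith
  have he0 : Tendsto e atTop (nhds 0) := by
    apply Tendsto.div_atTop (tendsto_const_nhds)
    apply Tendsto.const_mul_atTop two_pos
    exact tendsto_atTop_add_const_right atTop 1 tendsto_natCast_atTop_atTop
  set u : ℕ → ℝ := fun n => a₂ + e n with hu_def
  set v : ℕ → ℝ := fun n => b₂ - e n with hv_def
  have humem : ∀ n, u n ∈ Set.Ioo a₂ b₂ := by
    intro n
    constructor
    · exact lt_add_of_pos_right _ (hepos n)
    · have := hehalf n
      rw [hu_def]
      simp only
      linarith
  have hvmem : ∀ n, v n ∈ Set.Ioo a₂ b₂ := by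
    intro n
    constructor
    · have := hehalf n
      rw [hv_def]
      simp only
      linarith
    · exact sub_lt_self _ (hepos n)
  have huv : ∀ n, u n ≤ v n := by
    intro n
    have := hehalf n
    rw [hu_def, hv_def]
    simp only
    linarith
  have hulim : Tendsto u atTop (nhdsWithin a₂ (Set.Ioi a₂)) := by
    apply tendsto_nhdsWithin_of_tendsto_nhds_of_eventually_within
    · have := tendsto_const_nhds (x := a₂) (f := atTop (α := ℕ)) |>.add he0
      simpa using this
    · exact Eventually.of_forall fun n => (humem n).1
  have hvlim : Tendsto v atTop (nhdsWithin b₂ (Set.Iio b₂)) := by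
    apply tendsto_nhdsWithin_of_tendsto_nhds_of_eventually_within
    · have := tendsto_const_nhds (x := b₂) (f := atTop (α := ℕ)) |>.sub he0
      simpa using this
    · exact Eventually.of_forall fun n => (hvmem n).2
  have hUnion : (⋃ n, Set.Ioc (u n) (v n)) = Set.Ioo a₂ b₂ := by
    ext θ
    simp only [Set.mem_iUnion, Set.mem_Ioc, Set.mem_Ioo]
    constructor
    · rintro ⟨n, h1, h2⟩
      exact ⟨lt_trans (humem n).1 h1, lt_of_le_of_lt h2 (hvmem n).2⟩
    · rintro ⟨h1, h2⟩
      have hm : 0 < min (θ - a₂) (b₂ - θ) := lt_min (by linarith) (by linarith)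
      obtain ⟨N, hN⟩ := exists_nat_gt ((b₂ - a₂) / (2 * min (θ - a₂) (b₂ - θ)))
      have heN : e N < min (θ - a₂) (b₂ - θ) := by
        rw [he_def]
        simp only
        rw [div_lt_iff₀ (by positivity)]
        rw [div_lt_iff₀ (by positivity)] at hN
        have hNc : (0:ℝ) ≤ (N:ℝ) := Nat.cast_nonneg N
        nlinarith [hN, hm]
      refine ⟨N, ?_, ?_⟩
      · have : e N < θ - a₂ := lt_of_lt_of_le heN (min_le_left _ _)
        rw [hu_def]; simp only; linarith
      · have : e N < b₂ - θ := lt_of_lt_of_le heN (min_le_right _ _)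
        rw [hv_def]; simp only; linarith
  have hmonoS : Monotone (fun n => Set.Ioc (u n) (v n)) := by
    intro n m hnm
    apply Set.Ioc_subset_Ioc
    · rw [hu_def]; simp only; linarith [heanti n m hnm]
    · rw [hv_def]; simp only; linarith [heanti n m hnm]
  -- apply the integration by parts identity on each compact subinterval
  have Hn : ∀ n, ∫ θ in Set.Ioc (u n) (v n),
      (deriv ρ θ * (∫ y in Set.Ioc a₁ θ, (y - μ₁) * p₁ y) + ρ θ * ((θ - μ₁) * p₁ θ))
      = ρ (v n) * (∫ y in Set.Ioc a₁ (v n), (y - μ₁) * p₁ y)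
        - ρ (u n) * (∫ y in Set.Ioc a₁ (u n), (y - μ₁) * p₁ y) := by
    intro n
    have hIccsub : Set.Icc (u n) (v n) ⊆ Set.Ioo a₂ b₂ := fun x hx =>
      ⟨lt_of_lt_of_le (humem n).1 hx.1, lt_of_le_of_lt hx.2 (hvmem n).2⟩
    exact my_parts ρ (fun y => (y - μ₁) * p₁ y) a₁ (u n) (v n)
      (le_trans ha₁₂ (humem n).1.le) (huv n)
      (fun x hx => by
        have h := hρdiff x (hIccsub hx)
        rw [h.deriv]
        exact h)
      (hderiv_int (u n) (v n) (humem n).1 (hvmem n).2 (huv n))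
      hFint
      (hρf2.mono_set (fun x hx => hIccsub ⟨hx.1.le, hx.2⟩))
      (hdG.mono_set (fun x hx => hIccsub ⟨hx.1.le, hx.2⟩))
  -- pass to the limit
  have hcombint : IntegrableOn (fun θ =>
      deriv ρ θ * (∫ y in Set.Ioc a₁ θ, (y - μ₁) * p₁ y) + ρ θ * ((θ - μ₁) * p₁ θ))
      (Set.Ioo a₂ b₂) := hdG.add hρf2
  have hlhs : Tendsto (fun n => ∫ θ in Set.Ioc (u n) (v n),
      (deriv ρ θ * (∫ y in Set.Ioc a₁ θ, (y - μ₁) * p₁ y) + ρ θ * ((θ - μ₁) * p₁ θ)))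
      atTop (nhds (∫ θ in Set.Ioo a₂ b₂,
      (deriv ρ θ * (∫ y in Set.Ioc a₁ θ, (y - μ₁) * p₁ y) + ρ θ * ((θ - μ₁) * p₁ θ)))) := by
    have := tendsto_setIntegral_of_monotone (fun n => measurableSet_Ioc) hmonoS
      (by rw [hUnion]; exact hcombint)
    rw [hUnion] at this
    exact this
  have hrhs : Tendsto (fun n =>
      ρ (v n) * (∫ y in Set.Ioc a₁ (v n), (y - μ₁) * p₁ y)
        - ρ (u n) * (∫ y in Set.Ioc a₁ (u n), (y - μ₁) * p₁ y)) atTop (nhds 0) := by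
    have h1 := hiii'.2.comp hvlim
    have h2 := hiii'.1.comp hulim
    have := h1.sub h2
    simpa using this
  have hzero : ∫ θ in Set.Ioo a₂ b₂,
      (deriv ρ θ * (∫ y in Set.Ioc a₁ θ, (y - μ₁) * p₁ y) + ρ θ * ((θ - μ₁) * p₁ θ)) = 0 :=
    tendsto_nhds_unique hlhs (hrhs.congr (fun n => (Hn n).symm))
  have hsplit : (∫ θ in Set.Ioo a₂ b₂, deriv ρ θ * ∫ y in Set.Ioc a₁ θ, (y - μ₁) * p₁ y)
      + (∫ θ in Set.Ioo a₂ b₂, ρ θ * ((θ - μ₁) * p₁ θ)) = 0 := by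
    rw [← integral_add hdG hρf2]
    exact hzero
  -- final algebra
  set S := ∫ θ in Set.Ioo a₂ b₂, ρ θ * p₁ θ with hS_def
  have hcS : c * S = 1 := by
    have h1 : (1:ℝ) = ∫ θ, p₂ θ := hp₂prob.symm
    have h2 : ∫ θ, p₂ θ = ∫ θ in Set.Ioo a₂ b₂, p₂ θ :=
      (setIntegral_eq_integral_of_forall_compl_eq_zero hp₂zero).symm
    have h3 : ∫ θ in Set.Ioo a₂ b₂, p₂ θ = ∫ θ in Set.Ioo a₂ b₂, c * (ρ θ * p₁ θ) := by
      apply setIntegral_congr_fun measurableSet_Ioo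
      intro θ hθ
      simp only
      rw [hρ θ hθ]
      ring
    rw [h1, h2, h3, integral_const_mul]
  have hSval : S = 1 / c := by
    field_simp
    linarith [hcS]
  have hSpos : 0 < S := by
    rw [hSval]
    positivity
  have hμ₂S : μ₂ = c * ∫ θ in Set.Ioo a₂ b₂, θ * (ρ θ * p₁ θ) := by
    have h1 : μ₂ = ∫ θ, θ * p₂ θ := hμ₂.symm
    have h2 : ∫ θ, θ * p₂ θ = ∫ θ in Set.Ioo a₂ b₂, θ * p₂ θ := by
      apply (setIntegral_eq_integral_of_forall_compl_eq_zero _).symm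
      intro θ hθ
      rw [hp₂zero θ hθ, mul_zero]
    have h3 : ∫ θ in Set.Ioo a₂ b₂, θ * p₂ θ
        = ∫ θ in Set.Ioo a₂ b₂, c * (θ * (ρ θ * p₁ θ)) := by
      apply setIntegral_congr_fun measurableSet_Ioo
      intro θ hθ
      simp only
      rw [hρ θ hθ]
      ring
    rw [h1, h2, h3, integral_const_mul]
  have hθρp₁int : IntegrableOn (fun θ => θ * (ρ θ * p₁ θ)) (Set.Ioo a₂ b₂) := by
    apply IntegrableOn.congr_fun ((hμ₂int.integrableOn).const_mul (1/c)) _ measurableSet_Ioo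
    intro θ hθ
    simp only
    rw [hρ θ hθ]
    field_simp
  have hρp₁int : IntegrableOn (fun θ => ρ θ * p₁ θ) (Set.Ioo a₂ b₂) := by
    apply IntegrableOn.congr_fun ((hp₂int.integrableOn).const_mul (1/c)) _ measurableSet_Ioo
    intro θ hθ
    simp only
    rw [hρ θ hθ]
    field_simp
  have hM : ∫ θ in Set.Ioo a₂ b₂, ρ θ * ((θ - μ₁) * p₁ θ)
      = (∫ θ in Set.Ioo a₂ b₂, θ * (ρ θ * p₁ θ)) - μ₁ * S := by
    have h1 : ∫ θ in Set.Ioo a₂ b₂, ρ θ * ((θ - μ₁) * p₁ θ)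
        = ∫ θ in Set.Ioo a₂ b₂, (θ * (ρ θ * p₁ θ) - μ₁ * (ρ θ * p₁ θ)) := by
      apply setIntegral_congr_fun measurableSet_Ioo
      intro θ _
      ring
    rw [h1, integral_sub hθρp₁int (hρp₁int.const_mul μ₁), integral_const_mul]
  -- express T in terms of the integration by parts identity
  have hT : ∫ θ in Set.Ioo a₂ b₂, τ₁ θ * ρ' θ * p₁ θ
      = ∫ θ in Set.Ioo a₂ b₂, ρ θ * ((θ - μ₁) * p₁ θ) := by
    have h1 : ∫ θ in Set.Ioo a₂ b₂, τ₁ θ * ρ' θ * p₁ θ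
        = ∫ θ in Set.Ioo a₂ b₂, -(deriv ρ θ * ∫ y in Set.Ioc a₁ θ, (y - μ₁) * p₁ y) := by
      apply setIntegral_congr_fun measurableSet_Ioo
      intro θ hθ
      have hθ1 : θ ∈ Set.Ioo a₁ b₁ := hnested hθ
      simp only
      rw [hτ₁ θ hθ1, hWG θ, (hρdiff θ hθ).deriv]
      have hp : p₁ θ ≠ 0 := (hp₁pos θ hθ1).ne'
      field_simp
    rw [h1, integral_neg]
    linarith [hsplit]
  constructor
  · -- the identity for |μ₁ - μ₂|
    rw [hT, hM]
    have h4 : (∫ θ in Set.Ioo a₂ b₂, θ * (ρ θ * p₁ θ)) = μ₂ / c := by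
      rw [hμ₂S]
      field_simp
    rw [h4, hSval]
    have h5 : μ₂ / c - μ₁ * (1 / c) = (μ₂ - μ₁) / c := by
      field_simp
    rw [h5, abs_div, abs_of_pos hc, abs_sub_comm μ₂ μ₁]
    field_simp
  · -- Wasserstein lower bound
    unfold wassersteinDist
    apply le_iSup_of_le (fun x : ℝ => x)
    apply le_iSup_of_le hlip
    simp only
    rw [hμ₁, hμ₂]
end

section
/- Let $\Theta_1$ and $\Theta_2$ be real random variables with probability densities $p_1$ and $p_2$ supported on open intervals $I_1=(a_1,b_1)$ and $I_2=(a_2,b_2)$ with $I_2\subseteq I_1$, having finite means $\mu_1$ and $\mu_2$, and write $p_2(\theta)=c\,\rho(\theta)p_1(\theta)$ on $I_2$ where $\rho=p_2/p_1$ up to the normalizing constant $c>0$ and $\rho$ is differentiable on $I_2$. Assume conditions (i) $\mathrm{E}[(\Theta_1-\mu_1)\rho(\Theta_1)]<\infty$; (ii) for every Lipschitz-1 function $h$, the derivative of $\theta\mapsto\rho(\theta)\int_{a_1}^{\theta}(h(y)-\mathrm{E}[h(\Theta_1)])p_1(y)\,dy$ is integrable on $I_2$; (iii) for every Lipschitz-1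 function $h$, this product tends to $0$ as $\theta\to a_2$ and as $\theta\to b_2$. If moreover $\Theta_1$ has finite variance $\mathrm{Var}[\Theta_1]$ and $\rho'$ is bounded with supremum norm $\|\rho'\|_\infty$, then $d_W(P_1,P_2)\le \|\rho'\|_{\infty}\,\dfrac{\mathrm{Var}[\Theta_1]}{\mathrm{E}[\rho(\Theta_1)]}$. -/
open MeasureTheory Set Filter ENNReal
open Topology


namespace WAuxGL

lemma integrable_of_integral_one {p : ℝ → ℝ} (h : ∫ x, p x = 1) : Integrable p := by
  by_contra hn
  rw [integral_undef hn] at h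
  norm_num at h

lemma lip_mul_integrable {h p : ℝ → ℝ} (hl : LipschitzWith 1 h) (hp : Measurable p)
    (hpnn : ∀ x, 0 ≤ p x) (hpint : Integrable p) (hxp : Integrable (fun x => x * p x)) :
    Integrable (fun x => h x * p x) := by
  apply Integrable.mono' ((hpint.const_mul |h 0|).add hxp.abs)
  · exact (hl.continuous.measurable.mul hp).aestronglyMeasurable
  · filter_upwards with x
    have h1 : |h x| ≤ |h 0| + |x| := by
      have h2 := hl.dist_le_mul x 0
      rw [Real.dist_eq, Real.dist_eq, sub_zero, NNReal.coe_one, one_mul] at h2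
      have : |h x| ≤ |h x - h 0| + |h 0| := by
        calc |h x| = |(h x - h 0) + h 0| := by ring_nf
        _ ≤ |h x - h 0| + |h 0| := abs_add_le _ _
      linarith
    have hx : ‖h x * p x‖ = |h x| * p x := by
      rw [norm_mul, Real.norm_eq_abs, Real.norm_eq_abs, abs_of_nonneg (hpnn x)]
    rw [hx]
    calc |h x| * p x ≤ (|h 0| + |x|) * p x := mul_le_mul_of_nonneg_right h1 (hpnn x)
    _ = |h 0| * p x + |x| * p x := by ring
    _ ≤ |h 0| * p x + |x * p x| := by rw [abs_mul, abs_of_nonneg (hpnn x)]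
    _ = |h 0| * p x + |fun x => x * p x| x := rfl

lemma split_integral {F : ℝ → ℝ} {a b θ : ℝ} (hθ : θ ∈ Ioo a b)
    (hF : Integrable F) (hFz : ∀ x ∉ Ioo a b, F x = 0) :
    (∫ y in Ioc a θ, F y) + (∫ y in Ioo θ b, F y) = ∫ y, F y := by
  rw [← setIntegral_union
       (by simp [Set.disjoint_left]; intro x _ h2 h3; exact absurd h3 h2.not_gt)
       measurableSet_Ioo hF.integrableOn hF.integrableOn,
    Set.Ioc_union_Ioo_eq_Ioo hθ.1.le hθ.2,
    setIntegral_eq_integral_of_forall_compl_eq_zero hFz]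

lemma antitone_setIntegral_nonneg {p g : ℝ → ℝ} {a b θ m : ℝ} (hθ : θ ∈ Ioo a b)
    (hpnn : ∀ x, 0 ≤ p x) (hpzero : ∀ x ∉ Ioo a b, p x = 0)
    (hprob : ∫ x, p x = 1) (hg : Antitone g)
    (hint : Integrable (fun x => g x * p x))
    (hmdef : ∫ z, g z * p z = m) :
    0 ≤ ∫ y in Ioc a θ, (g y - m) * p y := by
  subst hmdef
  set m := ∫ z, g z * p z with hm
  have hpint : Integrable p := integrable_of_integral_one hprob
  have hFint : Integrable (fun y => (g y - m) * p y) := by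
    have := hint.sub (hpint.const_mul m)
    apply this.congr
    filter_upwards with x
    simp only [Pi.sub_apply]
    ring
  have hFz : ∀ x ∉ Ioo a b, (g x - m) * p x = 0 := by
    intro x hx; rw [hpzero x hx, mul_zero]
  have htot : ∫ y, (g y - m) * p y = 0 := by
    have : ∫ y, (g y - m) * p y = (∫ y, g y * p y) - m * ∫ y, p y := by
      rw [← integral_const_mul, ← integral_sub hint (hpint.const_mul m)]
      congr 1; funext y; ring
    rw [this, hprob, mul_one, hm, sub_self]
  have hsplit := split_integral hθ hFint hFz
  rw [htot] at hsplit
  have PA : (0:ℝ) ≤ ∫ y in Ioc a θ, p y :=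
    setIntegral_nonneg measurableSet_Ioc (fun y _ => hpnn y)
  have PB : (0:ℝ) ≤ ∫ y in Ioo θ b, p y :=
    setIntegral_nonneg measurableSet_Ioo (fun y _ => hpnn y)
  rcases le_total m (g θ) with hcase | hcase
  · have bound1 : (g θ - m) * ∫ y in Ioc a θ, p y ≤ ∫ y in Ioc a θ, (g y - m) * p y := by
      rw [← integral_const_mul]
      refine setIntegral_mono_on ((hpint.const_mul _).integrableOn) hFint.integrableOn
        measurableSet_Ioc ?_
      intro y hy
      exact mul_le_mul_of_nonneg_right (sub_le_sub_right (hg hy.2) m) (hpnn y)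
    exact le_trans (mul_nonneg (by linarith) PA) bound1
  · have bound2 : (m - g θ) * ∫ y in Ioo θ b, p y ≤ ∫ y in Ioo θ b, (m - g y) * p y := by
      rw [← integral_const_mul]
      refine setIntegral_mono_on ((hpint.const_mul _).integrableOn) ?_
        measurableSet_Ioo ?_
      · have : Integrable (fun y => (m - g y) * p y) := by
          apply ((hpint.const_mul m).sub hint).congr
          filter_upwards with x
          simp only [Pi.sub_apply]; ring
        exact this.integrableOn
      intro y hy
      exact mul_le_mul_of_nonneg_right (sub_le_sub_left (hg hy.1.le) m) (hpnn y)
    have heq : ∫ y in Ioo θ b, (m - g y) * p y = - ∫ y in Ioo θ b, (g y - m) * p y := by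
      rw [← integral_neg]; congr 1; funext y; ring
    rw [heq] at bound2
    have : (0:ℝ) ≤ - ∫ y in Ioo θ b, (g y - m) * p y :=
      le_trans (mul_nonneg (by linarith) PB) bound2
    linarith

lemma integral_by_parts {ρ ρ' f G : ℝ → ℝ} {u v : ℝ} (huv : u ≤ v)
    (hd : ∀ x ∈ Icc u v, HasDerivAt ρ (ρ' x) x)
    (hρ'meas : Measurable ρ') (hfmeas : Measurable f)
    (hρ'int : IntegrableOn ρ' (Ioc u v))
    (hf : Integrable f)
    (hG : ∀ s t : ℝ, u ≤ s → s ≤ t → t ≤ v → G t - G s = ∫ x in Ioc s t, f x)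
    (hρ'G : IntegrableOn (fun s => ρ' s * G s) (Ioc u v))
    (hρf : IntegrableOn (fun x => ρ x * f x) (Ioc u v)) :
    ∫ x in Ioc u v, (ρ' x * G x + ρ x * f x) = ρ v * G v - ρ u * G u := by
  have h1 : ∀ x, u ≤ x → x ≤ v → ∫ s in Ioc u x, ρ' s = ρ x - ρ u := by
    intro x hux hxv
    rw [← intervalIntegral.integral_of_le hux]
    apply intervalIntegral.integral_eq_sub_of_hasDerivAt
    · intro t ht
      rw [Set.uIcc_of_le hux] at ht
      exact hd t ⟨ht.1, ht.2.trans hxv⟩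
    · rw [intervalIntegrable_iff_integrableOn_Ioc_of_le hux]
      exact hρ'int.mono_set (Set.Ioc_subset_Ioc_right hxv)
  set K : ℝ → ℝ → ℝ := fun x s => ((Ioc u v).indicator f x) * ((Ioc u x).indicator ρ' s)
    with hK
  have hKint : Integrable (Function.uncurry K) (volume.prod volume) := by
    have hmeas : Measurable (Function.uncurry K) := by
      apply Measurable.mul
      · exact (hfmeas.indicator measurableSet_Ioc).comp measurable_fst
      · have hset : MeasurableSet {q : ℝ × ℝ | u < q.2 ∧ q.2 ≤ q.1} :=
          (measurableSet_lt measurable_const measurable_snd).inter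
            (measurableSet_le measurable_snd measurable_fst)
        have : (fun q : ℝ × ℝ => (Ioc u q.1).indicator ρ' q.2)
            = {q : ℝ × ℝ | u < q.2 ∧ q.2 ≤ q.1}.indicator (fun q => ρ' q.2) := by
          funext q
          by_cases hq : q.2 ∈ Ioc u q.1
          · rw [Set.indicator_of_mem hq,
              Set.indicator_of_mem
                (show q ∈ {q : ℝ × ℝ | u < q.2 ∧ q.2 ≤ q.1} by simpa [Set.mem_Ioc] using hq)]
          · rw [Set.indicator_of_notMem hq,
              Set.indicator_of_notMem
                (show q ∉ {q : ℝ × ℝ | u < q.2 ∧ q.2 ≤ q.1} by simpa [Set.mem_Ioc] using hq)]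
        rw [this]
        exact (hρ'meas.comp measurable_snd).indicator hset
    have hbound : Integrable (fun q : ℝ × ℝ =>
        ((Ioc u v).indicator (fun x => |f x|) q.1) * ((Ioc u v).indicator (fun s => |ρ' s|) q.2))
        (volume.prod volume) :=
      Integrable.mul_prod
        (IntegrableOn.integrable_indicator hf.abs.integrableOn measurableSet_Ioc)
        (IntegrableOn.integrable_indicator hρ'int.abs measurableSet_Ioc)
    apply hbound.mono' hmeas.aestronglyMeasurable
    filter_upwards with q
    rw [Real.norm_eq_abs, Function.uncurry]
    simp only [hK]
    by_cases hx : q.1 ∈ Ioc u v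
    · by_cases hs : q.2 ∈ Ioc u q.1
      · have hs' : q.2 ∈ Ioc u v := ⟨hs.1, hs.2.trans hx.2⟩
        rw [Set.indicator_of_mem hx, Set.indicator_of_mem hs, Set.indicator_of_mem hx,
          Set.indicator_of_mem hs', abs_mul]
      · rw [Set.indicator_of_notMem hs, mul_zero, abs_zero]
        apply mul_nonneg <;> exact Set.indicator_nonneg (fun y _ => abs_nonneg _) _
    · rw [Set.indicator_of_notMem hx, zero_mul, abs_zero]
      apply mul_nonneg <;> exact Set.indicator_nonneg (fun y _ => abs_nonneg _) _
  have hinner1 : ∀ x : ℝ, (∫ s, K x s)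
      = (Ioc u v).indicator (fun x => f x * (ρ x - ρ u)) x := by
    intro x
    by_cases hx : x ∈ Ioc u v
    · rw [Set.indicator_of_mem hx]
      simp only [hK, Set.indicator_of_mem hx]
      rw [integral_const_mul, integral_indicator measurableSet_Ioc, h1 x hx.1.le hx.2]
    · rw [Set.indicator_of_notMem hx]
      simp only [hK, Set.indicator_of_notMem hx, zero_mul, integral_zero]
  have hinner2 : ∀ s : ℝ, (∫ x, K x s)
      = (Ioc u v).indicator (fun s => (G v - G s) * ρ' s) s := by
    intro s
    by_cases hs : s ∈ Ioc u v
    · rw [Set.indicator_of_mem hs]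
      have hfun : (fun x => K x s) = (Icc s v).indicator (fun x => f x * ρ' s) := by
        funext x
        by_cases hx : x ∈ Icc s v
        · have hx1 : x ∈ Ioc u v := ⟨lt_of_lt_of_le hs.1 hx.1, hx.2⟩
          have hx2 : s ∈ Ioc u x := ⟨hs.1, hx.1⟩
          simp only [hK]
          rw [Set.indicator_of_mem hx1, Set.indicator_of_mem hx2, Set.indicator_of_mem hx]
        · simp only [hK]
          rcases not_and_or.mp (fun hx' => hx ⟨hx'.1, hx'.2⟩) with hxs | hxv
          · push_neg at hxs
            rw [Set.indicator_of_notMem (fun h : s ∈ Ioc u x => absurd h.2 (not_le.mpr hxs)),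
              mul_zero, Set.indicator_of_notMem hx]
          · push_neg at hxv
            rw [Set.indicator_of_notMem (fun h : x ∈ Ioc u v => absurd h.2 (not_le.mpr hxv)),
              zero_mul, Set.indicator_of_notMem hx]
      rw [hfun, integral_indicator measurableSet_Icc, integral_Icc_eq_integral_Ioc,
        integral_mul_const, ← hG s v hs.1.le hs.2 le_rfl]
    · rw [Set.indicator_of_notMem hs]
      have hfun : (fun x => K x s) = fun _ => (0:ℝ) := by
        funext x
        simp only [hK]
        by_cases hx : x ∈ Ioc u v
        · have : s ∉ Ioc u x := fun hsx => hs ⟨hsx.1, hsx.2.trans hx.2⟩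
          rw [Set.indicator_of_notMem this, mul_zero]
        · rw [Set.indicator_of_notMem hx, zero_mul]
      rw [hfun, integral_zero]
  have hswap := integral_integral_swap hKint
  have e1 : (∫ x : ℝ, ∫ s : ℝ, K x s) = ∫ x in Ioc u v, f x * (ρ x - ρ u) := by
    simp only [hinner1]
    exact integral_indicator measurableSet_Ioc
  have e2 : (∫ s : ℝ, ∫ x : ℝ, K x s) = ∫ s in Ioc u v, (G v - G s) * ρ' s := by
    simp only [hinner2]
    exact integral_indicator measurableSet_Ioc
  have key : (∫ x in Ioc u v, f x * (ρ x - ρ u)) = ∫ s in Ioc u v, (G v - G s) * ρ' s := by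
    rw [← e1, ← e2]; exact hswap
  have hint1 : IntegrableOn (fun x => f x * (ρ x - ρ u)) (Ioc u v) := by
    apply Integrable.congr (hρf.sub ((hf.const_mul (ρ u)).integrableOn))
    filter_upwards with x
    simp only [Pi.sub_apply]
    ring
  have split2 : (∫ x in Ioc u v, ρ x * f x)
      = ρ u * (G v - G u) + ∫ x in Ioc u v, f x * (ρ x - ρ u) := by
    have hpt : ∀ x : ℝ, ρ x * f x = ρ u * f x + f x * (ρ x - ρ u) := fun x => by ring
    simp only [hpt]
    rw [integral_add ((hf.const_mul (ρ u)).integrableOn) hint1, integral_const_mul,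
      ← hG u v le_rfl huv le_rfl]
  have split3 : (∫ s in Ioc u v, (G v - G s) * ρ' s)
      = G v * (ρ v - ρ u) - ∫ s in Ioc u v, ρ' s * G s := by
    have hpt : ∀ s : ℝ, (G v - G s) * ρ' s = G v * ρ' s - ρ' s * G s := fun s => by ring
    simp only [hpt]
    rw [integral_sub (hρ'int.const_mul (G v)) hρ'G, integral_const_mul, h1 v huv le_rfl]
  rw [integral_add hρ'G hρf, split2, key, split3]
  ring

lemma integral_tau {p : ℝ → ℝ} {a b μ : ℝ}
    (hpmeas : Measurable p) (hpzero : ∀ x ∉ Ioo a b, p x = 0)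
    (hprob : ∫ x, p x = 1) (hxp : Integrable (fun x => x * p x)) (hmean : ∫ x, x * p x = μ)
    (hvar : Integrable (fun x => (x - μ) ^ 2 * p x)) :
    ∫ θ in Ioo a b, (∫ y in Ioc a θ, (μ - y) * p y) = ∫ θ, (θ - μ) ^ 2 * p θ := by
  have hpint : Integrable p := integrable_of_integral_one hprob
  set r : ℝ → ℝ := fun y => (y - μ) * p y with hr
  have hrmeas : Measurable r := (measurable_id.sub measurable_const).mul hpmeas
  have hrint : Integrable r := by
    apply Integrable.congr (hxp.sub (hpint.const_mul μ))
    filter_upwards with x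
    simp only [Pi.sub_apply, hr]
    ring
  have hrz : ∀ x ∉ Ioo a b, r x = 0 := by
    intro x hx; simp only [hr, hpzero x hx, mul_zero]
  have hrtot : ∫ y, r y = 0 := by
    have : ∫ y, r y = (∫ y, y * p y) - μ * ∫ y, p y := by
      rw [← integral_const_mul, ← integral_sub hxp (hpint.const_mul μ)]
      congr 1; funext y; simp only [Pi.sub_apply, hr]; ring
    rw [this, hprob, hmean, mul_one, sub_self]
  have hcompl : ∀ θ ∈ Ioo a b, (∫ y in Ioc a θ, (μ - y) * p y) = ∫ y in Ioo θ b, r y := by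
    intro θ hθ
    have h1 : (∫ y in Ioc a θ, r y) + (∫ y in Ioo θ b, r y) = 0 := by
      rw [split_integral hθ hrint hrz, hrtot]
    have h2 : (∫ y in Ioc a θ, (μ - y) * p y) = - ∫ y in Ioc a θ, r y := by
      rw [← integral_neg]; congr 1; funext y; simp only [hr]; ring
    linarith
  rw [setIntegral_congr_fun measurableSet_Ioo (fun θ hθ => hcompl θ hθ)]
  set K : ℝ → ℝ → ℝ := fun θ y => ((Ioo a b).indicator (fun _ => (1:ℝ)) θ) *
    ((Ioo θ b).indicator r y) with hK
  have hKint : Integrable (Function.uncurry K) (volume.prod volume) := by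
    have hmeas : Measurable (Function.uncurry K) := by
      apply Measurable.mul
      · exact (measurable_const.indicator measurableSet_Ioo).comp measurable_fst
      · have hset : MeasurableSet {q : ℝ × ℝ | q.1 < q.2 ∧ q.2 < b} :=
          (measurableSet_lt measurable_fst measurable_snd).inter
            (measurableSet_lt measurable_snd measurable_const)
        have : (fun q : ℝ × ℝ => (Ioo q.1 b).indicator r q.2)
            = {q : ℝ × ℝ | q.1 < q.2 ∧ q.2 < b}.indicator (fun q => r q.2) := by
          funext q
          by_cases hq : q.2 ∈ Ioo q.1 b
          · rw [Set.indicator_of_mem hq,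
              Set.indicator_of_mem
                (show q ∈ {q : ℝ × ℝ | q.1 < q.2 ∧ q.2 < b} by simpa [Set.mem_Ioo] using hq)]
          · rw [Set.indicator_of_notMem hq,
              Set.indicator_of_notMem
                (show q ∉ {q : ℝ × ℝ | q.1 < q.2 ∧ q.2 < b} by simpa [Set.mem_Ioo] using hq)]
        rw [this]
        exact (hrmeas.comp measurable_snd).indicator hset
    have hbound : Integrable (fun q : ℝ × ℝ =>
        ((Ioo a b).indicator (fun _ => (1:ℝ)) q.1) * |r q.2|) (volume.prod volume) :=
      Integrable.mul_prod
        (IntegrableOn.integrable_indicator ((integrableOn_const_iff).mpr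
          (Or.inr (by rw [Real.volume_Ioo]; exact ofReal_lt_top))) measurableSet_Ioo)
        hrint.abs
    apply hbound.mono' hmeas.aestronglyMeasurable
    filter_upwards with q
    rw [Real.norm_eq_abs, Function.uncurry]
    simp only [hK]
    by_cases hθ' : q.1 ∈ Ioo a b
    · rw [Set.indicator_of_mem hθ', one_mul, one_mul]
      by_cases hy : q.2 ∈ Ioo q.1 b
      · rw [Set.indicator_of_mem hy]
      · rw [Set.indicator_of_notMem hy, abs_zero]
        exact abs_nonneg _
    · rw [Set.indicator_of_notMem hθ', zero_mul, abs_zero, zero_mul]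
  have hinner1 : ∀ θ, (∫ y, K θ y) = (Ioo a b).indicator (fun θ => ∫ y in Ioo θ b, r y) θ := by
    intro θ
    by_cases hθ' : θ ∈ Ioo a b
    · rw [Set.indicator_of_mem hθ']
      simp only [hK, Set.indicator_of_mem hθ', one_mul]
      exact integral_indicator measurableSet_Ioo
    · rw [Set.indicator_of_notMem hθ']
      simp only [hK, Set.indicator_of_notMem hθ', zero_mul, integral_zero]
  have hinner2 : ∀ y, (∫ θ, K θ y) = (y - a) * r y := by
    intro y
    by_cases hy : y ∈ Ioo a b
    · have hfun : (fun θ => K θ y) = (Ioo a y).indicator (fun _ => r y) := by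
        funext θ
        by_cases hθ' : θ ∈ Ioo a y
        · have h1 : θ ∈ Ioo a b := ⟨hθ'.1, hθ'.2.trans hy.2⟩
          have h2 : y ∈ Ioo θ b := ⟨hθ'.2, hy.2⟩
          simp only [hK]
          rw [Set.indicator_of_mem h1, Set.indicator_of_mem h2, one_mul,
            Set.indicator_of_mem hθ']
        · simp only [hK]
          rw [Set.indicator_of_notMem hθ']
          by_cases h1 : θ ∈ Ioo a b
          · have h2 : y ∉ Ioo θ b := fun hc => hθ' ⟨h1.1, hc.1⟩
            rw [Set.indicator_of_notMem h2, mul_zero]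
          · rw [Set.indicator_of_notMem h1, zero_mul]
      rw [hfun, integral_indicator measurableSet_Ioo, setIntegral_const, smul_eq_mul,
        Real.volume_real_Ioo, max_eq_left (by linarith [hy.1] : (0:ℝ) ≤ y - a)]
    · have hry : r y = 0 := hrz y hy
      have hfun : (fun θ => K θ y) = fun _ => (0:ℝ) := by
        funext θ
        simp only [hK]
        by_cases h2 : y ∈ Ioo θ b
        · rw [Set.indicator_of_mem h2, hry, mul_zero]
        · rw [Set.indicator_of_notMem h2, mul_zero]
      rw [hfun, integral_zero, hry, mul_zero]
  have e1 : (∫ θ in Ioo a b, (∫ y in Ioo θ b, r y)) = ∫ y, (y - a) * r y := by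
    rw [← integral_indicator measurableSet_Ioo]
    calc ∫ θ, (Ioo a b).indicator (fun θ => ∫ y in Ioo θ b, r y) θ
        = ∫ θ, ∫ y, K θ y := by simp only [hinner1]
      _ = ∫ y, ∫ θ, K θ y := integral_integral_swap hKint
      _ = ∫ y, (y - a) * r y := by simp only [hinner2]
  rw [e1]
  have hpt : ∀ y : ℝ, (y - a) * r y = (y - μ) ^ 2 * p y + (μ - a) * r y := by
    intro y; simp only [hr]; ring
  simp only [hpt]
  rw [integral_add hvar (hrint.const_mul _), integral_const_mul, hrtot, mul_zero, add_zero]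

end WAuxGL

open WAuxGL


/-- Second upper bound of Ghaderinezhad–Ley (2019): if `Θ₁` has finite variance and `ρ'`
is bounded, then `d_W(P₁,P₂) ≤ ‖ρ'‖_∞ Var[Θ₁] / E[ρ(Θ₁)]`. -/
theorem wasserstein_upper_bound_variance
    (a₁ b₁ a₂ b₂ : ℝ) (p₁ p₂ ρ ρ' : ℝ → ℝ) (c μ₁ μ₂ M : ℝ)
    -- nested supports
    (hnested : Set.Ioo a₂ b₂ ⊆ Set.Ioo a₁ b₁)
    (hI₂ : a₂ < b₂)
    -- `p₁` and `p₂` are probability densities supported on `I₁` and `I₂`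
    (hp₁meas : Measurable p₁) (hp₂meas : Measurable p₂)
    (hp₁pos : ∀ θ ∈ Set.Ioo a₁ b₁, 0 < p₁ θ)
    (hp₁zero : ∀ θ ∉ Set.Ioo a₁ b₁, p₁ θ = 0)
    (hp₂pos : ∀ θ ∈ Set.Ioo a₂ b₂, 0 < p₂ θ)
    (hp₂zero : ∀ θ ∉ Set.Ioo a₂ b₂, p₂ θ = 0)
    (hp₁prob : ∫ θ, p₁ θ = 1) (hp₂prob : ∫ θ, p₂ θ = 1)
    -- finite means `μ₁` and `μ₂`
    (hμ₁int : Integrable (fun θ => θ * p₁ θ)) (hμ₁ : ∫ θ, θ * p₁ θ = μ₁)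
    (hμ₂int : Integrable (fun θ => θ * p₂ θ)) (hμ₂ : ∫ θ, θ * p₂ θ = μ₂)
    -- `p₂ = c ρ p₁` on `I₂` where `ρ` is differentiable on `I₂` with derivative `ρ'`
    (hc : 0 < c)
    (hρ : ∀ θ ∈ Set.Ioo a₂ b₂, p₂ θ = c * ρ θ * p₁ θ)
    (hρdiff : ∀ θ ∈ Set.Ioo a₂ b₂, HasDerivAt ρ (ρ' θ) θ)
    -- condition (i): `E[(Θ₁ - μ₁) ρ(Θ₁)] < ∞`
    (hi : IntegrableOn (fun θ => (θ - μ₁) * ρ θ * p₁ θ) (Set.Ioo a₂ b₂))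
    -- condition (ii): integrability on `I₂` of the derivative of
    -- `θ ↦ ρ(θ) ∫_{a₁}^θ (h(y) - E[h(Θ₁)]) p₁(y) dy`
    (hii : ∀ h : ℝ → ℝ, LipschitzWith 1 h →
      IntegrableOn (fun θ =>
          ρ' θ * (∫ y in Set.Ioc a₁ θ, (h y - ∫ z, h z * p₁ z) * p₁ y)
          + ρ θ * (h θ - ∫ z, h z * p₁ z) * p₁ θ)
        (Set.Ioo a₂ b₂))
    -- condition (iii): the boundary terms vanish
    (hiii : ∀ h : ℝ → ℝ, LipschitzWith 1 h →
      Tendsto (fun θ => ρ θ * ∫ y in Set.Ioc a₁ θ, (h y - ∫ z, h z * p₁ z) * p₁ y)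
        (nhdsWithin a₂ (Set.Ioi a₂)) (nhds 0) ∧
      Tendsto (fun θ => ρ θ * ∫ y in Set.Ioc a₁ θ, (h y - ∫ z, h z * p₁ z) * p₁ y)
        (nhdsWithin b₂ (Set.Iio b₂)) (nhds 0))
    -- `Θ₁` has finite variance
    (hVarInt : Integrable (fun θ => (θ - μ₁) ^ 2 * p₁ θ))
    -- `ρ'` is bounded, with supremum norm `M = ‖ρ'‖_∞`
    (hM : IsLUB ((fun θ => |ρ' θ|) '' Set.Ioo a₂ b₂) M) :
    -- conclusion: `d_W(P₁,P₂) ≤ ‖ρ'‖_∞ Var[Θ₁] / E[ρ(Θ₁)]`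
    wassersteinDist p₁ p₂ ≤
      ENNReal.ofReal (M * (∫ θ, (θ - μ₁) ^ 2 * p₁ θ) /
        (∫ θ in Set.Ioo a₂ b₂, ρ θ * p₁ θ)) := by
  unfold wassersteinDist
  obtain ⟨ha, hb⟩ := (Set.Ioo_subset_Ioo_iff hI₂).mp hnested
  have hp₁nn : ∀ x, 0 ≤ p₁ x := by
    intro x
    by_cases hx : x ∈ Set.Ioo a₁ b₁
    · exact (hp₁pos x hx).le
    · rw [hp₁zero x hx]
  have hp₂nn : ∀ x, 0 ≤ p₂ x := by
    intro x
    by_cases hx : x ∈ Set.Ioo a₂ b₂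
    · exact (hp₂pos x hx).le
    · rw [hp₂zero x hx]
  have hp₁int : Integrable p₁ := integrable_of_integral_one hp₁prob
  have hp₂int : Integrable p₂ := integrable_of_integral_one hp₂prob
  have hfinvol : ∀ u v : ℝ, volume (Set.Ioo u v) < ⊤ := by
    intro u v; rw [Real.volume_Ioo]; exact ofReal_lt_top
  set E := ∫ θ in Set.Ioo a₂ b₂, ρ θ * p₁ θ with hE
  have hρp₁int : IntegrableOn (fun θ => ρ θ * p₁ θ) (Set.Ioo a₂ b₂) := by
    apply Integrable.congr ((hp₂int.const_mul c⁻¹).integrableOn)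
    filter_upwards [ae_restrict_mem measurableSet_Ioo] with θ hθ
    rw [hρ θ hθ]
    field_simp
  have hI₂p₂ : ∫ θ in Set.Ioo a₂ b₂, p₂ θ = 1 := by
    rw [setIntegral_eq_integral_of_forall_compl_eq_zero hp₂zero, hp₂prob]
  have hcE : c * E = 1 := by
    rw [hE, ← integral_const_mul, ← hI₂p₂]
    apply setIntegral_congr_fun measurableSet_Ioo
    intro θ hθ
    rw [hρ θ hθ]
    ring
  have hEpos : 0 < E := by nlinarith
  have hM0 : 0 ≤ M := by
    have hmem : (a₂ + b₂) / 2 ∈ Set.Ioo a₂ b₂ := ⟨by linarith, by linarith⟩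
    exact le_trans (abs_nonneg _) (hM.1 ⟨_, hmem, rfl⟩)
  have hMb : ∀ θ ∈ Set.Ioo a₂ b₂, |ρ' θ| ≤ M := fun θ hθ => hM.1 ⟨θ, hθ, rfl⟩
  set Var := ∫ θ, (θ - μ₁) ^ 2 * p₁ θ with hVar
  have hVar0 : 0 ≤ Var := integral_nonneg fun θ => mul_nonneg (by positivity) (hp₁nn θ)
  set q : ℝ → ℝ := fun y => (μ₁ - y) * p₁ y with hq
  have hqint : Integrable q := by
    apply Integrable.congr ((hp₁int.const_mul μ₁).sub hμ₁int)
    filter_upwards with x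
    simp only [Pi.sub_apply, hq]
    ring
  set τ : ℝ → ℝ := fun θ => ∫ y in Set.Ioc a₁ θ, q y with hτ
  have hτnn : ∀ θ ∈ Set.Ioo a₁ b₁, 0 ≤ τ θ := by
    intro θ hθ
    have hmono : Antitone (fun y : ℝ => -y) := fun x y hxy => neg_le_neg hxy
    have hint : Integrable fun x : ℝ => -x * p₁ x := by
      apply Integrable.congr hμ₁int.neg
      filter_upwards with x
      simp only [Pi.neg_apply]
      ring
    have hmd : ∫ z : ℝ, -z * p₁ z = -μ₁ := by
      have : ∫ z : ℝ, -z * p₁ z = ∫ z : ℝ, -(z * p₁ z) := by congr 1; funext z; ring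
      rw [this, integral_neg, hμ₁]
    have h0 := antitone_setIntegral_nonneg (g := fun y : ℝ => -y) (m := -μ₁) hθ hp₁nn
      hp₁zero hp₁prob hmono hint hmd
    refine le_trans h0 (le_of_eq ?_)
    apply setIntegral_congr_fun measurableSet_Ioc
    intro y _
    simp only [hq]
    ring
  have hQcont : Continuous fun θ => ∫ y in a₁..θ, q y := hqint.continuous_primitive a₁
  have hτeq : ∀ θ, a₁ ≤ θ → τ θ = ∫ y in a₁..θ, q y :=
    fun θ hθ' => (intervalIntegral.integral_of_le hθ').symm
  have hτbd : ∀ θ, |τ θ| ≤ ∫ y, |q y| := by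
    intro θ
    calc |τ θ| ≤ ∫ y in Set.Ioc a₁ θ, |q y| := by
          simpa [Real.norm_eq_abs] using
            norm_integral_le_integral_norm (μ := volume.restrict (Set.Ioc a₁ θ)) q
    _ ≤ ∫ y, |q y| := setIntegral_le_integral hqint.abs
          (by filter_upwards with y using abs_nonneg _)
  have hτint : IntegrableOn τ (Set.Ioo a₁ b₁) := by
    apply Integrable.mono' ((integrableOn_const_iff (C := ∫ y, |q y|)).mpr (Or.inr (hfinvol a₁ b₁)))
    · apply AEStronglyMeasurable.congr hQcont.aestronglyMeasurable.restrict
      filter_upwards [ae_restrict_mem measurableSet_Ioo] with θ hθ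
      exact (hτeq θ hθ.1.le).symm
    · filter_upwards with θ
      rw [Real.norm_eq_abs]
      exact hτbd θ
  -- main per-test-function bound
  have hmain : ∀ h : ℝ → ℝ, LipschitzWith 1 h →
      |(∫ θ, h θ * p₁ θ) - ∫ θ, h θ * p₂ θ| ≤ M * Var / E := by
    intro h hh
    have hlip : ∀ x y : ℝ, |h x - h y| ≤ |x - y| := by
      intro x y
      have := hh.dist_le_mul x y
      rwa [Real.dist_eq, Real.dist_eq, NNReal.coe_one, one_mul] at this
    set Eh := ∫ z, h z * p₁ z with hEh
    set f : ℝ → ℝ := fun y => (h y - Eh) * p₁ y with hf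
    set G : ℝ → ℝ := fun θ => ∫ y in Set.Ioc a₁ θ, f y with hG
    have hhp₁ : Integrable fun x => h x * p₁ x :=
      lip_mul_integrable hh hp₁meas hp₁nn hp₁int hμ₁int
    have hhp₂ : Integrable fun x => h x * p₂ x :=
      lip_mul_integrable hh hp₂meas hp₂nn hp₂int hμ₂int
    have hfint : Integrable f := by
      apply Integrable.congr (hhp₁.sub (hp₁int.const_mul Eh))
      filter_upwards with x
      simp only [Pi.sub_apply, hf]
      ring
    have hfmeas : Measurable f := (hh.continuous.measurable.sub measurable_const).mul hp₁meas
    have hGbd : ∀ θ, |G θ| ≤ ∫ y, |f y| := by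
      intro θ
      calc |G θ| ≤ ∫ y in Set.Ioc a₁ θ, |f y| := by
            simpa [Real.norm_eq_abs] using
              norm_integral_le_integral_norm (μ := volume.restrict (Set.Ioc a₁ θ)) f
      _ ≤ ∫ y, |f y| := setIntegral_le_integral hfint.abs
            (by filter_upwards with y using abs_nonneg _)
    have hPcont : Continuous fun θ => ∫ y in a₁..θ, f y := hfint.continuous_primitive a₁
    have hGeq : ∀ θ, a₁ ≤ θ → G θ = ∫ y in a₁..θ, f y :=
      fun θ hθ' => (intervalIntegral.integral_of_le hθ').symm
    -- |G| ≤ τ on I₁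
    have hGτ : ∀ θ ∈ Set.Ioo a₁ b₁, |G θ| ≤ τ θ := by
      intro θ hθ
      have hlow : 0 ≤ G θ + τ θ := by
        have hmono : Antitone fun y : ℝ => h y - y := by
          intro x y hxy
          have h1 := le_trans (le_abs_self (h y - h x)) (hlip y x)
          rw [abs_of_nonneg (by linarith : (0:ℝ) ≤ y - x)] at h1
          simp only
          linarith
        have hint : Integrable fun x : ℝ => (h x - x) * p₁ x := by
          apply Integrable.congr (hhp₁.sub hμ₁int)
          filter_upwards with x
          simp only [Pi.sub_apply]
          ring
        have hmd : ∫ z : ℝ, (h z - z) * p₁ z = Eh - μ₁ := by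
          have e : ∫ z : ℝ, (h z - z) * p₁ z = ∫ z : ℝ, (h z * p₁ z - z * p₁ z) := by
            congr 1; funext z; ring
          rw [e, integral_sub hhp₁ hμ₁int, hμ₁, hEh]
        have h0 := antitone_setIntegral_nonneg (g := fun y : ℝ => h y - y) (m := Eh - μ₁)
          hθ hp₁nn hp₁zero hp₁prob hmono hint hmd
        refine le_trans h0 (le_of_eq ?_)
        have e2 : G θ + τ θ = ∫ y in Set.Ioc a₁ θ, (f y + q y) :=
          (integral_add hfint.integrableOn hqint.integrableOn).symm
        rw [e2]
        apply setIntegral_congr_fun measurableSet_Ioc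
        intro y _
        simp only [hf, hq]
        ring
      have hup : 0 ≤ τ θ - G θ := by
        have hmono : Antitone fun y : ℝ => -(h y + y) := by
          intro x y hxy
          have h1 := le_trans (le_abs_self (h x - h y)) (hlip x y)
          rw [abs_sub_comm, abs_of_nonneg (by linarith : (0:ℝ) ≤ y - x)] at h1
          simp only
          linarith
        have hint : Integrable fun x : ℝ => -(h x + x) * p₁ x := by
          apply Integrable.congr (hhp₁.add hμ₁int).neg
          filter_upwards with x
          simp only [Pi.neg_apply, Pi.add_apply]
          ring
        have hmd : ∫ z : ℝ, -(h z + z) * p₁ z = -(Eh + μ₁) := by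
          have e : ∫ z : ℝ, -(h z + z) * p₁ z = ∫ z : ℝ, -(h z * p₁ z + z * p₁ z) := by
            congr 1; funext z; ring
          rw [e, integral_neg, integral_add hhp₁ hμ₁int, hμ₁, hEh]
        have h0 := antitone_setIntegral_nonneg (g := fun y : ℝ => -(h y + y)) (m := -(Eh + μ₁))
          hθ hp₁nn hp₁zero hp₁prob hmono hint hmd
        refine le_trans h0 (le_of_eq ?_)
        have e2 : τ θ - G θ = ∫ y in Set.Ioc a₁ θ, (q y - f y) :=
          (integral_sub hqint.integrableOn hfint.integrableOn).symm
        rw [e2]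
        apply setIntegral_congr_fun measurableSet_Ioc
        intro y _
        simp only [hf, hq]
        ring
      exact abs_le.mpr ⟨by linarith, by linarith⟩
    -- switch to the measurable derivative
    have hρd : ∀ θ ∈ Set.Ioo a₂ b₂, deriv ρ θ = ρ' θ := fun θ hθ => (hρdiff θ hθ).deriv
    have hdmeas : Measurable (deriv ρ) := measurable_deriv ρ
    set C₀ := ∫ y, |f y| with hC₀
    have hconst2 : IntegrableOn (fun _ : ℝ => M * C₀) (Set.Ioo a₂ b₂) :=
      (integrableOn_const_iff).mpr (Or.inr (hfinvol a₂ b₂))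
    have hGP_ae : (fun s => deriv ρ s * G s)
        =ᵐ[volume.restrict (Set.Ioo a₂ b₂)] fun s => deriv ρ s * ∫ y in a₁..s, f y := by
      filter_upwards [ae_restrict_mem measurableSet_Ioo] with θ hθ
      rw [hGeq θ (le_trans ha hθ.1.le)]
    have hdG : IntegrableOn (fun s => deriv ρ s * G s) (Set.Ioo a₂ b₂) := by
      apply Integrable.mono' hconst2
      · exact ((hdmeas.mul hPcont.measurable).aestronglyMeasurable.restrict).congr hGP_ae.symm
      · filter_upwards [ae_restrict_mem measurableSet_Ioo] with θ hθ
        rw [Real.norm_eq_abs, abs_mul, hρd θ hθ]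
        exact mul_le_mul (hMb θ hθ) (hGbd θ) (abs_nonneg _) hM0
    have hρ'G : IntegrableOn (fun s => ρ' s * G s) (Set.Ioo a₂ b₂) := by
      apply hdG.congr
      filter_upwards [ae_restrict_mem measurableSet_Ioo] with θ hθ
      rw [hρd θ hθ]
    have hρfI : IntegrableOn (fun θ => ρ θ * f θ) (Set.Ioo a₂ b₂) := by
      have hint : Integrable fun θ => c⁻¹ * ((h θ - Eh) * p₂ θ) := by
        apply Integrable.const_mul
        apply Integrable.congr (hhp₂.sub (hp₂int.const_mul Eh))
        filter_upwards with x
        simp only [Pi.sub_apply]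
        ring
      apply Integrable.congr hint.integrableOn
      filter_upwards [ae_restrict_mem measurableSet_Ioo] with θ hθ
      simp only [hf]
      rw [hρ θ hθ]
      field_simp
    -- approximating sequences
    set un : ℕ → ℝ := fun n => a₂ + (b₂ - a₂) / (n + 2) with hun
    set vn : ℕ → ℝ := fun n => b₂ - (b₂ - a₂) / (n + 2) with hvn
    have hd0 : ∀ n : ℕ, 0 < (b₂ - a₂) / ((n : ℝ) + 2) :=
      fun n => div_pos (by linarith) (by positivity)
    have hdle : ∀ n : ℕ, (b₂ - a₂) / ((n : ℝ) + 2) ≤ (b₂ - a₂) / 2 := by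
      intro n
      gcongr
      · linarith
    have hun_mem : ∀ n, un n ∈ Set.Ioo a₂ b₂ := by
      intro n
      constructor
      · simp only [hun]; linarith [hd0 n]
      · simp only [hun]; linarith [hd0 n, hdle n]
    have hvn_mem : ∀ n, vn n ∈ Set.Ioo a₂ b₂ := by
      intro n
      constructor
      · simp only [hvn]; linarith [hd0 n, hdle n]
      · simp only [hvn]; linarith [hd0 n]
    have huvle : ∀ n, un n ≤ vn n := by
      intro n
      simp only [hun, hvn]
      linarith [hdle n]
    have hdn_anti : ∀ m n : ℕ, m ≤ n →
        (b₂ - a₂) / ((n : ℝ) + 2) ≤ (b₂ - a₂) / ((m : ℝ) + 2) := by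
      intro m n hmn
      have hmn' : (m : ℝ) ≤ n := Nat.cast_le.mpr hmn
      have h2 : (0:ℝ) < (m : ℝ) + 2 := by positivity
      gcongr <;> linarith
    have hmono : Monotone fun n => Set.Ioc (un n) (vn n) := by
      intro m n hmn
      apply Set.Ioc_subset_Ioc
      · simp only [hun]; linarith [hdn_anti m n hmn]
      · simp only [hvn]; linarith [hdn_anti m n hmn]
    have hten : Tendsto (fun n : ℕ => (b₂ - a₂) / ((n : ℝ) + 2)) atTop (𝓝 0) :=
      Tendsto.div_atTop tendsto_const_nhds
        (tendsto_atTop_add_const_right atTop 2 tendsto_natCast_atTop_atTop)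
    have hunion : (⋃ n, Set.Ioc (un n) (vn n)) = Set.Ioo a₂ b₂ := by
      apply Set.Subset.antisymm
      · apply Set.iUnion_subset
        intro n x hx
        exact ⟨lt_of_lt_of_le (hun_mem n).1 hx.1.le, lt_of_le_of_lt hx.2 (hvn_mem n).2⟩
      · intro x hx
        have h1 : ∀ᶠ n : ℕ in atTop, (b₂ - a₂) / ((n : ℝ) + 2) < x - a₂ :=
          hten.eventually_lt_const (by linarith [hx.1])
        have h2 : ∀ᶠ n : ℕ in atTop, (b₂ - a₂) / ((n : ℝ) + 2) < b₂ - x :=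
          hten.eventually_lt_const (by linarith [hx.2])
        obtain ⟨n, hn1, hn2⟩ := (h1.and h2).exists
        refine Set.mem_iUnion.mpr ⟨n, ?_, ?_⟩
        · simp only [hun]; linarith
        · simp only [hvn]; linarith
    have hGadd : ∀ s t : ℝ, a₁ ≤ s → s ≤ t → G t - G s = ∫ x in Set.Ioc s t, f x := by
      intro s t h1 h2
      simp only [hG]
      rw [← Set.Ioc_union_Ioc_eq_Ioc h1 h2,
        setIntegral_union
          (by simp [Set.disjoint_left]; intro x _ h2 h3; exact absurd h3 h2.not_gt)
          measurableSet_Ioc hfint.integrableOn hfint.integrableOn]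
      ring
    have hdI : IntegrableOn (deriv ρ) (Set.Ioo a₂ b₂) := by
      apply Integrable.mono' ((integrableOn_const_iff (C := M)).mpr (Or.inr (hfinvol a₂ b₂)))
      · exact hdmeas.aestronglyMeasurable.restrict
      · filter_upwards [ae_restrict_mem measurableSet_Ioo] with θ hθ
        rw [Real.norm_eq_abs, hρd θ hθ]
        exact hMb θ hθ
    have hper : ∀ n : ℕ, (∫ x in Set.Ioc (un n) (vn n), (ρ' x * G x + ρ x * f x))
        = ρ (vn n) * G (vn n) - ρ (un n) * G (un n) := by
      intro n
      have hIccsub : Set.Icc (un n) (vn n) ⊆ Set.Ioo a₂ b₂ := fun x hx =>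
        ⟨lt_of_lt_of_le (hun_mem n).1 hx.1, lt_of_le_of_lt hx.2 (hvn_mem n).2⟩
      have hIocsub : Set.Ioc (un n) (vn n) ⊆ Set.Ioo a₂ b₂ := fun x hx =>
        hIccsub ⟨hx.1.le, hx.2⟩
      have hres := integral_by_parts (ρ := ρ) (ρ' := deriv ρ) (f := f) (G := G) (huvle n)
        (fun x hx => hρd x (hIccsub hx) ▸ hρdiff x (hIccsub hx))
        hdmeas hfmeas (hdI.mono_set hIocsub) hfint
        (fun s t hs hst _ => hGadd s t (le_trans ha (le_trans (hun_mem n).1.le hs)) hst)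
        (hdG.mono_set hIocsub) (hρfI.mono_set hIocsub)
      rw [← hres]
      apply setIntegral_congr_fun measurableSet_Ioc
      intro x hx
      dsimp only
      rw [hρd x (hIocsub hx)]
    have hsumI : IntegrableOn (fun θ => ρ' θ * G θ + ρ θ * f θ) (Set.Ioo a₂ b₂) := by
      apply Integrable.congr (hii h hh)
      filter_upwards with θ
      simp only [hf, hG, hEh]
      ring
    have hlim1 : Tendsto (fun n => ∫ x in Set.Ioc (un n) (vn n), (ρ' x * G x + ρ x * f x))
        atTop (𝓝 (∫ x in Set.Ioo a₂ b₂, (ρ' x * G x + ρ x * f x))) := by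
      have := tendsto_setIntegral_of_monotone (fun _ => measurableSet_Ioc) hmono
        (by rw [hunion]; exact hsumI)
      rwa [hunion] at this
    have hua : Tendsto un atTop (𝓝[>] a₂) := by
      apply tendsto_nhdsWithin_of_tendsto_nhds_of_eventually_within
      · have : Tendsto (fun n : ℕ => a₂ + (b₂ - a₂) / ((n : ℝ) + 2)) atTop (𝓝 (a₂ + 0)) :=
          tendsto_const_nhds.add hten
        simpa [hun] using this
      · filter_upwards with n
        exact (hun_mem n).1
    have hvb : Tendsto vn atTop (𝓝[<] b₂) := by
      apply tendsto_nhdsWithin_of_tendsto_nhds_of_eventually_within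
      · have : Tendsto (fun n : ℕ => b₂ - (b₂ - a₂) / ((n : ℝ) + 2)) atTop (𝓝 (b₂ - 0)) :=
          tendsto_const_nhds.sub hten
        simpa [hvn] using this
      · filter_upwards with n
        exact (hvn_mem n).2
    have hlim2 : Tendsto (fun n => ρ (vn n) * G (vn n) - ρ (un n) * G (un n))
        atTop (𝓝 0) := by
      have h1 := (hiii h hh).2.comp hvb
      have h2 := (hiii h hh).1.comp hua
      have := h1.sub h2
      simpa using this
    have hT0 : ∫ x in Set.Ioo a₂ b₂, (ρ' x * G x + ρ x * f x) = 0 :=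
      tendsto_nhds_unique (hlim1.congr fun n => hper n) hlim2
    have hsplitT := integral_add hρ'G hρfI
    have hS : (∫ θ in Set.Ioo a₂ b₂, ρ θ * f θ)
        = - ∫ θ in Set.Ioo a₂ b₂, ρ' θ * G θ := by
      rw [hsplitT] at hT0
      linarith
    have hIp₂ : (∫ θ, h θ * p₂ θ) = ∫ θ in Set.Ioo a₂ b₂, h θ * p₂ θ :=
      (setIntegral_eq_integral_of_forall_compl_eq_zero
        (fun x hx => by rw [hp₂zero x hx, mul_zero])).symm
    have hD : (∫ θ, h θ * p₁ θ) - (∫ θ, h θ * p₂ θ)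
        = -(c * ∫ θ in Set.Ioo a₂ b₂, ρ θ * f θ) := by
      have hdecomp : (∫ θ in Set.Ioo a₂ b₂, h θ * p₂ θ)
          = (∫ θ in Set.Ioo a₂ b₂, c * (ρ θ * f θ)) + ∫ θ in Set.Ioo a₂ b₂, Eh * p₂ θ := by
        rw [← integral_add (hρfI.const_mul c) ((hp₂int.const_mul Eh).integrableOn)]
        apply setIntegral_congr_fun measurableSet_Ioo
        intro θ hθ
        simp only [hf]
        rw [hρ θ hθ]
        ring
      rw [hIp₂, hdecomp, integral_const_mul, integral_const_mul, hI₂p₂, ← hEh]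
      ring
    have habs : |(∫ θ, h θ * p₁ θ) - ∫ θ, h θ * p₂ θ|
        = c * |∫ θ in Set.Ioo a₂ b₂, ρ' θ * G θ| := by
      rw [hD, hS, abs_neg, abs_mul, abs_of_pos hc, abs_neg]
    rw [habs]
    have hstep1 : |∫ θ in Set.Ioo a₂ b₂, ρ' θ * G θ|
        ≤ ∫ θ in Set.Ioo a₂ b₂, |ρ' θ| * |G θ| := by
      simpa [Real.norm_eq_abs, abs_mul] using
        norm_integral_le_integral_norm (μ := volume.restrict (Set.Ioo a₂ b₂))
          (fun θ => ρ' θ * G θ)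
    have hMτint : IntegrableOn (fun θ => M * τ θ) (Set.Ioo a₂ b₂) :=
      (hτint.mono_set hnested).const_mul M
    have habsint : IntegrableOn (fun θ => |ρ' θ| * |G θ|) (Set.Ioo a₂ b₂) := by
      apply Integrable.congr hρ'G.abs
      filter_upwards with θ
      rw [abs_mul]
    have hstep2 : (∫ θ in Set.Ioo a₂ b₂, |ρ' θ| * |G θ|)
        ≤ ∫ θ in Set.Ioo a₂ b₂, M * τ θ := by
      apply setIntegral_mono_on habsint hMτint measurableSet_Ioo
      intro θ hθ
      exact mul_le_mul (hMb θ hθ) (hGτ θ (hnested hθ)) (abs_nonneg _) hM0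
    have hstep4 : (∫ θ in Set.Ioo a₂ b₂, τ θ) ≤ ∫ θ in Set.Ioo a₁ b₁, τ θ := by
      apply setIntegral_mono_set hτint ?_ (HasSubset.Subset.eventuallyLE hnested)
      filter_upwards [ae_restrict_mem measurableSet_Ioo] with θ hθ using hτnn θ hθ
    have hstep5 : (∫ θ in Set.Ioo a₁ b₁, τ θ) = Var :=
      integral_tau hp₁meas hp₁zero hp₁prob hμ₁int hμ₁ hVarInt
    have hfinal : c * |∫ θ in Set.Ioo a₂ b₂, ρ' θ * G θ| ≤ c * (M * Var) := by
      apply mul_le_mul_of_nonneg_left _ hc.le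
      calc |∫ θ in Set.Ioo a₂ b₂, ρ' θ * G θ|
          ≤ ∫ θ in Set.Ioo a₂ b₂, M * τ θ := le_trans hstep1 hstep2
        _ = M * ∫ θ in Set.Ioo a₂ b₂, τ θ := integral_const_mul _ _
        _ ≤ M * Var := mul_le_mul_of_nonneg_left (hstep4.trans_eq hstep5) hM0
    have hEq : M * Var / E = c * (M * Var) := by
      rw [div_eq_iff hEpos.ne']
      linear_combination -(M * Var) * hcE
    rw [hEq]
    exact hfinal
  apply iSup_le
  intro h
  apply iSup_le
  intro hh
  exact ENNReal.ofReal_le_ofReal (hmain h hh)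
end

section
/- Let $\Theta_1$ and $\Theta_2$ be real random variables with probability densities $p_1$ and $p_2$ supported on open intervals $I_1=(a_1,b_1)$ and $I_2=(a_2,b_2)$ with $I_2\subseteq I_1$, having finite means, and write $p_2(\theta)=c\,\rho(\theta)p_1(\theta)$ on $I_2$ where $\rho=p_2/p_1$ up to the normalizing constant $c>0$ and $\rho$ is differentiable on $I_2$. Let $\tau_1$ be the Stein kernel of $p_1$. Assume conditions (i) $\mathrm{E}[(\Theta_1-\mu_1)\rho(\Theta_1)]<\infty$; (ii) for every Lipschitz-1 function $h$, the derivative of $\theta\mapsto\rho(\theta)\int_{a_1}^{\theta}(h(y)-\mathrm{E}[h(\Theta_1)])p_1(y)\,dy$ is integrable on $I_2$; (iii) for every Lipschitz-1 function $h$, this product tends to $0$ as $\theta\to a_2$ and as $\theta\to b_2$. If in addition $\rho$ is monotone (either increasing or decreasing) on $I_2$, then the Wasserstein-1 distance is attained exactly: $d_W(P_1,P_2)= \dfrac{\mathrm{E}[\tau_1(\Theta_1)\,|\rho'(\Theta_1)|]}{\mathrm{E}[\rho(\Theta_1)]}$. -/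
open MeasureTheory Set Filter ENNReal

lemma lip_abs_le {h : ℝ → ℝ} (hh : LipschitzWith 1 h) (x : ℝ) : |h x| ≤ |h 0| + |x| := by
  have hd := hh.dist_le_mul x 0
  rw [Real.dist_eq, Real.dist_eq, NNReal.coe_one, one_mul] at hd
  calc |h x| = |(h x - h 0) + h 0| := by ring_nf
    _ ≤ |h x - h 0| + |h 0| := abs_add_le _ _
    _ ≤ |h 0| + |x| := by simp at hd; linarith

lemma lip_mul_integrable {h p : ℝ → ℝ} (hh : LipschitzWith 1 h) (hp : Measurable p)
    (hpnn : ∀ x, 0 ≤ p x) (hpi : Integrable p) (hpm : Integrable (fun x => x * p x)) :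
    Integrable (fun x => h x * p x) := by
  have habs : Integrable (fun x => |x| * p x) := by
    have := hpm.abs
    refine this.congr (Filter.Eventually.of_forall fun x => ?_)
    simp [abs_mul, abs_of_nonneg (hpnn x)]
  have hg : Integrable (fun x => (|h 0| + |x|) * p x) := by
    have := (hpi.const_mul |h 0|).add habs
    refine this.congr (Filter.Eventually.of_forall fun x => ?_)
    simp; ring
  refine hg.mono ((hh.continuous.measurable.mul hp).aestronglyMeasurable) ?_
  refine Filter.Eventually.of_forall fun x => ?_
  have h1 : ‖h x * p x‖ = |h x| * p x := by
    rw [Real.norm_eq_abs, abs_mul, abs_of_nonneg (hpnn x)]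
  have h2 : ‖(|h 0| + |x|) * p x‖ = (|h 0| + |x|) * p x := by
    rw [Real.norm_eq_abs, abs_of_nonneg]
    have := hpnn x
    have := abs_nonneg x
    have := abs_nonneg (h 0)
    positivity
  rw [h1, h2]
  exact mul_le_mul_of_nonneg_right (lip_abs_le hh x) (hpnn x)

lemma setIntegral_Iic_eq_Ioc {f : ℝ → ℝ} {a θ : ℝ} (ha : a ≤ θ) (hf0 : ∀ x ≤ a, f x = 0)
    (hfi : IntegrableOn f (Iic θ)) : ∫ x in Iic θ, f x = ∫ x in Ioc a θ, f x := by
  have hs : Iic θ = Iic a ∪ Ioc a θ := (Iic_union_Ioc_eq_Iic ha).symm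
  rw [hs, setIntegral_union (Iic_disjoint_Ioc le_rfl) measurableSet_Ioc
    (hfi.mono_set (by rw [hs]; exact subset_union_left))
    (hfi.mono_set (by rw [hs]; exact subset_union_right)),
    setIntegral_eq_zero_of_forall_eq_zero (fun x (hx : x ∈ Iic a) => hf0 x hx), zero_add]

lemma abs_setintegral_le {μ : MeasureTheory.Measure ℝ} {f : ℝ → ℝ} :
    |∫ x, f x ∂μ| ≤ ∫ x, |f x| ∂μ := by
  simpa [Real.norm_eq_abs] using MeasureTheory.norm_integral_le_integral_norm (μ := μ) f

lemma g_bound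
    {a₁ b₁ μ₁ : ℝ} {p₁ h : ℝ → ℝ}
    (hp₁nn : ∀ x, 0 ≤ p₁ x)
    (hp₁zero : ∀ x ∉ Ioo a₁ b₁, p₁ x = 0)
    (hp₁int : Integrable p₁)
    (hp₁prob : ∫ x, p₁ x = 1)
    (hμ₁int : Integrable (fun x => x * p₁ x))
    (hμ₁ : ∫ x, x * p₁ x = μ₁)
    (hhp₁ : Integrable (fun x => h x * p₁ x))
    (hh : LipschitzWith 1 h)
    {θ : ℝ} (hθ : a₁ < θ) :
    |∫ y in Ioc a₁ θ, (h y - ∫ z, h z * p₁ z) * p₁ y| ≤ ∫ y in Ioc a₁ θ, (μ₁ - y) * p₁ y := by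
  set E1 := ∫ z, h z * p₁ z with hE1def
  set A := ∫ y in Iic θ, p₁ y with hA
  set B := ∫ y in Ioi θ, p₁ y with hB
  set HA := ∫ y in Iic θ, h y * p₁ y with hHA
  set HB := ∫ y in Ioi θ, h y * p₁ y with hHB
  set M1 := ∫ y in Iic θ, y * p₁ y with hM1
  set M2 := ∫ y in Ioi θ, y * p₁ y with hM2
  have split : ∀ {f : ℝ → ℝ}, Integrable f →
      (∫ y in Iic θ, f y) + (∫ y in Ioi θ, f y) = ∫ y, f y := by
    intro f hf
    have := integral_add_compl (measurableSet_Iic : MeasurableSet (Iic θ)) hf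
    rwa [compl_Iic] at this
  have hAB : A + B = 1 := (split hp₁int).trans hp₁prob
  have hM : M1 + M2 = μ₁ := (split hμ₁int).trans hμ₁
  have hH : HA + HB = E1 := split hhp₁
  have hw : Integrable (fun y => (h y - E1) * p₁ y) := by
    refine (hhp₁.sub (hp₁int.const_mul E1)).congr (Filter.Eventually.of_forall fun y => ?_)
    simp; ring
  have hzero' : ∀ x ≤ a₁, ∀ r : ℝ, r * p₁ x = 0 := fun x hx r => by
    rw [hp₁zero x (fun hmem => (not_lt.2 hx) hmem.1), mul_zero]
  have hg_ext : ∫ y in Ioc a₁ θ, (h y - E1) * p₁ y = ∫ y in Iic θ, (h y - E1) * p₁ y :=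
    (setIntegral_Iic_eq_Ioc hθ.le (fun x hx => hzero' x hx _) hw.integrableOn).symm
  have hgval : ∫ y in Iic θ, (h y - E1) * p₁ y = HA - E1 * A := by
    calc ∫ y in Iic θ, (h y - E1) * p₁ y
        = ∫ y in Iic θ, (h y * p₁ y - E1 * p₁ y) :=
          setIntegral_congr_fun measurableSet_Iic (fun y _ => by ring)
      _ = (∫ y in Iic θ, h y * p₁ y) - ∫ y in Iic θ, E1 * p₁ y :=
          integral_sub hhp₁.integrableOn ((hp₁int.const_mul E1).integrableOn)
      _ = HA - E1 * A := by rw [integral_const_mul]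
  -- inner bound
  have key : ∀ y ∈ Iic θ, |h y * B - HB| ≤ M2 - y * B := by
    intro y hy
    have hrep : ∫ z in Ioi θ, (h y - h z) * p₁ z = h y * B - HB := by
      calc ∫ z in Ioi θ, (h y - h z) * p₁ z
          = ∫ z in Ioi θ, (h y * p₁ z - h z * p₁ z) :=
            setIntegral_congr_fun measurableSet_Ioi (fun z _ => by ring)
        _ = (∫ z in Ioi θ, h y * p₁ z) - ∫ z in Ioi θ, h z * p₁ z :=
            integral_sub ((hp₁int.const_mul (h y)).integrableOn) hhp₁.integrableOn
        _ = h y * B - HB := by rw [integral_const_mul]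
    have hzyint : IntegrableOn (fun z => (z - y) * p₁ z) (Ioi θ) := by
      refine ((hμ₁int.sub (hp₁int.const_mul y)).integrableOn).congr_fun (fun z _ => by simp; ring)
        measurableSet_Ioi
    have hrep2 : ∫ z in Ioi θ, (z - y) * p₁ z = M2 - y * B := by
      calc ∫ z in Ioi θ, (z - y) * p₁ z
          = ∫ z in Ioi θ, (z * p₁ z - y * p₁ z) :=
            setIntegral_congr_fun measurableSet_Ioi (fun z _ => by ring)
        _ = (∫ z in Ioi θ, z * p₁ z) - ∫ z in Ioi θ, y * p₁ z :=
            integral_sub hμ₁int.integrableOn ((hp₁int.const_mul y).integrableOn)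
        _ = M2 - y * B := by rw [integral_const_mul]
    rw [← hrep, ← hrep2]
    calc |∫ z in Ioi θ, (h y - h z) * p₁ z| ≤ ∫ z in Ioi θ, |(h y - h z) * p₁ z| :=
          abs_setintegral_le
      _ ≤ ∫ z in Ioi θ, (z - y) * p₁ z := by
          refine integral_mono_of_nonneg (Filter.Eventually.of_forall fun z => abs_nonneg _)
            hzyint ?_
          refine ae_restrict_of_forall_mem measurableSet_Ioi fun z hz => ?_
          have hyz : y ≤ z := le_trans hy (le_of_lt hz)
          have habs : |h y - h z| ≤ z - y := by
            have hd := hh.dist_le_mul y z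
            rw [Real.dist_eq, Real.dist_eq, NNReal.coe_one, one_mul] at hd
            calc |h y - h z| ≤ |y - z| := hd
              _ = z - y := by rw [abs_sub_comm, abs_of_nonneg (by linarith)]
          calc |(h y - h z) * p₁ z| = |h y - h z| * p₁ z := by
                rw [abs_mul, abs_of_nonneg (hp₁nn z)]
            _ ≤ (z - y) * p₁ z := mul_le_mul_of_nonneg_right habs (hp₁nn z)
  -- outer computation
  have hout : ∫ y in Iic θ, p₁ y * (h y * B - HB) = B * HA - HB * A := by
    calc ∫ y in Iic θ, p₁ y * (h y * B - HB)
        = ∫ y in Iic θ, (B * (h y * p₁ y) - HB * p₁ y) :=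
          setIntegral_congr_fun measurableSet_Iic (fun y _ => by ring)
      _ = (∫ y in Iic θ, B * (h y * p₁ y)) - ∫ y in Iic θ, HB * p₁ y :=
          integral_sub ((hhp₁.const_mul B).integrableOn) ((hp₁int.const_mul HB).integrableOn)
      _ = B * HA - HB * A := by rw [integral_const_mul, integral_const_mul]
  have houtT : ∫ y in Iic θ, p₁ y * (M2 - y * B) = A * M2 - B * M1 := by
    calc ∫ y in Iic θ, p₁ y * (M2 - y * B)
        = ∫ y in Iic θ, (M2 * p₁ y - B * (y * p₁ y)) :=
          setIntegral_congr_fun measurableSet_Iic (fun y _ => by ring)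
      _ = (∫ y in Iic θ, M2 * p₁ y) - ∫ y in Iic θ, B * (y * p₁ y) :=
          integral_sub ((hp₁int.const_mul M2).integrableOn) ((hμ₁int.const_mul B).integrableOn)
      _ = A * M2 - B * M1 := by rw [integral_const_mul, integral_const_mul]; ring
  have hmain : |HA - E1 * A| ≤ A * M2 - B * M1 := by
    have halg : HA - E1 * A = B * HA - HB * A := by linear_combination A * hH - HA * hAB
    rw [halg, ← hout, ← houtT]
    calc |∫ y in Iic θ, p₁ y * (h y * B - HB)| ≤ ∫ y in Iic θ, |p₁ y * (h y * B - HB)| :=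
          abs_setintegral_le
      _ ≤ ∫ y in Iic θ, p₁ y * (M2 - y * B) := by
          refine integral_mono_of_nonneg (Filter.Eventually.of_forall fun y => abs_nonneg _) ?_ ?_
          · refine ((hp₁int.const_mul M2).sub ((hμ₁int.const_mul B))).integrableOn.congr_fun
              (fun y _ => by simp; ring) measurableSet_Iic
          · refine ae_restrict_of_forall_mem measurableSet_Iic fun y hy => ?_
            calc |p₁ y * (h y * B - HB)| = p₁ y * |h y * B - HB| := by
                  rw [abs_mul, abs_of_nonneg (hp₁nn y)]
              _ ≤ p₁ y * (M2 - y * B) := mul_le_mul_of_nonneg_left (key y hy) (hp₁nn y)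
  -- T value
  have hText : ∫ y in Ioc a₁ θ, (μ₁ - y) * p₁ y = ∫ y in Iic θ, (μ₁ - y) * p₁ y := by
    have hTint : Integrable (fun y => (μ₁ - y) * p₁ y) := by
      refine ((hp₁int.const_mul μ₁).sub hμ₁int).congr (Filter.Eventually.of_forall fun y => ?_)
      simp; ring
    exact (setIntegral_Iic_eq_Ioc hθ.le (fun x hx => hzero' x hx _) hTint.integrableOn).symm
  have hTval : ∫ y in Iic θ, (μ₁ - y) * p₁ y = μ₁ * A - M1 := by
    calc ∫ y in Iic θ, (μ₁ - y) * p₁ y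
        = ∫ y in Iic θ, (μ₁ * p₁ y - y * p₁ y) :=
          setIntegral_congr_fun measurableSet_Iic (fun y _ => by ring)
      _ = (∫ y in Iic θ, μ₁ * p₁ y) - ∫ y in Iic θ, y * p₁ y :=
          integral_sub ((hp₁int.const_mul μ₁).integrableOn) hμ₁int.integrableOn
      _ = μ₁ * A - M1 := by rw [integral_const_mul]
  have hfinalg : A * M2 - B * M1 = μ₁ * A - M1 := by
    linear_combination A * hM - M1 * hAB
  rw [hg_ext, hgval, hText, hTval, ← hfinalg]
  exact hmain

lemma T_lower
    {a₁ b₁ μ₁ u v : ℝ} {p₁ : ℝ → ℝ}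
    (hp₁nn : ∀ x, 0 ≤ p₁ x)
    (hp₁zero : ∀ x ∉ Ioo a₁ b₁, p₁ x = 0)
    (hp₁int : Integrable p₁)
    (hp₁prob : ∫ x, p₁ x = 1)
    (hμ₁int : Integrable (fun x => x * p₁ x))
    (hμ₁ : ∫ x, x * p₁ x = μ₁)
    (hau : a₁ < u) {θ : ℝ} (huθ : u ≤ θ) (hθv : θ ≤ v) :
    (∫ y in Iic u, p₁ y) * (∫ z in Ioi v, (z - v) * p₁ z) ≤ ∫ y in Ioc a₁ θ, (μ₁ - y) * p₁ y := by
  set A := ∫ y in Iic θ, p₁ y with hA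
  set B := ∫ y in Ioi θ, p₁ y with hB
  set M1 := ∫ y in Iic θ, y * p₁ y with hM1
  set M2 := ∫ y in Ioi θ, y * p₁ y with hM2
  have split : ∀ {f : ℝ → ℝ}, Integrable f →
      (∫ y in Iic θ, f y) + (∫ y in Ioi θ, f y) = ∫ y, f y := by
    intro f hf
    have := integral_add_compl (measurableSet_Iic : MeasurableSet (Iic θ)) hf
    rwa [compl_Iic] at this
  have hAB : A + B = 1 := (split hp₁int).trans hp₁prob
  have hM : M1 + M2 = μ₁ := (split hμ₁int).trans hμ₁
  have hzero' : ∀ x ≤ a₁, ∀ r : ℝ, r * p₁ x = 0 := fun x hx r => by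
    rw [hp₁zero x (fun hmem => (not_lt.2 hx) hmem.1), mul_zero]
  have hTint : Integrable (fun y => (μ₁ - y) * p₁ y) := by
    refine ((hp₁int.const_mul μ₁).sub hμ₁int).congr (Filter.Eventually.of_forall fun y => ?_)
    simp; ring
  have hText : ∫ y in Ioc a₁ θ, (μ₁ - y) * p₁ y = ∫ y in Iic θ, (μ₁ - y) * p₁ y :=
    (setIntegral_Iic_eq_Ioc (lt_of_lt_of_le hau huθ).le (fun x hx => hzero' x hx _)
      hTint.integrableOn).symm
  have hTval : ∫ y in Iic θ, (μ₁ - y) * p₁ y = μ₁ * A - M1 := by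
    calc ∫ y in Iic θ, (μ₁ - y) * p₁ y
        = ∫ y in Iic θ, (μ₁ * p₁ y - y * p₁ y) :=
          setIntegral_congr_fun measurableSet_Iic (fun y _ => by ring)
      _ = (∫ y in Iic θ, μ₁ * p₁ y) - ∫ y in Iic θ, y * p₁ y :=
          integral_sub ((hp₁int.const_mul μ₁).integrableOn) hμ₁int.integrableOn
      _ = μ₁ * A - M1 := by rw [integral_const_mul]
  -- M2 - θ * B = ∫_{Ioi θ} (z - θ) p₁
  have hzθint : IntegrableOn (fun z => (z - θ) * p₁ z) (Ioi θ) := by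
    refine ((hμ₁int.sub (hp₁int.const_mul θ)).integrableOn).congr_fun (fun z _ => by simp; ring)
      measurableSet_Ioi
  have hM2B : ∫ z in Ioi θ, (z - θ) * p₁ z = M2 - θ * B := by
    calc ∫ z in Ioi θ, (z - θ) * p₁ z
        = ∫ z in Ioi θ, (z * p₁ z - θ * p₁ z) :=
          setIntegral_congr_fun measurableSet_Ioi (fun z _ => by ring)
      _ = (∫ z in Ioi θ, z * p₁ z) - ∫ z in Ioi θ, θ * p₁ z :=
          integral_sub hμ₁int.integrableOn ((hp₁int.const_mul θ).integrableOn)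
      _ = M2 - θ * B := by rw [integral_const_mul]
  -- θ * A - M1 = ∫_{Iic θ} (θ - y) p₁ ≥ 0
  have hθAM1 : 0 ≤ θ * A - M1 := by
    have : ∫ y in Iic θ, (θ - y) * p₁ y = θ * A - M1 := by
      calc ∫ y in Iic θ, (θ - y) * p₁ y
          = ∫ y in Iic θ, (θ * p₁ y - y * p₁ y) :=
            setIntegral_congr_fun measurableSet_Iic (fun y _ => by ring)
        _ = (∫ y in Iic θ, θ * p₁ y) - ∫ y in Iic θ, y * p₁ y :=
            integral_sub ((hp₁int.const_mul θ).integrableOn) hμ₁int.integrableOn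
        _ = θ * A - M1 := by rw [integral_const_mul]
    rw [← this]
    refine setIntegral_nonneg measurableSet_Iic fun y hy => ?_
    exact mul_nonneg (by simp at hy; linarith) (hp₁nn y)
  have hBnn : 0 ≤ B := setIntegral_nonneg measurableSet_Ioi fun z _ => hp₁nn z
  -- lower bounds for the two factors
  have hA_lb : (∫ y in Iic u, p₁ y) ≤ A := by
    refine setIntegral_mono_set hp₁int.integrableOn
      (Filter.Eventually.of_forall fun y => hp₁nn y)
      (HasSubset.Subset.eventuallyLE (Iic_subset_Iic.2 huθ))
  have hM2_lb : (∫ z in Ioi v, (z - v) * p₁ z) ≤ M2 - θ * B := by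
    rw [← hM2B]
    have hvint : IntegrableOn (fun z => (z - θ) * p₁ z) (Ioi v) :=
      hzθint.mono_set (Ioi_subset_Ioi hθv)
    have hvint2 : IntegrableOn (fun z => (z - v) * p₁ z) (Ioi v) := by
      refine ((hμ₁int.sub (hp₁int.const_mul v)).integrableOn).congr_fun (fun z _ => by simp; ring)
        measurableSet_Ioi
    calc (∫ z in Ioi v, (z - v) * p₁ z) ≤ ∫ z in Ioi v, (z - θ) * p₁ z := by
          refine setIntegral_mono_on hvint2 hvint measurableSet_Ioi fun z hz => ?_
          exact mul_le_mul_of_nonneg_right (by linarith) (hp₁nn z)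
      _ ≤ ∫ z in Ioi θ, (z - θ) * p₁ z := by
          refine setIntegral_mono_set hzθint ?_
            (HasSubset.Subset.eventuallyLE (Ioi_subset_Ioi hθv))
          refine ae_restrict_of_forall_mem measurableSet_Ioi fun z hz => ?_
          exact mul_nonneg (by simp at hz; linarith) (hp₁nn z)
  have hfact1nn : 0 ≤ ∫ y in Iic u, p₁ y := setIntegral_nonneg measurableSet_Iic fun y _ => hp₁nn y
  have hfact2nn : 0 ≤ ∫ z in Ioi v, (z - v) * p₁ z := by
    refine setIntegral_nonneg measurableSet_Ioi fun z hz => ?_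
    exact mul_nonneg (by simp at hz; linarith) (hp₁nn z)
  have hAnn : 0 ≤ A := setIntegral_nonneg measurableSet_Iic fun y _ => hp₁nn y
  have halg : μ₁ * A - M1 = A * (M2 - θ * B) + B * (θ * A - M1) := by
    linear_combination A * hM.symm + M1 * hAB
  rw [hText, hTval, halg]
  have h1 : (∫ y in Iic u, p₁ y) * (∫ z in Ioi v, (z - v) * p₁ z) ≤ A * (M2 - θ * B) :=
    mul_le_mul hA_lb hM2_lb hfact2nn hAnn
  nlinarith [mul_nonneg hBnn hθAM1]

lemma setIntegral_Ioo_pos {f : ℝ → ℝ} {α β : ℝ} (hab : α < β)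
    (hpos : ∀ x ∈ Ioo α β, 0 < f x) (hint : IntegrableOn f (Ioo α β)) :
    0 < ∫ x in Ioo α β, f x := by
  rw [setIntegral_pos_iff_support_of_nonneg_ae
    (ae_restrict_of_forall_mem measurableSet_Ioo fun x hx => (hpos x hx).le) hint]
  have hsub : Ioo α β ⊆ Function.support f ∩ Ioo α β := fun x hx => ⟨(hpos x hx).ne', hx⟩
  calc (0 : ℝ≥0∞) < volume (Ioo α β) := by
        rw [Real.volume_Ioo]; exact ENNReal.ofReal_pos.2 (by linarith)
    _ ≤ volume (Function.support f ∩ Ioo α β) := measure_mono hsub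

lemma ibp_local {u v : ℝ} {ρ ρ' w g : ℝ → ℝ}
    (huv : u ≤ v)
    (hρd : ∀ x ∈ Icc u v, HasDerivAt ρ (ρ' x) x)
    (hρ'int : IntegrableOn ρ' (Ioc u v))
    (hwint : Integrable w)
    (hρ'g_int : IntegrableOn (fun x => ρ' x * g x) (Ioc u v))
    (hgdiff : ∀ s t : ℝ, u ≤ s → s ≤ t → t ≤ v → g t - g s = ∫ y in Ioc s t, w y) :
    ∫ x in Ioc u v, (ρ' x * g x + ρ x * w x) = ρ v * g v - ρ u * g u := by
  have hρcont : ContinuousOn ρ (Icc u v) := fun x hx => (hρd x hx).continuousAt.continuousWithinAt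
  obtain ⟨C, hC⟩ := isCompact_Icc.exists_bound_of_continuousOn hρcont
  have hρw_int : IntegrableOn (fun x => ρ x * w x) (Ioc u v) := by
    refine Integrable.mono ((hwint.abs.const_mul C).integrableOn) ?_ ?_
    · exact ((hρcont.mono Ioc_subset_Icc_self).aestronglyMeasurable measurableSet_Ioc).mul
        hwint.aestronglyMeasurable.restrict
    · refine ae_restrict_of_forall_mem measurableSet_Ioc fun x hx => ?_
      have h1 : ‖ρ x * w x‖ = |ρ x| * |w x| := by rw [Real.norm_eq_abs, abs_mul]
      have h2 : |ρ x| ≤ C := by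
        have := hC x (Ioc_subset_Icc_self hx); rwa [Real.norm_eq_abs] at this
      rw [h1, Real.norm_eq_abs]
      have h3 : |ρ x| * |w x| ≤ C * |w x| := mul_le_mul_of_nonneg_right h2 (abs_nonneg _)
      exact le_trans h3 (le_abs_self _)
  -- FTC for ρ
  have hFTC : ∀ x ∈ Icc u v, ∫ s in Ioc u x, ρ' s = ρ x - ρ u := by
    intro x hx
    have hux : u ≤ x := hx.1
    have hiint : IntervalIntegrable ρ' volume u x := by
      rw [intervalIntegrable_iff_integrableOn_Ioc_of_le hux]
      exact hρ'int.mono_set (Ioc_subset_Ioc_right hx.2)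
    have := intervalIntegral.integral_eq_sub_of_hasDerivAt
      (f := ρ) (f' := ρ') (a := u) (b := x)
      (fun t ht => hρd t (by
        rw [uIcc_of_le hux] at ht
        exact ⟨ht.1, le_trans ht.2 hx.2⟩)) hiint
    rwa [intervalIntegral.integral_of_le hux] at this
  -- Fubini on the triangle
  set P := volume.restrict (Ioc u v) with hP
  set S : Set (ℝ × ℝ) := {q : ℝ × ℝ | q.2 ≤ q.1} with hS
  have hSmeas : MeasurableSet S := measurableSet_le measurable_snd measurable_fst
  have hprod : Integrable (fun z : ℝ × ℝ => w z.1 * ρ' z.2) (P.prod P) :=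
    Integrable.mul_prod hwint.integrableOn hρ'int
  have hind : Integrable (S.indicator (fun q : ℝ × ℝ => w q.1 * ρ' q.2)) (P.prod P) :=
    hprod.indicator hSmeas
  have hswap := integral_integral_swap
    (f := fun x y => S.indicator (fun q : ℝ × ℝ => w q.1 * ρ' q.2) (x, y)) hind
  -- compute LHS of hswap
  have hLHS : ∫ x, (∫ y, S.indicator (fun q : ℝ × ℝ => w q.1 * ρ' q.2) (x, y) ∂P) ∂P
      = ∫ x in Ioc u v, w x * (ρ x - ρ u) := by
    rw [hP]
    refine setIntegral_congr_fun measurableSet_Ioc fun x hx => ?_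
    have hfun : (fun y => S.indicator (fun q : ℝ × ℝ => w q.1 * ρ' q.2) (x, y))
        = (Iic x).indicator (fun y => w x * ρ' y) := by
      funext y
      by_cases hxy : y ≤ x <;> simp [hS, Set.indicator_apply, hxy]
    rw [hfun, integral_indicator measurableSet_Iic, Measure.restrict_restrict measurableSet_Iic]
    have hset : Iic x ∩ Ioc u v = Ioc u x := by
      ext t
      simp only [mem_inter_iff, mem_Iic, mem_Ioc]
      constructor
      · rintro ⟨h1, h2, h3⟩; exact ⟨h2, h1⟩
      · rintro ⟨h1, h2⟩; exact ⟨h2, h1, le_trans h2 hx.2⟩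
    rw [hset, integral_const_mul, hFTC x (Ioc_subset_Icc_self hx)]
  -- compute RHS of hswap
  have hRHS : ∫ y, (∫ x, S.indicator (fun q : ℝ × ℝ => w q.1 * ρ' q.2) (x, y) ∂P) ∂P
      = ∫ y in Ioc u v, ρ' y * (g v - g y) := by
    rw [hP]
    refine setIntegral_congr_fun measurableSet_Ioc fun y hy => ?_
    have hfun : (fun x => S.indicator (fun q : ℝ × ℝ => w q.1 * ρ' q.2) (x, y))
        = (Ici y).indicator (fun x => w x * ρ' y) := by
      funext x
      by_cases hxy : y ≤ x <;> simp [hS, Set.indicator_apply, hxy]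
    rw [hfun, integral_indicator measurableSet_Ici, Measure.restrict_restrict measurableSet_Ici]
    have hset : Ici y ∩ Ioc u v = Icc y v := by
      ext t
      simp only [mem_inter_iff, mem_Ici, mem_Ioc, mem_Icc]
      constructor
      · rintro ⟨h1, h2, h3⟩; exact ⟨h1, h3⟩
      · rintro ⟨h1, h2⟩; exact ⟨h1, lt_of_lt_of_le hy.1 h1, h2⟩
    rw [hset, integral_mul_const, integral_Icc_eq_integral_Ioc,
      ← hgdiff y v hy.1.le hy.2 le_rfl]
    ring
  have hkey : ∫ x in Ioc u v, w x * (ρ x - ρ u) = ∫ y in Ioc u v, ρ' y * (g v - g y) := by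
    rw [← hLHS, ← hRHS, hswap]
  -- expand both sides
  have hwIoc : IntegrableOn w (Ioc u v) := hwint.integrableOn
  have hL : ∫ x in Ioc u v, w x * (ρ x - ρ u)
      = (∫ x in Ioc u v, ρ x * w x) - ρ u * (g v - g u) := by
    calc ∫ x in Ioc u v, w x * (ρ x - ρ u)
        = ∫ x in Ioc u v, (ρ x * w x - ρ u * w x) :=
          setIntegral_congr_fun measurableSet_Ioc fun x _ => by ring
      _ = (∫ x in Ioc u v, ρ x * w x) - ∫ x in Ioc u v, ρ u * w x :=
          integral_sub hρw_int ((hwint.const_mul (ρ u)).integrableOn)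
      _ = (∫ x in Ioc u v, ρ x * w x) - ρ u * (g v - g u) := by
          rw [integral_const_mul, ← hgdiff u v le_rfl huv le_rfl]
  have hR : ∫ y in Ioc u v, ρ' y * (g v - g y)
      = (ρ v - ρ u) * g v - ∫ y in Ioc u v, ρ' y * g y := by
    calc ∫ y in Ioc u v, ρ' y * (g v - g y)
        = ∫ y in Ioc u v, (ρ' y * g v - ρ' y * g y) :=
          setIntegral_congr_fun measurableSet_Ioc fun y _ => by ring
      _ = (∫ y in Ioc u v, ρ' y * g v) - ∫ y in Ioc u v, ρ' y * g y :=
          integral_sub (hρ'int.mul_const (g v)) hρ'g_int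
      _ = (ρ v - ρ u) * g v - ∫ y in Ioc u v, ρ' y * g y := by
          rw [integral_mul_const, hFTC v ⟨huv, le_refl v⟩]
  rw [integral_add hρ'g_int hρw_int]
  rw [hL, hR] at hkey
  linarith

lemma key_identity
    {a₁ b₁ a₂ b₂ : ℝ} {p₁ p₂ ρ ρ' : ℝ → ℝ} {c μ₁ : ℝ} {h : ℝ → ℝ}
    (hnested : Ioo a₂ b₂ ⊆ Ioo a₁ b₁) (hI₂ : a₂ < b₂)
    (hp₁meas : Measurable p₁) (hp₂meas : Measurable p₂)
    (hp₁pos : ∀ θ ∈ Ioo a₁ b₁, 0 < p₁ θ)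
    (hp₁zero : ∀ θ ∉ Ioo a₁ b₁, p₁ θ = 0)
    (hp₂zero : ∀ θ ∉ Ioo a₂ b₂, p₂ θ = 0)
    (hp₁nn : ∀ x, 0 ≤ p₁ x) (hp₂nn : ∀ x, 0 ≤ p₂ x)
    (hp₁int : Integrable p₁) (hp₂int : Integrable p₂)
    (hp₁prob : ∫ θ, p₁ θ = 1) (hp₂prob : ∫ θ, p₂ θ = 1)
    (hμ₁int : Integrable (fun θ => θ * p₁ θ)) (hμ₁ : ∫ θ, θ * p₁ θ = μ₁)
    (hμ₂int : Integrable (fun θ => θ * p₂ θ))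
    (hc : 0 < c)
    (hρeq : ∀ θ ∈ Ioo a₂ b₂, p₂ θ = c * ρ θ * p₁ θ)
    (hρdiff : ∀ θ ∈ Ioo a₂ b₂, HasDerivAt ρ (ρ' θ) θ)
    (hh : LipschitzWith 1 h)
    (hρ'T_int : IntegrableOn
      (fun θ => ρ' θ * (∫ y in Ioc a₁ θ, (μ₁ - y) * p₁ y)) (Ioo a₂ b₂))
    (hD_int : IntegrableOn (fun θ =>
        ρ' θ * (∫ y in Ioc a₁ θ, (h y - ∫ z, h z * p₁ z) * p₁ y)
        + ρ θ * (h θ - ∫ z, h z * p₁ z) * p₁ θ) (Ioo a₂ b₂))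
    (hlima : Tendsto (fun θ => ρ θ * ∫ y in Ioc a₁ θ, (h y - ∫ z, h z * p₁ z) * p₁ y)
      (nhdsWithin a₂ (Ioi a₂)) (nhds 0))
    (hlimb : Tendsto (fun θ => ρ θ * ∫ y in Ioc a₁ θ, (h y - ∫ z, h z * p₁ z) * p₁ y)
      (nhdsWithin b₂ (Iio b₂)) (nhds 0)) :
    (∫ θ, h θ * p₂ θ) - (∫ θ, h θ * p₁ θ)
      = -(c * ∫ θ in Ioo a₂ b₂,
          ρ' θ * (∫ y in Ioc a₁ θ, (h y - ∫ z, h z * p₁ z) * p₁ y))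
    ∧ IntegrableOn
        (fun θ => ρ' θ * (∫ y in Ioc a₁ θ, (h y - ∫ z, h z * p₁ z) * p₁ y))
        (Ioo a₂ b₂) := by
  set E1 := ∫ z, h z * p₁ z with hE1def
  have hhp₁ : Integrable (fun x => h x * p₁ x) :=
    lip_mul_integrable hh hp₁meas hp₁nn hp₁int hμ₁int
  have hhp₂ : Integrable (fun x => h x * p₂ x) :=
    lip_mul_integrable hh hp₂meas hp₂nn hp₂int hμ₂int
  have hw : Integrable (fun y => (h y - E1) * p₁ y) := by
    refine (hhp₁.sub (hp₁int.const_mul E1)).congr (Filter.Eventually.of_forall fun y => ?_)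
    simp; ring
  -- difference of g at two points
  have hgdiff : ∀ s t : ℝ, a₁ < s → s ≤ t →
      (∫ y in Ioc a₁ t, (h y - E1) * p₁ y) - (∫ y in Ioc a₁ s, (h y - E1) * p₁ y)
        = ∫ y in Ioc s t, (h y - E1) * p₁ y := by
    intro s t hs hst
    rw [← Ioc_union_Ioc_eq_Ioc hs.le hst,
      setIntegral_union (Ioc_disjoint_Ioc_of_le le_rfl) measurableSet_Ioc
        hw.integrableOn hw.integrableOn]
    ring
  -- ρ w integrable on I₂
  have hρw_int : IntegrableOn (fun θ => ρ θ * ((h θ - E1) * p₁ θ)) (Ioo a₂ b₂) := by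
    have h0 : Integrable (fun θ => (1/c) * (h θ * p₂ θ - E1 * p₂ θ)) := by
      refine ((hhp₂.sub (hp₂int.const_mul E1)).const_mul (1/c)).congr
        (Filter.Eventually.of_forall fun θ => ?_)
      simp
    refine (h0.integrableOn).congr_fun (fun θ hθ => ?_) measurableSet_Ioo
    beta_reduce
    rw [hρeq θ hθ]
    field_simp
  have hρ'g_int : IntegrableOn
      (fun θ => ρ' θ * (∫ y in Ioc a₁ θ, (h y - E1) * p₁ y)) (Ioo a₂ b₂) := by
    refine (hD_int.sub hρw_int).congr (Filter.Eventually.of_forall fun θ => ?_)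
    simp only [Pi.sub_apply]
    ring
  -- measurability of ρ' on subsets of I₂
  have hρ'meas : ∀ s : Set ℝ, MeasurableSet s → s ⊆ Ioo a₂ b₂ →
      AEStronglyMeasurable ρ' (volume.restrict s) := by
    intro s hsm hssub
    refine ((measurable_deriv ρ).aestronglyMeasurable.restrict).congr ?_
    exact ae_restrict_of_forall_mem hsm fun x hx => (hρdiff x (hssub hx)).deriv
  -- local integrability of ρ'
  have hρ'int_loc : ∀ u v : ℝ, u ∈ Ioo a₂ b₂ → v ∈ Ioo a₂ b₂ → u ≤ v →
      IntegrableOn ρ' (Ioc u v) := by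
    intro u v hu hv huv
    have hu1 := hnested hu
    have hv1 := hnested hv
    have hIocsub : Ioc u v ⊆ Ioo a₂ b₂ := fun x hx => ⟨lt_of_lt_of_le hu.1 hx.1.le,
      lt_of_le_of_lt hx.2 hv.2⟩
    set ε := (∫ y in Iic u, p₁ y) * (∫ z in Ioi v, (z - v) * p₁ z) with hε
    have hf1 : 0 < ∫ y in Iic u, p₁ y := by
      have h1 : 0 < ∫ y in Ioo a₁ u, p₁ y :=
        setIntegral_Ioo_pos hu1.1
          (fun x hx => hp₁pos x ⟨hx.1, lt_trans hx.2 hu1.2⟩) hp₁int.integrableOn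
      have h2 : (∫ y in Ioo a₁ u, p₁ y) ≤ ∫ y in Iic u, p₁ y :=
        setIntegral_mono_set hp₁int.integrableOn
          (Filter.Eventually.of_forall fun y => hp₁nn y)
          (HasSubset.Subset.eventuallyLE (fun x hx => le_of_lt hx.2))
      linarith
    have hzvint : Integrable (fun z => (z - v) * p₁ z) := by
      refine (hμ₁int.sub (hp₁int.const_mul v)).congr (Filter.Eventually.of_forall fun z => ?_)
      simp; ring
    have hf2 : 0 < ∫ z in Ioi v, (z - v) * p₁ z := by
      have h1 : 0 < ∫ z in Ioo v b₁, (z - v) * p₁ z := by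
        refine setIntegral_Ioo_pos hv1.2 (fun x hx => ?_) hzvint.integrableOn
        exact mul_pos (by linarith [hx.1]) (hp₁pos x ⟨lt_trans hv1.1 hx.1, hx.2⟩)
      have h2 : (∫ z in Ioo v b₁, (z - v) * p₁ z) ≤ ∫ z in Ioi v, (z - v) * p₁ z := by
        refine setIntegral_mono_set hzvint.integrableOn ?_
          (HasSubset.Subset.eventuallyLE (fun x hx => hx.1))
        refine ae_restrict_of_forall_mem measurableSet_Ioi fun z hz => ?_
        exact mul_nonneg (by simp at hz; linarith) (hp₁nn z)
      linarith
    have hεpos : 0 < ε := mul_pos hf1 hf2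
    have hTlow : ∀ θ ∈ Ioc u v, ε ≤ ∫ y in Ioc a₁ θ, (μ₁ - y) * p₁ y := fun θ hθ =>
      T_lower hp₁nn hp₁zero hp₁int hp₁prob hμ₁int hμ₁ hu1.1 hθ.1.le hθ.2
    refine Integrable.mono (((hρ'T_int.mono_set hIocsub)).const_mul (1/ε))
      (hρ'meas _ measurableSet_Ioc hIocsub) ?_
    refine ae_restrict_of_forall_mem measurableSet_Ioc fun x hx => ?_
    have hTx := hTlow x hx
    have hTnn : 0 ≤ ∫ y in Ioc a₁ x, (μ₁ - y) * p₁ y := le_trans hεpos.le hTx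
    rw [Real.norm_eq_abs, Real.norm_eq_abs, abs_mul, abs_mul,
      abs_of_nonneg (le_of_lt (one_div_pos.2 hεpos)), abs_of_nonneg hTnn]
    have h5 : |ρ' x| * ε ≤ |ρ' x| * (∫ y in Ioc a₁ x, (μ₁ - y) * p₁ y) :=
      mul_le_mul_of_nonneg_left hTx (abs_nonneg _)
    have h6 : (1/ε) * (|ρ' x| * ε) = |ρ' x| := by field_simp
    have h7 := mul_le_mul_of_nonneg_left h5 (le_of_lt (one_div_pos.2 hεpos))
    rw [h6] at h7
    exact h7
  -- the global integration by parts
  have hDtilde_int : IntegrableOn (fun x =>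
      ρ' x * (∫ y in Ioc a₁ x, (h y - E1) * p₁ y) + ρ x * ((h x - E1) * p₁ x))
      (Ioo a₂ b₂) := by
    refine hD_int.congr_fun (fun θ _ => ?_) measurableSet_Ioo
    ring
  have hglobal : ∫ θ in Ioo a₂ b₂,
      (ρ' θ * (∫ y in Ioc a₁ θ, (h y - E1) * p₁ y) + ρ θ * ((h θ - E1) * p₁ θ)) = 0 := by
    set δ : ℕ → ℝ := fun n => (b₂ - a₂) / (n + 3) with hδ
    have hδpos : ∀ n, 0 < δ n := fun n => div_pos (by linarith) (by positivity)
    have hδsmall : ∀ n, 2 * δ n ≤ b₂ - a₂ := by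
      intro n
      have h1 : δ n ≤ (b₂ - a₂) / 3 := by
        rw [hδ]
        refine div_le_div_of_nonneg_left (by linarith) (by norm_num) ?_
        have : (0:ℝ) ≤ n := Nat.cast_nonneg n
        linarith
      have h2 : (b₂ - a₂)/3 > 0 := by linarith [hδpos 0]; 
      linarith
    have humem : ∀ n, a₂ + δ n ∈ Ioo a₂ b₂ := fun n =>
      ⟨by linarith [hδpos n], by linarith [hδsmall n, hδpos n]⟩
    have hvmem : ∀ n, b₂ - δ n ∈ Ioo a₂ b₂ := fun n =>
      ⟨by linarith [hδsmall n, hδpos n], by linarith [hδpos n]⟩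
    have huvle : ∀ n, a₂ + δ n ≤ b₂ - δ n := fun n => by linarith [hδsmall n]
    have hδmono : ∀ n m : ℕ, n ≤ m → δ m ≤ δ n := by
      intro n m hnm
      rw [hδ]
      refine div_le_div_of_nonneg_left (by linarith) (by positivity) ?_
      have : (n:ℝ) ≤ m := Nat.cast_le.2 hnm
      linarith
    have hsmono : Monotone (fun n : ℕ => Ioc (a₂ + δ n) (b₂ - δ n)) := by
      intro n m hnm
      exact Ioc_subset_Ioc (by linarith [hδmono n m hnm]) (by linarith [hδmono n m hnm])
    have hssub : ∀ n, Ioc (a₂ + δ n) (b₂ - δ n) ⊆ Ioo a₂ b₂ := fun n x hx =>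
      ⟨lt_of_lt_of_le (by linarith [hδpos n]) hx.1.le,
        lt_of_le_of_lt hx.2 (by linarith [hδpos n])⟩
    have hUnion : (⋃ n : ℕ, Ioc (a₂ + δ n) (b₂ - δ n)) = Ioo a₂ b₂ := by
      refine Subset.antisymm (iUnion_subset hssub) fun x hx => ?_
      have hm : 0 < min (x - a₂) (b₂ - x) := lt_min (by linarith [hx.1]) (by linarith [hx.2])
      obtain ⟨n, hn⟩ := exists_nat_gt ((b₂ - a₂) / min (x - a₂) (b₂ - x))
      refine mem_iUnion.2 ⟨n, ?_⟩
      have hδn : δ n < min (x - a₂) (b₂ - x) := by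
        rw [hδ, div_lt_iff₀ (by positivity)]
        rw [div_lt_iff₀ hm] at hn
        nlinarith [hm, Nat.cast_nonneg (α := ℝ) n]
      constructor
      · have := lt_min_iff.1 hδn
        linarith [this.1]
      · have := lt_min_iff.1 hδn
        linarith [this.2]
    -- IBP on each Ioc
    have hibp : ∀ n : ℕ, ∫ x in Ioc (a₂ + δ n) (b₂ - δ n),
        (ρ' x * (∫ y in Ioc a₁ x, (h y - E1) * p₁ y) + ρ x * ((h x - E1) * p₁ x))
        = ρ (b₂ - δ n) * (∫ y in Ioc a₁ (b₂ - δ n), (h y - E1) * p₁ y)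
          - ρ (a₂ + δ n) * (∫ y in Ioc a₁ (a₂ + δ n), (h y - E1) * p₁ y) := by
      intro n
      have hIccsub : Icc (a₂ + δ n) (b₂ - δ n) ⊆ Ioo a₂ b₂ := fun x hx =>
        ⟨lt_of_lt_of_le (humem n).1 hx.1, lt_of_le_of_lt hx.2 (hvmem n).2⟩
      refine ibp_local (huvle n) (fun x hx => hρdiff x (hIccsub hx))
        (hρ'int_loc _ _ (humem n) (hvmem n) (huvle n)) hw
        (hρ'g_int.mono_set ((Ioc_subset_Icc_self).trans hIccsub)) ?_
      intro s t hs hst ht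
      have hs1 : a₁ < s := (hnested (hIccsub ⟨hs, le_trans hst ht⟩)).1
      exact hgdiff s t hs1 hst
    have h1 : Tendsto (fun n : ℕ => ∫ x in Ioc (a₂ + δ n) (b₂ - δ n),
        (ρ' x * (∫ y in Ioc a₁ x, (h y - E1) * p₁ y) + ρ x * ((h x - E1) * p₁ x)))
        atTop (nhds (∫ x in Ioo a₂ b₂,
        (ρ' x * (∫ y in Ioc a₁ x, (h y - E1) * p₁ y) + ρ x * ((h x - E1) * p₁ x)))) := by
      have := tendsto_setIntegral_of_monotone (fun n : ℕ => measurableSet_Ioc) hsmono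
        (by rw [hUnion]; exact hDtilde_int)
      rwa [hUnion] at this
    have hδ0 : Tendsto δ atTop (nhds 0) := by
      rw [hδ]
      apply Tendsto.div_atTop (tendsto_const_nhds)
      exact tendsto_atTop_add_const_right atTop 3 tendsto_natCast_atTop_atTop
    have hua : Tendsto (fun n : ℕ => a₂ + δ n) atTop (nhdsWithin a₂ (Ioi a₂)) := by
      refine tendsto_nhdsWithin_of_tendsto_nhds_of_eventually_within _ ?_
        (Filter.Eventually.of_forall fun n => by simp [(hδpos n)])
      simpa using tendsto_const_nhds.add hδ0
    have hvb : Tendsto (fun n : ℕ => b₂ - δ n) atTop (nhdsWithin b₂ (Iio b₂)) := by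
      refine tendsto_nhdsWithin_of_tendsto_nhds_of_eventually_within _ ?_
        (Filter.Eventually.of_forall fun n => by simp [(hδpos n)])
      simpa using tendsto_const_nhds.sub hδ0
    have hcompa := hlima.comp hua
    have hcompb := hlimb.comp hvb
    have h2 : Tendsto (fun n : ℕ => ∫ x in Ioc (a₂ + δ n) (b₂ - δ n),
        (ρ' x * (∫ y in Ioc a₁ x, (h y - E1) * p₁ y) + ρ x * ((h x - E1) * p₁ x)))
        atTop (nhds 0) := by
      have h3 := hcompb.sub hcompa
      rw [sub_zero] at h3
      refine h3.congr fun n => ?_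
      exact (hibp n).symm
    exact tendsto_nhds_unique h1 h2
  -- assemble the identity
  have hsplit : ∫ θ in Ioo a₂ b₂,
      (ρ' θ * (∫ y in Ioc a₁ θ, (h y - E1) * p₁ y) + ρ θ * ((h θ - E1) * p₁ θ))
      = (∫ θ in Ioo a₂ b₂, ρ' θ * (∫ y in Ioc a₁ θ, (h y - E1) * p₁ y))
        + ∫ θ in Ioo a₂ b₂, ρ θ * ((h θ - E1) * p₁ θ) :=
    integral_add hρ'g_int hρw_int
  have hdiff : (∫ θ, h θ * p₂ θ) - (∫ θ, h θ * p₁ θ)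
      = c * ∫ θ in Ioo a₂ b₂, ρ θ * ((h θ - E1) * p₁ θ) := by
    have e1 : ∫ θ, h θ * p₂ θ = ∫ θ in Ioo a₂ b₂, h θ * p₂ θ :=
      (setIntegral_eq_integral_of_forall_compl_eq_zero
        (fun x hx => by rw [hp₂zero x hx, mul_zero])).symm
    have e2 : ∫ θ in Ioo a₂ b₂, p₂ θ = 1 := by
      rw [setIntegral_eq_integral_of_forall_compl_eq_zero (fun x hx => hp₂zero x hx)]
      exact hp₂prob
    have e3 : ∫ θ in Ioo a₂ b₂, (h θ - E1) * p₂ θ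
        = (∫ θ in Ioo a₂ b₂, h θ * p₂ θ) - E1 * ∫ θ in Ioo a₂ b₂, p₂ θ := by
      calc ∫ θ in Ioo a₂ b₂, (h θ - E1) * p₂ θ
          = ∫ θ in Ioo a₂ b₂, (h θ * p₂ θ - E1 * p₂ θ) :=
            setIntegral_congr_fun measurableSet_Ioo fun θ _ => by ring
        _ = (∫ θ in Ioo a₂ b₂, h θ * p₂ θ) - ∫ θ in Ioo a₂ b₂, E1 * p₂ θ :=
            integral_sub hhp₂.integrableOn ((hp₂int.const_mul E1).integrableOn)
        _ = _ := by rw [integral_const_mul]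
    have e4 : ∫ θ in Ioo a₂ b₂, (h θ - E1) * p₂ θ
        = c * ∫ θ in Ioo a₂ b₂, ρ θ * ((h θ - E1) * p₁ θ) := by
      rw [← integral_const_mul]
      refine setIntegral_congr_fun measurableSet_Ioo fun θ hθ => ?_
      rw [hρeq θ hθ]
      ring
    rw [e1, ← hE1def]
    rw [e2, mul_one] at e3
    linarith [e3.symm.trans e4]
  refine ⟨?_, hρ'g_int⟩
  rw [hdiff]
  have : ∫ θ in Ioo a₂ b₂, ρ θ * ((h θ - E1) * p₁ θ)
      = -(∫ θ in Ioo a₂ b₂, ρ' θ * (∫ y in Ioc a₁ θ, (h y - E1) * p₁ y)) := by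
    rw [hglobal] at hsplit
    linarith
  rw [this]
  ring

/-- Exact Wasserstein distance of Ghaderinezhad–Ley (2019): if moreover `ρ` is monotone
(increasing or decreasing) on `I₂`, then `d_W(P₁,P₂) = E[τ₁(Θ₁)|ρ'(Θ₁)|] / E[ρ(Θ₁)]`. -/
theorem wasserstein_exact_of_monotone
    (a₁ b₁ a₂ b₂ : ℝ) (p₁ p₂ ρ ρ' τ₁ : ℝ → ℝ) (c μ₁ μ₂ : ℝ)
    -- nested supports
    (hnested : Set.Ioo a₂ b₂ ⊆ Set.Ioo a₁ b₁)
    (hI₂ : a₂ < b₂)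
    -- `p₁` and `p₂` are probability densities supported on `I₁` and `I₂`
    (hp₁meas : Measurable p₁) (hp₂meas : Measurable p₂)
    (hp₁pos : ∀ θ ∈ Set.Ioo a₁ b₁, 0 < p₁ θ)
    (hp₁zero : ∀ θ ∉ Set.Ioo a₁ b₁, p₁ θ = 0)
    (hp₂pos : ∀ θ ∈ Set.Ioo a₂ b₂, 0 < p₂ θ)
    (hp₂zero : ∀ θ ∉ Set.Ioo a₂ b₂, p₂ θ = 0)
    (hp₁prob : ∫ θ, p₁ θ = 1) (hp₂prob : ∫ θ, p₂ θ = 1)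
    -- finite means `μ₁` and `μ₂`
    (hμ₁int : Integrable (fun θ => θ * p₁ θ)) (hμ₁ : ∫ θ, θ * p₁ θ = μ₁)
    (hμ₂int : Integrable (fun θ => θ * p₂ θ)) (hμ₂ : ∫ θ, θ * p₂ θ = μ₂)
    -- `p₂ = c ρ p₁` on `I₂` where `ρ` is differentiable on `I₂` with derivative `ρ'`
    (hc : 0 < c)
    (hρ : ∀ θ ∈ Set.Ioo a₂ b₂, p₂ θ = c * ρ θ * p₁ θ)
    (hρdiff : ∀ θ ∈ Set.Ioo a₂ b₂, HasDerivAt ρ (ρ' θ) θ)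
    -- `τ₁` is the Stein kernel of `p₁`
    (hτ₁ : ∀ θ ∈ Set.Ioo a₁ b₁,
      τ₁ θ = (∫ y in Set.Ioc a₁ θ, (μ₁ - y) * p₁ y) / p₁ θ)
    -- condition (i): `E[(Θ₁ - μ₁) ρ(Θ₁)] < ∞`
    (hi : IntegrableOn (fun θ => (θ - μ₁) * ρ θ * p₁ θ) (Set.Ioo a₂ b₂))
    -- condition (ii): integrability on `I₂` of the derivative of
    -- `θ ↦ ρ(θ) ∫_{a₁}^θ (h(y) - E[h(Θ₁)]) p₁(y) dy`
    (hii : ∀ h : ℝ → ℝ, LipschitzWith 1 h →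
      IntegrableOn (fun θ =>
          ρ' θ * (∫ y in Set.Ioc a₁ θ, (h y - ∫ z, h z * p₁ z) * p₁ y)
          + ρ θ * (h θ - ∫ z, h z * p₁ z) * p₁ θ)
        (Set.Ioo a₂ b₂))
    -- condition (iii): the boundary terms vanish
    (hiii : ∀ h : ℝ → ℝ, LipschitzWith 1 h →
      Tendsto (fun θ => ρ θ * ∫ y in Set.Ioc a₁ θ, (h y - ∫ z, h z * p₁ z) * p₁ y)
        (nhdsWithin a₂ (Set.Ioi a₂)) (nhds 0) ∧
      Tendsto (fun θ => ρ θ * ∫ y in Set.Ioc a₁ θ, (h y - ∫ z, h z * p₁ z) * p₁ y)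
        (nhdsWithin b₂ (Set.Iio b₂)) (nhds 0))
    -- `ρ` is monotone (increasing or decreasing) on `I₂`
    (hmono : MonotoneOn ρ (Set.Ioo a₂ b₂) ∨ AntitoneOn ρ (Set.Ioo a₂ b₂)) :
    -- conclusion: the Wasserstein-1 distance is attained exactly
    wassersteinDist p₁ p₂ =
      ENNReal.ofReal ((∫ θ in Set.Ioo a₂ b₂, τ₁ θ * |ρ' θ| * p₁ θ) /
        (∫ θ in Set.Ioo a₂ b₂, ρ θ * p₁ θ)) := by
  classical
  have hp₁nn : ∀ x, 0 ≤ p₁ x := fun x => by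
    by_cases hx : x ∈ Set.Ioo a₁ b₁
    · exact (hp₁pos x hx).le
    · rw [hp₁zero x hx]
  have hp₂nn : ∀ x, 0 ≤ p₂ x := fun x => by
    by_cases hx : x ∈ Set.Ioo a₂ b₂
    · exact (hp₂pos x hx).le
    · rw [hp₂zero x hx]
  have hp₁int : Integrable p₁ := by
    by_contra hcon
    rw [MeasureTheory.integral_undef hcon] at hp₁prob; norm_num at hp₁prob
  have hp₂int : Integrable p₂ := by
    by_contra hcon
    rw [MeasureTheory.integral_undef hcon] at hp₂prob; norm_num at hp₂prob
  have hTnn : ∀ θ ∈ Set.Ioo a₂ b₂, 0 ≤ ∫ y in Set.Ioc a₁ θ, (μ₁ - y) * p₁ y := by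
    intro θ hθ
    have h1 := T_lower hp₁nn hp₁zero hp₁int hp₁prob hμ₁int hμ₁ (hnested hθ).1
      (le_refl θ) (le_refl θ)
    have h2 : 0 ≤ (∫ y in Set.Iic θ, p₁ y) * (∫ z in Set.Ioi θ, (z - θ) * p₁ z) :=
      mul_nonneg (setIntegral_nonneg measurableSet_Iic fun y _ => hp₁nn y)
        (setIntegral_nonneg measurableSet_Ioi fun z hz =>
          mul_nonneg (by simp at hz; linarith) (hp₁nn z))
    linarith
  have hlipneg : LipschitzWith 1 (fun x : ℝ => -x) := by
    refine LipschitzWith.of_dist_le_mul fun x y => ?_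
    rw [Real.dist_eq, Real.dist_eq, NNReal.coe_one, one_mul]
    rw [show -x - -y = -(x - y) by ring, abs_neg]
  have hlipid : LipschitzWith 1 (fun x : ℝ => x) := by
    refine LipschitzWith.of_dist_le_mul fun x y => ?_
    rw [NNReal.coe_one, one_mul]
  have hEneg : ∫ z, -z * p₁ z = -μ₁ := by
    rw [show (fun z : ℝ => -z * p₁ z) = fun z => -(z * p₁ z) from funext fun z => by ring,
      integral_neg, hμ₁]
  have hgneg : ∀ θ : ℝ, (∫ y in Set.Ioc a₁ θ, (-y - ∫ z, -z * p₁ z) * p₁ y)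
      = ∫ y in Set.Ioc a₁ θ, (μ₁ - y) * p₁ y := by
    intro θ
    rw [hEneg]
    exact setIntegral_congr_fun measurableSet_Ioc fun y _ => by ring
  have hgid : ∀ θ : ℝ, (∫ y in Set.Ioc a₁ θ, (y - ∫ z, z * p₁ z) * p₁ y)
      = -(∫ y in Set.Ioc a₁ θ, (μ₁ - y) * p₁ y) := by
    intro θ
    rw [hμ₁, ← integral_neg]
    exact setIntegral_congr_fun measurableSet_Ioc fun y _ => by ring
  have hρ'T_int : IntegrableOn
      (fun θ => ρ' θ * (∫ y in Set.Ioc a₁ θ, (μ₁ - y) * p₁ y)) (Set.Ioo a₂ b₂) := by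
    have h2 : IntegrableOn (fun θ =>
        ρ' θ * (∫ y in Set.Ioc a₁ θ, (-y - ∫ z, -z * p₁ z) * p₁ y)
        + ρ θ * (-θ - ∫ z, -z * p₁ z) * p₁ θ) (Set.Ioo a₂ b₂) := hii (fun x => -x) hlipneg
    simp only [hEneg] at h2
    have hgneg2 : ∀ θ : ℝ, (∫ y in Set.Ioc a₁ θ, (-y - -μ₁) * p₁ y)
        = ∫ y in Set.Ioc a₁ θ, (μ₁ - y) * p₁ y := fun θ =>
      setIntegral_congr_fun measurableSet_Ioc fun y _ => by ring
    simp only [hgneg2] at h2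
    have hineg : IntegrableOn (fun θ => ρ θ * (-θ - -μ₁) * p₁ θ) (Set.Ioo a₂ b₂) := by
      refine hi.neg.congr (Filter.Eventually.of_forall fun θ => ?_)
      simp only [Pi.neg_apply]; ring
    refine (h2.sub hineg).congr (Filter.Eventually.of_forall fun θ => ?_)
    simp only [Pi.sub_apply]; ring
  -- denominator
  have hDn_int : IntegrableOn (fun θ => ρ θ * p₁ θ) (Set.Ioo a₂ b₂) := by
    have h0 : Integrable (fun θ => (1/c) * p₂ θ) := hp₂int.const_mul _
    refine h0.integrableOn.congr_fun (fun θ hθ => ?_) measurableSet_Ioo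
    beta_reduce
    rw [hρ θ hθ]; field_simp
  have hcD : c * (∫ θ in Set.Ioo a₂ b₂, ρ θ * p₁ θ) = 1 := by
    rw [← integral_const_mul]
    have he : ∫ θ in Set.Ioo a₂ b₂, c * (ρ θ * p₁ θ) = ∫ θ in Set.Ioo a₂ b₂, p₂ θ :=
      setIntegral_congr_fun measurableSet_Ioo fun θ hθ => by rw [hρ θ hθ]; ring
    rw [he, setIntegral_eq_integral_of_forall_compl_eq_zero (fun x hx => hp₂zero x hx), hp₂prob]
  have hDnpos : 0 < ∫ θ in Set.Ioo a₂ b₂, ρ θ * p₁ θ := by nlinarith [hcD, hc]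
  -- numerator
  have hN_int : IntegrableOn
      (fun θ => |ρ' θ| * (∫ y in Set.Ioc a₁ θ, (μ₁ - y) * p₁ y)) (Set.Ioo a₂ b₂) := by
    have habs : IntegrableOn
        (fun θ => |ρ' θ * (∫ y in Set.Ioc a₁ θ, (μ₁ - y) * p₁ y)|) (Set.Ioo a₂ b₂) :=
      hρ'T_int.abs
    refine habs.congr_fun (fun θ hθ => ?_) measurableSet_Ioo
    beta_reduce
    rw [abs_mul, abs_of_nonneg (hTnn θ hθ)]
  set N := ∫ θ in Set.Ioo a₂ b₂, |ρ' θ| * (∫ y in Set.Ioc a₁ θ, (μ₁ - y) * p₁ y) with hN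
  -- general bound
  have hbound : ∀ h : ℝ → ℝ, LipschitzWith 1 h →
      |(∫ θ, h θ * p₁ θ) - (∫ θ, h θ * p₂ θ)| ≤ c * N := by
    intro h hh
    obtain ⟨hident, hint⟩ := key_identity hnested hI₂ hp₁meas hp₂meas hp₁pos hp₁zero hp₂zero
      hp₁nn hp₂nn hp₁int hp₂int hp₁prob hp₂prob hμ₁int hμ₁ hμ₂int hc hρ hρdiff hh hρ'T_int
      (hii h hh) (hiii h hh).1 (hiii h hh).2
    rw [abs_sub_comm, hident, abs_neg, abs_mul, abs_of_nonneg hc.le]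
    refine mul_le_mul_of_nonneg_left ?_ hc.le
    calc |∫ θ in Set.Ioo a₂ b₂,
          ρ' θ * (∫ y in Set.Ioc a₁ θ, (h y - ∫ z, h z * p₁ z) * p₁ y)|
        ≤ ∫ θ in Set.Ioo a₂ b₂,
          |ρ' θ * (∫ y in Set.Ioc a₁ θ, (h y - ∫ z, h z * p₁ z) * p₁ y)| :=
          abs_setintegral_le
      _ ≤ N := by
          refine integral_mono_of_nonneg (Filter.Eventually.of_forall fun θ => abs_nonneg _)
            hN_int ?_
          refine ae_restrict_of_forall_mem measurableSet_Ioo fun θ hθ => ?_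
          show |ρ' θ * (∫ y in Set.Ioc a₁ θ, (h y - ∫ z, h z * p₁ z) * p₁ y)|
            ≤ |ρ' θ| * (∫ y in Set.Ioc a₁ θ, (μ₁ - y) * p₁ y)
          rw [abs_mul]
          refine mul_le_mul_of_nonneg_left ?_ (abs_nonneg _)
          exact g_bound hp₁nn hp₁zero hp₁int hp₁prob hμ₁int hμ₁
            (lip_mul_integrable hh hp₁meas hp₁nn hp₁int hμ₁int) hh (hnested hθ).1
  -- sign of ρ'
  have hsign : (∀ θ ∈ Set.Ioo a₂ b₂, 0 ≤ ρ' θ) ∨ (∀ θ ∈ Set.Ioo a₂ b₂, ρ' θ ≤ 0) := by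
    rcases hmono with hm | hm
    · left
      intro θ hθ
      have h2 : Tendsto (slope ρ θ) (nhdsWithin θ (Set.Ioi θ)) (nhds (ρ' θ)) :=
        (hasDerivAt_iff_tendsto_slope.1 (hρdiff θ hθ)).mono_left
          (nhdsWithin_mono θ (fun x hx => ne_of_gt hx))
      refine ge_of_tendsto h2 ?_
      filter_upwards [Ioo_mem_nhdsGT_of_mem ⟨le_refl θ, hθ.2⟩] with y hy
      have hyI : y ∈ Set.Ioo a₂ b₂ := ⟨lt_trans hθ.1 hy.1, hy.2⟩
      rw [slope_def_field]
      exact div_nonneg (sub_nonneg.2 (hm hθ hyI hy.1.le)) (by linarith [hy.1])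
    · right
      intro θ hθ
      have h2 : Tendsto (slope ρ θ) (nhdsWithin θ (Set.Ioi θ)) (nhds (ρ' θ)) :=
        (hasDerivAt_iff_tendsto_slope.1 (hρdiff θ hθ)).mono_left
          (nhdsWithin_mono θ (fun x hx => ne_of_gt hx))
      refine le_of_tendsto h2 ?_
      filter_upwards [Ioo_mem_nhdsGT_of_mem ⟨le_refl θ, hθ.2⟩] with y hy
      have hyI : y ∈ Set.Ioo a₂ b₂ := ⟨lt_trans hθ.1 hy.1, hy.2⟩
      rw [slope_def_field]
      exact div_nonpos_of_nonpos_of_nonneg (sub_nonpos.2 (hm hθ hyI hy.1.le))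
        (by linarith [hy.1])
  -- existence of the optimal test function
  have hexists : ∃ h₀ : ℝ → ℝ, ∃ _ : LipschitzWith 1 h₀,
      |(∫ θ, h₀ θ * p₁ θ) - (∫ θ, h₀ θ * p₂ θ)| = c * N := by
    rcases hsign with hs | hs
    · refine ⟨fun x => -x, hlipneg, ?_⟩
      obtain ⟨hident, _⟩ := key_identity hnested hI₂ hp₁meas hp₂meas hp₁pos hp₁zero hp₂zero
        hp₁nn hp₂nn hp₁int hp₂int hp₁prob hp₂prob hμ₁int hμ₁ hμ₂int hc hρ hρdiff hlipneg
        hρ'T_int (hii _ hlipneg) (hiii _ hlipneg).1 (hiii _ hlipneg).2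
      have hid0 := hident
      simp only [hgneg] at hid0
      have hNeq : ∫ θ in Set.Ioo a₂ b₂,
          ρ' θ * (∫ y in Set.Ioc a₁ θ, (μ₁ - y) * p₁ y) = N := by
        rw [hN]
        refine setIntegral_congr_fun measurableSet_Ioo fun θ hθ => ?_
        rw [abs_of_nonneg (hs θ hθ)]
      rw [hNeq] at hid0
      have hNnn : 0 ≤ N := setIntegral_nonneg measurableSet_Ioo fun θ hθ =>
        mul_nonneg (abs_nonneg _) (hTnn θ hθ)
      have hgoal : |(∫ θ, -θ * p₁ θ) - (∫ θ, -θ * p₂ θ)| = c * N := by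
        rw [abs_sub_comm, hid0, abs_neg, abs_of_nonneg (mul_nonneg hc.le hNnn)]
      exact hgoal
    · refine ⟨fun x => x, hlipid, ?_⟩
      obtain ⟨hident, _⟩ := key_identity hnested hI₂ hp₁meas hp₂meas hp₁pos hp₁zero hp₂zero
        hp₁nn hp₂nn hp₁int hp₂int hp₁prob hp₂prob hμ₁int hμ₁ hμ₂int hc hρ hρdiff hlipid
        hρ'T_int (hii _ hlipid) (hiii _ hlipid).1 (hiii _ hlipid).2
      have hid0 := hident
      simp only [hgid] at hid0
      have hflip : ∫ θ in Set.Ioo a₂ b₂,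
          ρ' θ * -(∫ y in Set.Ioc a₁ θ, (μ₁ - y) * p₁ y)
          = -∫ θ in Set.Ioo a₂ b₂, ρ' θ * (∫ y in Set.Ioc a₁ θ, (μ₁ - y) * p₁ y) := by
        rw [← integral_neg]
        exact setIntegral_congr_fun measurableSet_Ioo fun θ _ => by ring
      rw [hflip] at hid0
      have hNeq : ∫ θ in Set.Ioo a₂ b₂,
          ρ' θ * (∫ y in Set.Ioc a₁ θ, (μ₁ - y) * p₁ y) = -N := by
        rw [hN, ← integral_neg]
        refine setIntegral_congr_fun measurableSet_Ioo fun θ hθ => ?_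
        rw [abs_of_nonpos (hs θ hθ)]
        ring
      rw [hNeq] at hid0
      have hNnn : 0 ≤ N := setIntegral_nonneg measurableSet_Ioo fun θ hθ =>
        mul_nonneg (abs_nonneg _) (hTnn θ hθ)
      have hid1 : (∫ θ, θ * p₂ θ) - (∫ θ, θ * p₁ θ) = -(c * N) := by
        rw [hid0]; ring
      have hgoal : |(∫ θ, θ * p₁ θ) - (∫ θ, θ * p₂ θ)| = c * N := by
        rw [abs_sub_comm, hid1, abs_neg, abs_of_nonneg (mul_nonneg hc.le hNnn)]
      exact hgoal
  -- final value computation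
  have hval : (∫ θ in Set.Ioo a₂ b₂, τ₁ θ * |ρ' θ| * p₁ θ) = N := by
    rw [hN]
    refine setIntegral_congr_fun measurableSet_Ioo fun θ hθ => ?_
    rw [hτ₁ θ (hnested hθ)]
    have hp := hp₁pos θ (hnested hθ)
    field_simp
  have hfrac : ((∫ θ in Set.Ioo a₂ b₂, τ₁ θ * |ρ' θ| * p₁ θ) /
      (∫ θ in Set.Ioo a₂ b₂, ρ θ * p₁ θ)) = c * N := by
    rw [hval]
    rw [show (∫ θ in Set.Ioo a₂ b₂, ρ θ * p₁ θ) = 1 / c by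
      field_simp at hcD ⊢; linarith]
    field_simp
  rw [hfrac]
  rw [wassersteinDist]
  apply le_antisymm
  · exact iSup_le fun h => iSup_le fun hh => ENNReal.ofReal_le_ofReal (hbound h hh)
  · obtain ⟨h₀, hl₀, heq₀⟩ := hexists
    calc ENNReal.ofReal (c * N)
        = ENNReal.ofReal |(∫ θ, h₀ θ * p₁ θ) - (∫ θ, h₀ θ * p₂ θ)| := by rw [heq₀]
      _ ≤ _ := le_iSup₂ (f := fun (h : ℝ → ℝ) (_ : LipschitzWith 1 h) =>
          ENNReal.ofReal |(∫ θ, h θ * p₁ θ) - (∫ θ, h θ * p₂ θ)|) h₀ hl₀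
end
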